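/- arXiv:2201.11013 — 7 statements merged into one kernel-verified Lean document; each statement's English description precedes it below -/
import Mathlib

section
/- Dirichlet integral: Let K ≥ 2 be an integer and α ∈ ℝ^K with α_i > 0 for all i. Then ∫_{S_K} (∏_{i=1}^K y_i^{α_i − 1}) d^{K−1}y = (∏_{i=1}^K Γ(α_i)) / Γ(α_+). -/
open MeasureTheory Real



lemma beta_cast {a b t : ℝ} (h0 : 0 ≤ t) (h1 : t ≤ 1) :
    ((t : ℂ) ^ ((a : ℂ) - 1) * (1 - (t : ℂ)) ^ ((b : ℂ) - 1)) =
      ((t ^ (a - 1) * (1 - t) ^ (b - 1) : ℝ) : ℂ) := by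
  rw [Complex.ofReal_mul, Complex.ofReal_cpow h0, Complex.ofReal_cpow (by linarith)]
  push_cast
  ring

lemma beta_integrableOn {a b : ℝ} (ha : 0 < a) (hb : 0 < b) :
    IntegrableOn (fun t : ℝ => t ^ (a - 1) * (1 - t) ^ (b - 1)) (Set.Ioo 0 1) := by
  have h := (Complex.betaIntegral_convergent (u := (a : ℂ)) (v := (b : ℂ))
    (by simpa using ha) (by simpa using hb)).1
  have h2 := (h.mono_set Set.Ioo_subset_Ioc_self).re
  refine MeasureTheory.IntegrableOn.congr_fun h2 ?_ measurableSet_Ioo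
  intro t ht
  simp only [Function.comp]
  rw [beta_cast ht.1.le ht.2.le]
  simp

lemma beta_real {a b : ℝ} (ha : 0 < a) (hb : 0 < b) :
    ∫ t in Set.Ioo (0:ℝ) 1, t ^ (a - 1) * (1 - t) ^ (b - 1) =
      Gamma a * Gamma b / Gamma (a + b) := by
  have key := Complex.Gamma_mul_Gamma_eq_betaIntegral (s := (a : ℂ)) (t := (b : ℂ))
    (by simpa using ha) (by simpa using hb)
  have hbeta : Complex.betaIntegral a b =
      ((∫ t in Set.Ioo (0:ℝ) 1, t ^ (a - 1) * (1 - t) ^ (b - 1) : ℝ) : ℂ) := by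
    rw [Complex.betaIntegral, ← integral_Ioc_eq_integral_Ioo,
      ← intervalIntegral.integral_of_le (by norm_num : (0:ℝ) ≤ 1),
      ← intervalIntegral.integral_ofReal]
    refine intervalIntegral.integral_congr fun t ht => ?_
    rw [Set.uIcc_of_le (by norm_num : (0:ℝ) ≤ 1)] at ht
    exact beta_cast ht.1 ht.2
  rw [hbeta, ← Complex.ofReal_add, Complex.Gamma_ofReal, Complex.Gamma_ofReal,
    Complex.Gamma_ofReal, ← Complex.ofReal_mul, ← Complex.ofReal_mul] at key
  have h2 := Complex.ofReal_injective key
  have hG : Gamma (a + b) ≠ 0 := (Gamma_pos_of_pos (by linarith)).ne'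
  field_simp
  linarith [h2]

lemma beta_lintegral {a b : ℝ} (ha : 0 < a) (hb : 0 < b) :
    ∫⁻ t in Set.Ioo (0:ℝ) 1, ENNReal.ofReal (t ^ (a - 1) * (1 - t) ^ (b - 1)) =
      ENNReal.ofReal (Gamma a * Gamma b / Gamma (a + b)) := by
  rw [← beta_real ha hb, ← ofReal_integral_eq_lintegral_ofReal (beta_integrableOn ha hb)]
  filter_upwards [ae_restrict_mem measurableSet_Ioo] with t ht
  exact mul_nonneg (rpow_nonneg ht.1.le _) (rpow_nonneg (by linarith [ht.2]) _)

section aux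

def dSet (n : ℕ) : Set (Fin n → ℝ) := {y | (∀ i, 0 < y i) ∧ ∑ i, y i < 1}

lemma measurableSet_dSet (n : ℕ) : MeasurableSet (dSet n) := by
  have h : dSet n = (⋂ i, {y : Fin n → ℝ | 0 < y i}) ∩ {y : Fin n → ℝ | ∑ i, y i < 1} := by
    ext y; simp [dSet, Set.mem_iInter]
  rw [h]
  exact (MeasurableSet.iInter fun i =>
      measurableSet_lt measurable_const (measurable_pi_apply i)).inter
    (measurableSet_lt (Finset.measurable_sum _ fun i _ => measurable_pi_apply i) measurable_const)

noncomputable def dF (n : ℕ) (α : Fin (n + 1) → ℝ) (y : Fin n → ℝ) : ℝ :=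
  (∏ i : Fin n, y i ^ (α i.castSucc - 1)) * (1 - ∑ j, y j) ^ (α (Fin.last n) - 1)

lemma measurable_dF (n : ℕ) (α : Fin (n + 1) → ℝ) : Measurable (dF n α) := by
  unfold dF
  measurability
end aux

lemma measurable_rpow_fun (a : ℝ) : Measurable fun t : ℝ => t ^ a := by measurability

lemma measurable_beta_fun (a b : ℝ) :
    Measurable fun t : ℝ => ENNReal.ofReal (t ^ a * (1 - t) ^ b) :=
  ((measurable_rpow_fun a).mul
    ((measurable_rpow_fun b).comp (measurable_const.sub measurable_id))).ennreal_ofReal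

lemma smul_lintegral (n : ℕ) {c : ℝ} (hc : 0 < c) (g : (Fin n → ℝ) → ENNReal)
    (hg : Measurable g) :
    ∫⁻ z, g z = ENNReal.ofReal (c ^ n) * ∫⁻ w, g (c • w) := by
  have h := Measure.map_addHaar_smul (μ := (volume : Measure (Fin n → ℝ))) (r := c) hc.ne'
  rw [Module.finrank_fin_fun] at h
  have h2 : ∫⁻ w, g (c • w) = ENNReal.ofReal (abs ((c ^ n)⁻¹)) * ∫⁻ z, g z := by
    rw [← lintegral_map hg (measurable_const_smul c), h, lintegral_smul_measure, smul_eq_mul]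
  rw [h2, ← mul_assoc, ← ENNReal.ofReal_mul (by positivity), abs_of_pos (by positivity),
    mul_inv_cancel₀ (by positivity), ENNReal.ofReal_one, one_mul]

-- pointwise lemma and slice measurability, to insert before dirichlet_aux
lemma measurableSet_slice (n : ℕ) (b : ℝ) :
    MeasurableSet {y : Fin n → ℝ | (∀ i, 0 < y i) ∧ ∑ i, y i < b} := by
  have h : {y : Fin n → ℝ | (∀ i, 0 < y i) ∧ ∑ i, y i < b} =
      (⋂ i, {y : Fin n → ℝ | 0 < y i}) ∩ {y : Fin n → ℝ | ∑ i, y i < b} := by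
    ext y; simp [Set.mem_iInter]
  rw [h]
  exact (MeasurableSet.iInter fun i =>
      measurableSet_lt measurable_const (measurable_pi_apply i)).inter
    (measurableSet_lt (Finset.measurable_sum _ fun i _ => measurable_pi_apply i) measurable_const)

lemma dF_cons (n : ℕ) (α : Fin (n + 2) → ℝ) {t c : ℝ} (hc : 0 < c) (hct : c = 1 - t)
    {w : Fin n → ℝ} (hw : w ∈ dSet n) :
    dF (n + 1) α (Fin.cons t (c • w)) =
      (t ^ (α 0 - 1) * c ^ ((∑ j : Fin (n + 1), α j.succ) - 1 - n)) *
        dF n (fun j => α j.succ) w := by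
  obtain ⟨hw1, hw2⟩ := hw
  have h1mw : (0:ℝ) ≤ 1 - ∑ i, w i := by linarith
  have hexp : (∑ j : Fin (n + 1), α j.succ) - 1 - n =
      (∑ i : Fin n, (α i.succ.castSucc - 1)) + (α (Fin.last (n + 1)) - 1) := by
    have h : (∑ j : Fin (n + 1), α j.succ) =
        (∑ i : Fin n, α i.succ.castSucc) + α (Fin.last (n + 1)) := by
      rw [Fin.sum_univ_castSucc (f := fun j : Fin (n + 1) => α j.succ)]
      simp [Fin.succ_castSucc, Fin.succ_last, -Fin.castSucc_succ]
    rw [h, Finset.sum_sub_distrib]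
    simp [Finset.card_univ]
    ring
  unfold dF
  rw [Fin.prod_univ_succ]
  simp only [Fin.cons_zero, Fin.cons_succ, Fin.sum_cons, Pi.smul_apply, smul_eq_mul,
    Fin.castSucc_zero]
  rw [← Finset.mul_sum]
  have hrw : ∀ i : Fin n, (c * w i) ^ (α i.succ.castSucc - 1) =
      c ^ (α i.succ.castSucc - 1) * w i ^ (α i.succ.castSucc - 1) :=
    fun i => Real.mul_rpow hc.le (hw1 i).le
  simp only [hrw]
  rw [Finset.prod_mul_distrib, ← Real.rpow_sum_of_pos hc]
  have h2 : 1 - (t + c * ∑ i, w i) = c * (1 - ∑ i, w i) := by rw [hct]; ring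
  rw [h2, Real.mul_rpow hc.le h1mw, hexp, Real.rpow_add hc]
  simp only [Fin.succ_castSucc, Fin.succ_last]
  ring

lemma dirichlet_aux : ∀ n : ℕ, 1 ≤ n → ∀ α : Fin (n + 1) → ℝ, (∀ i, 0 < α i) →
    ∫⁻ y in dSet n, ENNReal.ofReal (dF n α y) =
      ENNReal.ofReal ((∏ i, Gamma (α i)) / Gamma (∑ i, α i)) := by
  intro n
  induction n with
  | zero => omega
  | succ n ih =>
    intro _ α hα
    rcases Nat.eq_zero_or_pos n with rfl | hn
    · -- base case `n = 1`
      have e := (volume_preserving_funUnique (Fin 1) ℝ).symm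
      show ∫⁻ y in dSet 1, ENNReal.ofReal (dF 1 α y) = _
      refine Eq.trans (e.setLIntegral_comp_preimage_emb (MeasurableEquiv.measurableEmbedding _) (fun y => ENNReal.ofReal (dF 1 α y)) (dSet 1)).symm ?_
      have hset : (MeasurableEquiv.funUnique (Fin 1) ℝ).symm ⁻¹' dSet 1 = Set.Ioo 0 1 := by
        ext x
        simp [dSet, MeasurableEquiv.funUnique, Equiv.funUnique, Fin.sum_univ_one, Fin.forall_fin_one]
      have hfun : ∀ x : ℝ, dF 1 α ((MeasurableEquiv.funUnique (Fin 1) ℝ).symm x) =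
          x ^ (α 0 - 1) * (1 - x) ^ (α 1 - 1) := by
        intro x
        simp [dF, MeasurableEquiv.funUnique, Equiv.funUnique, Fin.sum_univ_one,
          Fin.prod_univ_one, Fin.last]
      simp only [hset, hfun]
      rw [beta_lintegral (hα 0) (hα 1), Fin.prod_univ_two, Fin.sum_univ_two]
    ·
      -- inductive step
      haveI : Nonempty (Fin n) := ⟨⟨0, hn⟩⟩
      have hβ : ∀ j : Fin (n + 1), 0 < α j.succ := fun j => hα _
      set s : ℝ := ∑ j : Fin (n + 1), α j.succ with hs
      have hs_pos : 0 < s := Finset.sum_pos (fun j _ => hβ j) Finset.univ_nonempty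
      have e := (volume_preserving_piFinSuccAbove (fun _ : Fin (n + 1) => ℝ) 0).symm
      rw [← e.setLIntegral_comp_preimage_emb (MeasurableEquiv.measurableEmbedding _) _
        (dSet (n + 1))]
      have hE : ∀ p : ℝ × (Fin n → ℝ),
          (MeasurableEquiv.piFinSuccAbove (fun _ : Fin (n + 1) => ℝ) 0).symm p =
            Fin.cons p.1 p.2 := by
        intro p
        rw [MeasurableEquiv.piFinSuccAbove_symm_apply]
        exact Fin.insertNth_zero' _ _
      set T : Set (ℝ × (Fin n → ℝ)) :=
        {p | (0 < p.1 ∧ ∀ i, 0 < p.2 i) ∧ p.1 + ∑ i, p.2 i < 1} with hT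
      have hpre : (MeasurableEquiv.piFinSuccAbove (fun _ : Fin (n + 1) => ℝ) 0).symm ⁻¹'
          dSet (n + 1) = T := by
        ext p
        simp only [Set.mem_preimage, hE, dSet, Set.mem_setOf_eq, hT, Fin.forall_fin_succ,
          Fin.cons_zero, Fin.cons_succ, Fin.sum_cons]
      have hTm : MeasurableSet T := by
        rw [← hpre]
        exact (measurableSet_dSet (n + 1)).preimage (MeasurableEquiv.measurable _)
      simp only [hpre, hE]
      have hmeasF : Measurable fun p : ℝ × (Fin n → ℝ) => dF (n + 1) α (Fin.cons p.1 p.2) := by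
        have h := (measurable_dF (n + 1) α).comp
          (MeasurableEquiv.piFinSuccAbove (fun _ : Fin (n + 1) => ℝ) 0).symm.measurable
        simpa only [Function.comp_def, hE] using h
      rw [← lintegral_indicator hTm _, Measure.volume_eq_prod,
        lintegral_prod _ (hmeasF.ennreal_ofReal.indicator hTm).aemeasurable]
      have inner : ∀ t : ℝ,
          (∫⁻ z, T.indicator (fun p : ℝ × (Fin n → ℝ) =>
              ENNReal.ofReal (dF (n + 1) α (Fin.cons p.1 p.2))) (t, z)) =
            (Set.Ioo (0:ℝ) 1).indicator (fun t =>
              ENNReal.ofReal (t ^ (α 0 - 1) * (1 - t) ^ (s - 1)) *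
                ENNReal.ofReal ((∏ j : Fin (n + 1), Gamma (α j.succ)) / Gamma s)) t := by
        intro t
        by_cases ht : t ∈ Set.Ioo (0:ℝ) 1
        · obtain ⟨ht0, ht1⟩ := ht
          set c : ℝ := 1 - t with hcdef
          have hc : 0 < c := by simp only [hcdef]; linarith
          set A : Set (Fin n → ℝ) := {z | (∀ i, 0 < z i) ∧ ∑ i, z i < c} with hA
          have hAm : MeasurableSet A := measurableSet_slice n c
          have hmem : ∀ z : Fin n → ℝ, ((t, z) ∈ T) ↔ z ∈ A := by
            intro z
            simp only [hT, hA, Set.mem_setOf_eq, hcdef]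
            constructor
            · rintro ⟨⟨-, h2⟩, h3⟩; exact ⟨h2, by linarith⟩
            · rintro ⟨h2, h3⟩; exact ⟨⟨ht0, h2⟩, by linarith⟩
          have hg : Measurable fun z : Fin n → ℝ =>
              ENNReal.ofReal (dF (n + 1) α (Fin.cons t z)) :=
            (hmeasF.comp measurable_prodMk_left).ennreal_ofReal
          have step1 : (∫⁻ z, T.indicator (fun p : ℝ × (Fin n → ℝ) =>
              ENNReal.ofReal (dF (n + 1) α (Fin.cons p.1 p.2))) (t, z)) =
              ∫⁻ z, A.indicator (fun z =>
                ENNReal.ofReal (dF (n + 1) α (Fin.cons t z))) z := by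
            refine lintegral_congr fun z => ?_
            simp only [Set.indicator_apply, hmem]
          rw [step1, smul_lintegral n hc _ (hg.indicator hAm)]
          have hpre2 : (fun w : Fin n → ℝ => c • w) ⁻¹' A = dSet n := by
            ext w
            simp only [Set.mem_preimage, hA, dSet, Set.mem_setOf_eq, Pi.smul_apply,
              smul_eq_mul, ← Finset.mul_sum]
            constructor
            · rintro ⟨h1, h2⟩
              refine ⟨fun i => ?_, ?_⟩
              · nlinarith [h1 i]
              · nlinarith
            · rintro ⟨h1, h2⟩
              exact ⟨fun i => by nlinarith [h1 i], by nlinarith⟩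
          have hcomp : ∀ w : Fin n → ℝ, A.indicator (fun z =>
              ENNReal.ofReal (dF (n + 1) α (Fin.cons t z))) (c • w) =
              (dSet n).indicator (fun w =>
                ENNReal.ofReal (dF (n + 1) α (Fin.cons t (c • w)))) w := by
            intro w
            rw [← hpre2]
            by_cases hwa : c • w ∈ A
            · rw [Set.indicator_of_mem hwa,
                Set.indicator_of_mem (by simpa [Set.mem_preimage] using hwa)]
            · rw [Set.indicator_of_notMem hwa,
                Set.indicator_of_notMem (by simpa [Set.mem_preimage] using hwa)]
          rw [lintegral_congr hcomp, lintegral_indicator (measurableSet_dSet n) _]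
          have hptw : ∀ w ∈ dSet n, ENNReal.ofReal (dF (n + 1) α (Fin.cons t (c • w))) =
              ENNReal.ofReal (t ^ (α 0 - 1) * c ^ (s - 1 - n)) *
                ENNReal.ofReal (dF n (fun j => α j.succ) w) := by
            intro w hw
            rw [dF_cons n α hc hcdef hw, ENNReal.ofReal_mul
              (by positivity)]
          rw [setLIntegral_congr_fun_ae (measurableSet_dSet n) (ae_of_all _ hptw),
            lintegral_const_mul _ (measurable_dF n (fun j => α j.succ)).ennreal_ofReal,
            ih hn (fun j => α j.succ) hβ]
          rw [Set.indicator_of_mem (Set.mem_Ioo.mpr ⟨ht0, ht1⟩)]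
          rw [← mul_assoc, ← ENNReal.ofReal_mul (by positivity)]
          congr 2
          rw [← Real.rpow_natCast c n, ← hcdef]
          rw [show c ^ (n : ℝ) * (t ^ (α 0 - 1) * c ^ (s - 1 - ↑n)) =
            t ^ (α 0 - 1) * (c ^ (n : ℝ) * c ^ (s - 1 - ↑n)) from by ring,
            ← Real.rpow_add hc]
          ring_nf
        · rw [Set.indicator_of_notMem ht]
          have hz : ∀ z : Fin n → ℝ, (t, z) ∉ T := by
            rintro z ⟨⟨h1, h2⟩, h3⟩
            have hzpos : 0 < ∑ i, z i := Finset.sum_pos (fun i _ => h2 i) Finset.univ_nonempty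
            exact ht ⟨h1, by linarith⟩
          simp only [Set.indicator_of_notMem (hz _)]
          exact lintegral_zero
      rw [lintegral_congr inner, lintegral_indicator measurableSet_Ioo _,
        lintegral_mul_const _ (measurable_beta_fun _ _), beta_lintegral (hα 0) hs_pos]
      have hΓs : Gamma s ≠ 0 := (Gamma_pos_of_pos hs_pos).ne'
      have hΓas : Gamma (α 0 + s) ≠ 0 := (Gamma_pos_of_pos (add_pos (hα 0) hs_pos)).ne'
      rw [← ENNReal.ofReal_mul (le_of_lt (div_pos
        (mul_pos (Gamma_pos_of_pos (hα 0)) (Gamma_pos_of_pos hs_pos))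
        (Gamma_pos_of_pos (add_pos (hα 0) hs_pos))))]
      congr 1
      have hps : (∏ i : Fin (n + 1 + 1), Gamma (α i)) =
          Gamma (α 0) * ∏ j : Fin (n + 1), Gamma (α j.succ) := Fin.prod_univ_succ _
      have hss : (∑ i : Fin (n + 1 + 1), α i) = α 0 + s := by rw [Fin.sum_univ_succ, hs]
      rw [hps, hss]
      field_simp


/-- Integral over the simplex `S_K`: the Lebesgue integral over the open set
`Δ_K = {(y_1,…,y_{K-1}) : y_i > 0, y_1+…+y_{K-1} < 1}` of the map that feeds
`(y_1,…,y_{K-1}, 1 - y_1 - … - y_{K-1})` to `g`. -/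
noncomputable def simplexIntegral (K : ℕ) (g : (Fin K → ℝ) → ℝ) : ℝ :=
  ∫ y in {y : Fin (K - 1) → ℝ | (∀ i, 0 < y i) ∧ ∑ i, y i < 1},
    g (fun i => if h : (i : ℕ) < K - 1 then y ⟨(i : ℕ), h⟩ else 1 - ∑ j, y j)

/-- Dirichlet integral. -/
theorem dirichlet_integral (K : ℕ) (hK : 2 ≤ K) (α : Fin K → ℝ) (hα : ∀ i, 0 < α i) :
    simplexIntegral K (fun y => ∏ i, y i ^ (α i - 1)) =
      (∏ i, Gamma (α i)) / Gamma (∑ i, α i) := by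
  obtain ⟨n, rfl⟩ : ∃ n, K = n + 1 := ⟨K - 1, by omega⟩
  have hn : 1 ≤ n := by omega
  rw [simplexIntegral]
  simp only [Nat.add_sub_cancel]
  have hfun : ∀ y : Fin n → ℝ,
      (∏ i : Fin (n + 1),
        (if h : (i : ℕ) < n then y ⟨(i : ℕ), h⟩ else 1 - ∑ j, y j) ^ (α i - 1)) =
      dF n α y := by
    intro y
    rw [Fin.prod_univ_castSucc]
    unfold dF
    congr 1
    · refine Finset.prod_congr rfl fun i _ => ?_
      have h : ((i.castSucc : Fin (n + 1)) : ℕ) < n := by simpa using i.isLt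
      rw [dif_pos h]
      simp
    · rw [dif_neg (by simp)]
  have hsetEq : {y : Fin n → ℝ | (∀ i, 0 < y i) ∧ ∑ i, y i < 1} = dSet n := rfl
  have hnn : 0 ≤ᵐ[volume.restrict (dSet n)] dF n α := by
    refine (ae_restrict_iff' (measurableSet_dSet n)).2 (ae_of_all _ fun y hy => ?_)
    obtain ⟨hy1, hy2⟩ := hy
    exact mul_nonneg (Finset.prod_nonneg fun i _ => rpow_nonneg (hy1 i).le _)
      (rpow_nonneg (by linarith) _)
  show (∫ y in {y : Fin n → ℝ | (∀ i, 0 < y i) ∧ ∑ i, y i < 1},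
      ∏ i : Fin (n + 1),
        (if h : (i : ℕ) < n then y ⟨(i : ℕ), h⟩ else 1 - ∑ j, y j) ^ (α i - 1)) = _
  rw [show {y : Fin n → ℝ | (∀ i, 0 < y i) ∧ ∑ i, y i < 1} = dSet n from rfl]
  rw [setIntegral_congr_fun (measurableSet_dSet n) fun y _ => hfun y]
  rw [integral_eq_lintegral_of_nonneg_ae hnn (measurable_dF n α).aestronglyMeasurable,
    dirichlet_aux n hn α hα, ENNReal.toReal_ofReal]
  exact div_nonneg (Finset.prod_nonneg fun i _ => (Gamma_pos_of_pos (hα i)).le)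
    (Gamma_pos_of_pos (Finset.sum_pos (fun i _ => hα i) Finset.univ_nonempty)).le
end

section
/- Schlömilch integral: Let K ≥ 2 be an integer, α ∈ ℝ^K with α_i > 0, and β ∈ ℝ^K with β_i > 0. Then ∫_{S_K} (∏_{i=1}^K x_i^{α_i − 1}) · (∑_{j=1}^K β_j x_j)^{−α_+} d^{K−1}x = (∏_{i=1}^K Γ(α_i)) / (Γ(α_+) · ∏_{i=1}^K β_i^{α_i}). -/
open MeasureTheory Real
open Set

lemma oneDim_integrable {a b : ℝ} (ha : 0 < a) (hb : 0 < b) :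
    IntegrableOn (fun t : ℝ => t ^ (a - 1) * Real.exp (-(b * t))) (Ioi 0) := by
  have := integrableOn_rpow_mul_exp_neg_mul_rpow (p := 1) (s := a - 1) (b := b)
    (by linarith) zero_lt_one hb
  simpa [Real.rpow_one, neg_mul] using this

lemma oneDim_integral {a b : ℝ} (ha : 0 < a) (hb : 0 < b) :
    ∫ t in Ioi (0:ℝ), t ^ (a - 1) * Real.exp (-(b * t)) = Real.Gamma a * b ^ (-a) := by
  rw [Real.integral_rpow_mul_exp_neg_mul_Ioi ha hb, one_div, ← Real.rpow_neg_one,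
    ← Real.rpow_mul hb.le]
  rw [mul_comm]
  norm_num

variable {K : ℕ}

lemma orthant_indicator (α β : Fin K → ℝ) :
    (Set.univ.pi fun _ : Fin K => Ioi (0:ℝ)).indicator
        (fun x : Fin K → ℝ => ∏ i, x i ^ (α i - 1) * Real.exp (-(β i * x i)))
      = fun x => ∏ i, (Ioi (0:ℝ)).indicator
          (fun t => t ^ (α i - 1) * Real.exp (-(β i * t))) (x i) := by
  funext x
  by_cases hx : x ∈ Set.univ.pi fun _ : Fin K => Ioi (0:ℝ)
  · rw [Set.indicator_of_mem hx]
    refine Finset.prod_congr rfl fun i _ => ?_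
    rw [Set.indicator_of_mem (hx i (Set.mem_univ i))]
  · rw [Set.indicator_of_notMem hx]
    simp only [Set.mem_pi, Set.mem_univ, forall_true_left, not_forall] at hx
    obtain ⟨i, hi⟩ := hx
    exact (Finset.prod_eq_zero (Finset.mem_univ i)
      (Set.indicator_of_notMem hi _)).symm

lemma orthant_integrable (α β : Fin K → ℝ) (hα : ∀ i, 0 < α i) (hβ : ∀ i, 0 < β i) :
    IntegrableOn (fun x : Fin K → ℝ => ∏ i, x i ^ (α i - 1) * Real.exp (-(β i * x i)))
      (Set.univ.pi fun _ => Ioi (0:ℝ)) := by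
  rw [← integrable_indicator_iff (MeasurableSet.univ_pi fun _ => measurableSet_Ioi),
    orthant_indicator]
  exact Integrable.fintype_prod (𝕜 := ℝ) fun i =>
    (integrable_indicator_iff measurableSet_Ioi).2 (oneDim_integrable (hα i) (hβ i))

lemma orthant_integral (α β : Fin K → ℝ) (hα : ∀ i, 0 < α i) (hβ : ∀ i, 0 < β i) :
    ∫ x : Fin K → ℝ in Set.univ.pi fun _ => Ioi (0:ℝ),
        ∏ i, x i ^ (α i - 1) * Real.exp (-(β i * x i))
      = ∏ i, Real.Gamma (α i) * β i ^ (-(α i)) := by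
  rw [← integral_indicator (MeasurableSet.univ_pi fun _ => measurableSet_Ioi),
    orthant_indicator, volume_pi, MeasureTheory.integral_fintype_prod_eq_prod (𝕜 := ℝ)]
  refine Finset.prod_congr rfl fun i _ => ?_
  rw [integral_indicator measurableSet_Ioi]
  exact oneDim_integral (hα i) (hβ i)

variable {n : ℕ}

/-- The cone map `(y, t) ↦ t•(y, 1-∑y)` with `t` stored as the last coordinate. -/
noncomputable def phi (n : ℕ) (z : Fin (n+1) → ℝ) : Fin (n+1) → ℝ := fun i =>
  z (Fin.last n) * (if (i:ℕ) < n then z i else 1 - ∑ j : Fin n, z j.castSucc)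

noncomputable def phiDeriv (n : ℕ) (z : Fin (n+1) → ℝ) :
    (Fin (n+1) → ℝ) →L[ℝ] (Fin (n+1) → ℝ) :=
  ContinuousLinearMap.pi fun i =>
    (if (i:ℕ) < n then z i else 1 - ∑ j : Fin n, z j.castSucc) •
        ContinuousLinearMap.proj (Fin.last n)
      + z (Fin.last n) • (if (i:ℕ) < n then ContinuousLinearMap.proj i
          else - ∑ j : Fin n, ContinuousLinearMap.proj j.castSucc)

lemma hasFDerivAt_phi (z : Fin (n+1) → ℝ) : HasFDerivAt (phi n) (phiDeriv n z) z := by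
  apply hasFDerivAt_pi''
  intro i
  by_cases hi : (i:ℕ) < n
  · have h := ((ContinuousLinearMap.proj (R := ℝ) (φ := fun _ : Fin (n+1) => ℝ)
        (Fin.last n)).hasFDerivAt (x := z)).fun_mul
      ((ContinuousLinearMap.proj (R := ℝ) (φ := fun _ : Fin (n+1) => ℝ) i).hasFDerivAt (x := z))
    have : (fun z : Fin (n+1) → ℝ => phi n z i) = fun z => z (Fin.last n) * z i := by
      funext w; simp [phi, if_pos hi]
    rw [this]
    refine h.congr_fderiv ?_
    ext v
    simp [phiDeriv, if_pos hi, mul_comm]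
    ring
  · have hsum : HasFDerivAt (fun z : Fin (n+1) → ℝ => 1 - ∑ j : Fin n, z j.castSucc)
        (- ∑ j : Fin n, ContinuousLinearMap.proj (R := ℝ) (φ := fun _ : Fin (n+1) => ℝ)
          j.castSucc) z := by
      have := (hasFDerivAt_const (1:ℝ) z).fun_sub
        (HasFDerivAt.fun_sum (fun j (_ : j ∈ Finset.univ) =>
          (ContinuousLinearMap.proj (R := ℝ) (φ := fun _ : Fin (n+1) => ℝ)
            (Fin.castSucc j)).hasFDerivAt (x := z)))
      simpa using this
    have h := ((ContinuousLinearMap.proj (R := ℝ) (φ := fun _ : Fin (n+1) => ℝ)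
        (Fin.last n)).hasFDerivAt (x := z)).fun_mul hsum
    have : (fun z : Fin (n+1) → ℝ => phi n z i)
        = fun z => z (Fin.last n) * (1 - ∑ j : Fin n, z j.castSucc) := by
      funext w; simp [phi, if_neg hi]
    rw [this]
    refine h.congr_fderiv ?_
    ext v
    simp [phiDeriv, if_neg hi, mul_comm, Finset.mul_sum]
    ring
noncomputable def lmS (n : ℕ) (t : ℝ) : (Fin (n+1) → ℝ) →ₗ[ℝ] (Fin (n+1) → ℝ) :=
  LinearMap.pi fun i => if (i:ℕ) < n then t • LinearMap.proj i else LinearMap.proj i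

noncomputable def lmQ (n : ℕ) (z : Fin (n+1) → ℝ) : (Fin (n+1) → ℝ) →ₗ[ℝ] (Fin (n+1) → ℝ) :=
  LinearMap.pi fun i => if (i:ℕ) < n then LinearMap.proj i + z i • LinearMap.proj (Fin.last n)
    else LinearMap.proj (Fin.last n)

noncomputable def lmP (n : ℕ) : (Fin (n+1) → ℝ) →ₗ[ℝ] (Fin (n+1) → ℝ) :=
  LinearMap.pi fun i => if (i:ℕ) < n then LinearMap.proj i
    else LinearMap.proj (Fin.last n) - ∑ j : Fin n, LinearMap.proj j.castSucc

lemma ne_last_of_lt {i : Fin (n+1)} (hi : (i:ℕ) < n) : i ≠ Fin.last n := by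
  intro h; rw [h] at hi; simp [Fin.last] at hi

lemma eq_last_of_not_lt' {i : Fin (n+1)} (hi : ¬ (i:ℕ) < n) : i = Fin.last n := by
  ext; simp [Fin.last]; omega

lemma det_lmS (t : ℝ) : LinearMap.det (lmS n t) = t ^ n := by
  rw [← LinearMap.det_toMatrix']
  have : LinearMap.toMatrix' (lmS n t)
      = Matrix.diagonal (fun i : Fin (n+1) => if (i:ℕ) < n then t else 1) := by
    ext i j
    rw [LinearMap.toMatrix'_apply]
    by_cases hij : i = j
    · subst hij
      by_cases hi : (i:ℕ) < n <;> simp [lmS, hi, LinearMap.proj_apply]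
    · by_cases hi : (i:ℕ) < n <;>
        simp [lmS, hi, LinearMap.proj_apply, hij, Matrix.diagonal_apply_ne _ hij,
          Ne.symm hij]
  rw [this, Matrix.det_diagonal, Fin.prod_univ_castSucc]
  have h1 : ∀ j : Fin n, ((j.castSucc : Fin (n+1)) : ℕ) < n := fun j => j.is_lt
  have h2 : ¬ ((Fin.last n : Fin (n+1)) : ℕ) < n := by simp [Fin.last]
  simp [h1, h2]

lemma det_lmQ (z : Fin (n+1) → ℝ) : LinearMap.det (lmQ n z) = 1 := by
  rw [← LinearMap.det_toMatrix']
  rw [Matrix.det_of_upperTriangular (h := ?_)]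
  · refine Finset.prod_eq_one fun i _ => ?_
    rw [LinearMap.toMatrix'_apply]
    by_cases hi : (i:ℕ) < n
    · simp [lmQ, hi, LinearMap.proj_apply, (ne_last_of_lt hi).symm]
    · simp [lmQ, hi, LinearMap.proj_apply, (eq_last_of_not_lt' hi).symm]
  · intro i j hij
    have hij' : j < i := hij
    rw [LinearMap.toMatrix'_apply]
    have hji : i ≠ j := (ne_of_lt hij').symm
    have hjl : Fin.last n ≠ j :=
      fun h => absurd (h ▸ hij') (not_lt.2 (Fin.le_last i))
    by_cases hi : (i:ℕ) < n
    · simp [lmQ, hi, LinearMap.proj_apply, hji, hjl]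
    · simp [lmQ, hi, LinearMap.proj_apply, hjl, hji, (eq_last_of_not_lt' hi).symm]

lemma det_lmP : LinearMap.det (lmP n) = 1 := by
  rw [← LinearMap.det_toMatrix']
  rw [Matrix.det_of_lowerTriangular (M := LinearMap.toMatrix' (lmP n)) (h := ?_)]
  · refine Finset.prod_eq_one fun i _ => ?_
    rw [LinearMap.toMatrix'_apply]
    by_cases hi : (i:ℕ) < n
    · simp [lmP, hi, LinearMap.proj_apply]
    · have hil : i = Fin.last n := eq_last_of_not_lt' hi
      have hne : ∀ j : Fin n, ¬ (j.castSucc : Fin (n+1)) = Fin.last n := by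
        intro j h
        exact absurd (h ▸ Fin.castSucc_lt_last j) (lt_irrefl _)
      subst hil
      simp [lmP, hi, LinearMap.proj_apply, hne]
  · intro i j hij
    have hij' : i < j := hij
    rw [LinearMap.toMatrix'_apply]
    have hji : j ≠ i := (ne_of_lt hij').symm
    have hi : (i:ℕ) < n := by
      have h1 : (i:ℕ) < (j:ℕ) := hij'
      have h2 : (j:ℕ) ≤ n := Nat.lt_succ_iff.1 j.is_lt
      omega
    simp [lmP, hi, LinearMap.proj_apply, hji, ne_of_lt hij']

lemma phiDeriv_eq_comp (z : Fin (n+1) → ℝ) :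
    ((phiDeriv n z) : (Fin (n+1) → ℝ) →ₗ[ℝ] (Fin (n+1) → ℝ))
      = lmP n ∘ₗ lmQ n z ∘ₗ lmS n (z (Fin.last n)) := by
  have hlast : ¬ ((Fin.last n : Fin (n+1)) : ℕ) < n := by simp [Fin.last]
  have hcs : ∀ j : Fin n, ((j.castSucc : Fin (n+1)) : ℕ) < n := fun j => j.is_lt
  apply LinearMap.ext; intro v; funext i
  by_cases hi : (i:ℕ) < n
  · simp [phiDeriv, lmP, lmQ, lmS, hi, hlast, LinearMap.proj_apply]
    ring
  · simp [phiDeriv, lmP, lmQ, lmS, hi, hlast, hcs, LinearMap.proj_apply]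
    rw [Finset.sum_add_distrib]
    simp only [Finset.mul_sum, Finset.sum_mul]
    simp [mul_comm]
    rw [mul_sub, mul_one, Finset.mul_sum]
    ring_nf
    rw [show (∑ x : Fin n, v (Fin.last n) * z x.castSucc)
        = ∑ x : Fin n, z x.castSucc * v (Fin.last n) from
      Finset.sum_congr rfl fun _ _ => mul_comm _ _]
    ring

lemma det_phiDeriv (z : Fin (n+1) → ℝ) :
    (phiDeriv n z).det = z (Fin.last n) ^ n := by
  have h : (phiDeriv n z).det
      = LinearMap.det ((phiDeriv n z : (Fin (n+1) → ℝ) →ₗ[ℝ] (Fin (n+1) → ℝ))) := rfl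
  rw [h, phiDeriv_eq_comp, LinearMap.det_comp, LinearMap.det_comp, det_lmP, det_lmQ, det_lmS]
  ring

def Aset (n : ℕ) : Set (Fin (n+1) → ℝ) :=
  {z | (∀ j : Fin n, 0 < z j.castSucc) ∧ (∑ j : Fin n, z j.castSucc) < 1 ∧ 0 < z (Fin.last n)}

lemma measurableSet_Aset : MeasurableSet (Aset n) := by
  have h1 : MeasurableSet {z : Fin (n+1) → ℝ | ∀ j : Fin n, 0 < z j.castSucc} := by
    rw [Set.setOf_forall]
    exact MeasurableSet.iInter fun j =>
      measurableSet_lt measurable_const (measurable_pi_apply _)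
  have h2 : MeasurableSet {z : Fin (n+1) → ℝ | (∑ j : Fin n, z j.castSucc) < 1} :=
    measurableSet_lt (by fun_prop) measurable_const
  have h3 : MeasurableSet {z : Fin (n+1) → ℝ | 0 < z (Fin.last n)} :=
    measurableSet_lt measurable_const (measurable_pi_apply _)
  exact h1.inter (h2.inter h3)

lemma sum_phi (z : Fin (n+1) → ℝ) : ∑ i, phi n z i = z (Fin.last n) := by
  have hlast : ¬ ((Fin.last n : Fin (n+1)) : ℕ) < n := by simp [Fin.last]
  have hcs : ∀ j : Fin n, ((j.castSucc : Fin (n+1)) : ℕ) < n := fun j => j.is_lt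
  rw [Fin.sum_univ_castSucc]
  simp only [phi, hcs, hlast, if_true, if_false, ite_true, ite_false]
  rw [← Finset.mul_sum]
  ring

lemma injOn_phi : Set.InjOn (phi n) (Aset n) := by
  intro z hz w hw h
  have ht : z (Fin.last n) = w (Fin.last n) := by
    rw [← sum_phi z, ← sum_phi w, h]
  have htpos : 0 < z (Fin.last n) := hz.2.2
  funext i
  induction i using Fin.lastCases with
  | last => exact ht
  | cast j =>
      have hj := congrFun h j.castSucc
      have hjlt : ((j.castSucc : Fin (n+1)) : ℕ) < n := j.is_lt
      simp only [phi, hjlt, if_true] at hj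
      rw [← ht] at hj
      exact mul_left_cancel₀ (ne_of_gt htpos) hj

lemma image_phi : phi n '' Aset n = Set.univ.pi fun _ : Fin (n+1) => Ioi (0:ℝ) := by
  have hlast : ¬ ((Fin.last n : Fin (n+1)) : ℕ) < n := by simp [Fin.last]
  have hcs : ∀ j : Fin n, ((j.castSucc : Fin (n+1)) : ℕ) < n := fun j => j.is_lt
  ext x
  simp only [Set.mem_image, Set.mem_univ_pi, mem_Ioi]
  constructor
  · rintro ⟨z, hz, rfl⟩ i
    by_cases hi : (i:ℕ) < n
    · have : 0 < z i := by
        have := hz.1 ⟨(i:ℕ), hi⟩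
        rwa [show (Fin.mk (i:ℕ) hi).castSucc = i from Fin.ext rfl] at this
      simp only [phi, hi, if_true]
      exact mul_pos hz.2.2 this
    · simp only [phi, hi, if_false]
      exact mul_pos hz.2.2 (by linarith [hz.2.1])
  · intro hx
    set t := ∑ i, x i with htdef
    have htpos : 0 < t := Finset.sum_pos (fun i _ => hx i) Finset.univ_nonempty
    refine ⟨fun i => if (i:ℕ) < n then x i / t else t, ⟨?_, ?_, ?_⟩, ?_⟩
    · intro j
      simp only [hcs j, if_true]
      exact div_pos (hx _) htpos
    · simp only [hcs, if_true]
      rw [← Finset.sum_div, div_lt_one htpos, htdef, Fin.sum_univ_castSucc]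
      linarith [hx (Fin.last n)]
    · simp only [hlast, if_false]
      exact htpos
    · funext i
      simp only [phi, hlast, if_false, hcs, if_true]
      by_cases hi : (i:ℕ) < n
      · simp only [hi, if_true]
        field_simp
      · simp only [hi, if_false]
        have : i = Fin.last n := by ext; simp [Fin.last]; omega
        subst this
        have hsum : t * ∑ j : Fin n, x j.castSucc / t = ∑ j : Fin n, x j.castSucc := by
          rw [Finset.mul_sum]
          exact Finset.sum_congr rfl fun j _ => by field_simp
        rw [mul_sub, mul_one, hsum, htdef, Fin.sum_univ_castSucc]
        ring

noncomputable def extMap (n : ℕ) (y : Fin n → ℝ) : Fin (n+1) → ℝ := fun i =>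
  if h : (i : ℕ) < n then y ⟨(i : ℕ), h⟩ else 1 - ∑ j, y j


lemma phi_eq_extMap (z : Fin (n+1) → ℝ) :
    phi n z = fun i => z (Fin.last n) * extMap n (fun j : Fin n => z j.castSucc) i := by
  funext i
  simp only [phi, extMap]
  by_cases hi : (i:ℕ) < n
  · rw [if_pos hi, dif_pos hi]
    exact congrArg (fun j => z (Fin.last n) * z j) (Fin.ext rfl)
  · rw [if_neg hi, dif_neg hi]

lemma measurableSet_simplex :
    MeasurableSet {y : Fin n → ℝ | (∀ i, 0 < y i) ∧ ∑ i, y i < 1} := by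
  have h1 : MeasurableSet {y : Fin n → ℝ | ∀ i, 0 < y i} := by
    rw [Set.setOf_forall]
    exact MeasurableSet.iInter fun j =>
      measurableSet_lt measurable_const (measurable_pi_apply _)
  have h2 : MeasurableSet {y : Fin n → ℝ | (∑ i, y i) < 1} :=
    measurableSet_lt (by fun_prop) measurable_const
  exact h1.inter h2



lemma simplexIntegral_succ (n : ℕ) (g : (Fin (n+1) → ℝ) → ℝ) :
    simplexIntegral (n+1) g
      = ∫ y in {y : Fin n → ℝ | (∀ i, 0 < y i) ∧ ∑ i, y i < 1}, g (extMap n y) := rfl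


/-- Schlömilch integral. -/
theorem schlomilch_integral (K : ℕ) (hK : 2 ≤ K) (α β : Fin K → ℝ)
    (hα : ∀ i, 0 < α i) (hβ : ∀ i, 0 < β i) :
    simplexIntegral K (fun x =>
        (∏ i, x i ^ (α i - 1)) * (∑ j, β j * x j) ^ (-(∑ i, α i))) =
      (∏ i, Gamma (α i)) / (Gamma (∑ i, α i) * ∏ i, β i ^ (α i)) := by
  obtain ⟨n, rfl⟩ : ∃ n, K = n + 1 := ⟨K - 1, by omega⟩
  set a : ℝ := ∑ i, α i with ha_def
  have ha : 0 < a := Finset.sum_pos (fun i _ => hα i) Finset.univ_nonempty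
  set g : (Fin (n+1) → ℝ) → ℝ :=
    fun x => ∏ i, x i ^ (α i - 1) * Real.exp (-(β i * x i)) with hg
  set Δ : Set (Fin n → ℝ) := {y | (∀ i, 0 < y i) ∧ ∑ i, y i < 1} with hΔ
  set P : Set (ℝ × (Fin n → ℝ)) := Ioi 0 ×ˢ Δ with hP
  set G : ℝ × (Fin n → ℝ) → ℝ :=
    fun p => |p.1 ^ n| * g (fun i => p.1 * extMap n p.2 i) with hG
  set e := MeasurableEquiv.piFinSuccAbove (fun _ : Fin (n+1) => ℝ) (Fin.last n) with he
  have hme : MeasurePreserving e := volume_preserving_piFinSuccAbove _ _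
  have hez : ∀ z : Fin (n+1) → ℝ,
      e z = (z (Fin.last n), fun j : Fin n => z j.castSucc) := by
    intro z
    rw [he]
    refine Prod.ext rfl ?_
    funext j
    show z ((Fin.last n).succAbove j) = z j.castSucc
    rw [Fin.succAbove_last]
  -- Step 1: orthant integral
  have h1 : ∫ x in Set.univ.pi fun _ : Fin (n+1) => Ioi (0:ℝ), g x
      = ∏ i, Real.Gamma (α i) * β i ^ (-(α i)) := orthant_integral α β hα hβ
  have hInt1 : IntegrableOn g (Set.univ.pi fun _ : Fin (n+1) => Ioi (0:ℝ)) :=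
    orthant_integrable α β hα hβ
  -- Step 2: change of variables
  have hDeriv : ∀ z ∈ Aset n, HasFDerivWithinAt (phi n) (phiDeriv n z) (Aset n) z :=
    fun z _ => (hasFDerivAt_phi z).hasFDerivWithinAt
  have h2 : ∫ x in Set.univ.pi fun _ : Fin (n+1) => Ioi (0:ℝ), g x
      = ∫ z in Aset n, |(phiDeriv n z).det| • g (phi n z) := by
    rw [← image_phi]
    exact integral_image_eq_integral_abs_det_fderiv_smul volume measurableSet_Aset
      hDeriv injOn_phi g
  have hInt2 : IntegrableOn (fun z => |(phiDeriv n z).det| • g (phi n z)) (Aset n) := by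
    rw [← integrableOn_image_iff_integrableOn_abs_det_fderiv_smul volume measurableSet_Aset
      hDeriv injOn_phi g, image_phi]
    exact hInt1
  -- Step 3: identify with an indicator function on the product space
  have hcompeq : (fun z => |(phiDeriv n z).det| • g (phi n z)) = fun z => G (e z) := by
    funext z
    rw [hez z]
    show |(phiDeriv n z).det| • g (phi n z)
      = |z (Fin.last n) ^ n| * g (fun i => z (Fin.last n) * extMap n (fun j => z j.castSucc) i)
    rw [det_phiDeriv, phi_eq_extMap, smul_eq_mul]
  have hAeq : Aset n = e ⁻¹' P := by
    ext z
    rw [Set.mem_preimage, hez z, hP, Set.mem_prod]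
    show _ ↔ z (Fin.last n) ∈ Ioi 0 ∧ _ ∈ Δ
    rw [mem_Ioi, hΔ]
    simp only [Aset, Set.mem_setOf_eq]
    tauto
  have hindeq : (Aset n).indicator (fun z => |(phiDeriv n z).det| • g (phi n z))
      = fun z => P.indicator G (e z) := by
    rw [hcompeq, hAeq]
    funext z
    show (⇑e ⁻¹' P).indicator (G ∘ ⇑e) z = P.indicator G (e z)
    exact Set.indicator_comp_right _
  have h3 : ∫ z in Aset n, |(phiDeriv n z).det| • g (phi n z) = ∫ p, P.indicator G p := by
    rw [← integral_indicator measurableSet_Aset, hindeq]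
    exact hme.integral_comp e.measurableEmbedding _
  have hIntP : Integrable (P.indicator G) := by
    rw [← hme.integrable_comp_emb e.measurableEmbedding]
    have : P.indicator G ∘ e
        = (Aset n).indicator (fun z => |(phiDeriv n z).det| • g (phi n z)) := by
      rw [hindeq]; rfl
    rw [this]
    exact (integrable_indicator_iff measurableSet_Aset).2 hInt2
  -- Step 4: Fubini
  have h4 : ∫ p, P.indicator G p = ∫ y, ∫ t, P.indicator G (t, y) := by
    rw [Measure.volume_eq_prod] at hIntP ⊢
    exact integral_prod_symm _ hIntP
  -- Step 5: the inner integral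
  have hinner : ∀ y : Fin n → ℝ, (∫ t, P.indicator G (t, y))
      = Δ.indicator (fun y => Real.Gamma a *
          ((∏ i, extMap n y i ^ (α i - 1)) * (∑ j, β j * extMap n y j) ^ (-a))) y := by
    intro y
    by_cases hy : y ∈ Δ
    · have hw : ∀ i, 0 < extMap n y i := by
        intro i
        simp only [extMap]
        by_cases hi : (i:ℕ) < n
        · rw [dif_pos hi]; exact hy.1 _
        · rw [dif_neg hi]
          have := hy.2
          rw [hΔ] at hy
          linarith [hy.2]
      have hB : 0 < ∑ j, β j * extMap n y j :=
        Finset.sum_pos (fun j _ => mul_pos (hβ j) (hw j)) Finset.univ_nonempty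
      have hptw : ∀ t : ℝ, P.indicator G (t, y)
          = (Ioi (0:ℝ)).indicator (fun t => G (t, y)) t := by
        intro t
        by_cases ht : t ∈ Ioi (0:ℝ)
        · rw [Set.indicator_of_mem ht, Set.indicator_of_mem (Set.mem_prod.2 ⟨ht, hy⟩)]
        · rw [Set.indicator_of_notMem ht,
            Set.indicator_of_notMem (fun hmem => ht hmem.1)]
      rw [Set.indicator_of_mem hy]
      simp only [hptw]
      rw [integral_indicator measurableSet_Ioi]
      have hGval : ∀ t ∈ Ioi (0:ℝ), G (t, y)
          = t ^ (a - 1) * Real.exp (-((∑ j, β j * extMap n y j) * t))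
              * ∏ i, extMap n y i ^ (α i - 1) := by
        intro t ht
        rw [mem_Ioi] at ht
        show |t ^ n| * g (fun i => t * extMap n y i) = _
        rw [hg]
        beta_reduce
        have expand : (∏ i, (t * extMap n y i) ^ (α i - 1)
              * Real.exp (-(β i * (t * extMap n y i))))
            = (∏ i, (t * extMap n y i) ^ (α i - 1))
              * ∏ i, Real.exp (-(β i * (t * extMap n y i))) := Finset.prod_mul_distrib
        rw [expand]
        have hprod1 : (∏ i, (t * extMap n y i) ^ (α i - 1))
            = t ^ (a - 1 - (n:ℝ)) * ∏ i, extMap n y i ^ (α i - 1) := by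
          have e1 : (∏ i, (t * extMap n y i) ^ (α i - 1))
              = (∏ i, t ^ (α i - 1)) * ∏ i, extMap n y i ^ (α i - 1) := by
            rw [← Finset.prod_mul_distrib]
            exact Finset.prod_congr rfl fun i _ => Real.mul_rpow ht.le (hw i).le
          rw [e1, ← Real.rpow_sum_of_pos ht]
          congr 2
          rw [Finset.sum_sub_distrib]
          simp [Finset.card_univ]
          push_cast
          ring
        have hexp : (∏ i, Real.exp (-(β i * (t * extMap n y i))))
            = Real.exp (-((∑ j, β j * extMap n y j) * t)) := by
          rw [← Real.exp_sum]
          congr 1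
          rw [Finset.sum_neg_distrib]
          congr 1
          rw [Finset.sum_mul]
          exact Finset.sum_congr rfl fun i _ => by ring
        rw [hprod1, hexp, abs_of_nonneg (pow_nonneg ht.le _), ← Real.rpow_natCast t n]
        have harr : ∀ Pr Ex : ℝ, t ^ (n:ℝ) * (t ^ (a - 1 - (n:ℝ)) * Pr * Ex)
            = t ^ (n:ℝ) * t ^ (a - 1 - (n:ℝ)) * Ex * Pr := fun Pr Ex => by ring
        rw [harr, ← Real.rpow_add ht,
          show (n:ℝ) + (a - 1 - (n:ℝ)) = a - 1 from by ring]
      rw [setIntegral_congr_fun measurableSet_Ioi hGval, integral_mul_const,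
        oneDim_integral ha hB]
      ring
    · rw [Set.indicator_of_notMem hy]
      have : ∀ t : ℝ, P.indicator G (t, y) = 0 :=
        fun t => Set.indicator_of_notMem (fun hmem => hy hmem.2) _
      simp only [this, integral_zero]
  -- Step 6: assemble
  have h6 : ∏ i, Real.Gamma (α i) * β i ^ (-(α i))
      = Real.Gamma a * simplexIntegral (n+1) (fun x =>
          (∏ i, x i ^ (α i - 1)) * (∑ j, β j * x j) ^ (-(∑ i, α i))) := by
    rw [simplexIntegral_succ, ← h1, h2, h3, h4]
    calc ∫ y, ∫ t, P.indicator G (t, y)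
        = ∫ y, Δ.indicator (fun y => Real.Gamma a *
            ((∏ i, extMap n y i ^ (α i - 1)) * (∑ j, β j * extMap n y j) ^ (-a))) y := by
          exact integral_congr_ae (Filter.Eventually.of_forall hinner)
      _ = ∫ y in Δ, Real.Gamma a *
            ((∏ i, extMap n y i ^ (α i - 1)) * (∑ j, β j * extMap n y j) ^ (-a)) :=
          integral_indicator measurableSet_simplex
      _ = Real.Gamma a * ∫ y in Δ,
            ((∏ i, extMap n y i ^ (α i - 1)) * (∑ j, β j * extMap n y j) ^ (-a)) :=
          integral_const_mul _ _
      _ = _ := by rw [← ha_def]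
  -- Step 7: algebra
  have hΓ : Real.Gamma a ≠ 0 := (Real.Gamma_pos_of_pos ha).ne'
  have hprodβpos : 0 < ∏ i, β i ^ (α i) :=
    Finset.prod_pos fun i _ => Real.rpow_pos_of_pos (hβ i) _
  have hsplit : ∏ i, Real.Gamma (α i) * β i ^ (-(α i))
      = (∏ i, Real.Gamma (α i)) * (∏ i, β i ^ (α i))⁻¹ := by
    rw [Finset.prod_mul_distrib, ← Finset.prod_inv_distrib]
    congr 1
    exact Finset.prod_congr rfl fun i _ => by
      rw [Real.rpow_neg (hβ i).le]
  rw [hsplit] at h6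
  rw [eq_div_iff (by positivity)]
  rw [show Real.Gamma (∑ i, α i) = Real.Gamma a from rfl]
  field_simp at h6 ⊢
  linarith [h6]
end

section
/- Schlömilch's differentiated integral: Let K ≥ 2 be an integer, α ∈ ℝ^K with α_i > 0, and β ∈ ℝ^K with β_i > 0. Then ∫_{S_K} (∏_{i=1}^K x_i^{α_i − 1}) · (∑_{j=1}^K β_j x_j)^{−(α_+ + 1)} d^{K−1}x = ((∏_{i=1}^K Γ(α_i)) / (Γ(α_+ + 1) · ∏_{j=1}^K β_j^{α_j})) · ∑_{i=1}^K α_i / β_i. -/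
open MeasureTheory Real

open Set

namespace SDI

variable {n : ℕ}

/-- The simplex point with last coordinate filled in. -/
noncomputable def xhat (n : ℕ) (y : Fin n → ℝ) : Fin (n + 1) → ℝ :=
  fun i => if h : (i : ℕ) < n then y ⟨(i : ℕ), h⟩ else 1 - ∑ j, y j

lemma xhat_castSucc (y : Fin n → ℝ) (j : Fin n) : xhat n y (Fin.castSucc j) = y j := by
  simp [xhat, Fin.is_lt]

lemma xhat_last (y : Fin n → ℝ) : xhat n y (Fin.last n) = 1 - ∑ j, y j := by
  simp [xhat]

lemma sum_xhat (y : Fin n → ℝ) : ∑ i, xhat n y i = 1 := by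
  rw [Fin.sum_univ_castSucc]
  simp only [xhat_last]
  have : ∀ j : Fin n, xhat n y (Fin.castSucc j) = y j := xhat_castSucc y
  rw [Finset.sum_congr rfl (fun j _ => this j)]
  ring

/-- The open simplex. -/
def Δ (n : ℕ) : Set (Fin n → ℝ) := {y | (∀ i, 0 < y i) ∧ ∑ i, y i < 1}

lemma xhat_pos {y : Fin n → ℝ} (hy : y ∈ Δ n) (i : Fin (n + 1)) : 0 < xhat n y i := by
  induction i using Fin.lastCases with
  | last => rw [xhat_last]; linarith [hy.2]
  | cast i => rw [xhat_castSucc]; exact hy.1 _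

/-- The radial-simplex parametrization map. -/
noncomputable def Phi (n : ℕ) (z : Fin (n + 1) → ℝ) : Fin (n + 1) → ℝ :=
  fun i => z (Fin.last n) * xhat n (fun j => z (Fin.castSucc j)) i

/-- The parameter domain. -/
def S (n : ℕ) : Set (Fin (n + 1) → ℝ) :=
  {z | ((fun j => z (Fin.castSucc j)) ∈ Δ n) ∧ 0 < z (Fin.last n)}

/-- Jacobian matrix of `Phi`. -/
noncomputable def Mmat (n : ℕ) (z : Fin (n + 1) → ℝ) : Matrix (Fin (n + 1)) (Fin (n + 1)) ℝ :=
  fun i j =>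
    if i = Fin.last n then
      (if j = Fin.last n then 1 - ∑ k : Fin n, z (Fin.castSucc k) else -(z (Fin.last n)))
    else (if j = i then z (Fin.last n) else if j = Fin.last n then z i else 0)

/-- Lower unitriangular factor. -/
def Amat (n : ℕ) : Matrix (Fin (n + 1)) (Fin (n + 1)) ℝ :=
  fun i j => if i = Fin.last n then (if j = Fin.last n then 1 else -1)
    else (if j = i then 1 else 0)

/-- Upper triangular factor. -/
noncomputable def Bmat (n : ℕ) (z : Fin (n + 1) → ℝ) : Matrix (Fin (n + 1)) (Fin (n + 1)) ℝ :=
  fun i j => if i = Fin.last n then (if j = Fin.last n then 1 else 0)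
    else (if j = i then z (Fin.last n) else if j = Fin.last n then z i else 0)

lemma Mmat_eq_mul (z : Fin (n+1) → ℝ) : Mmat n z = Amat n * Bmat n z := by
  have hne : ∀ k : Fin n, Fin.castSucc k ≠ Fin.last n := fun k => (Fin.castSucc_lt_last k).ne
  have hne' : ∀ k : Fin n, Fin.last n ≠ Fin.castSucc k := fun k => (hne k).symm
  ext i j
  rw [Matrix.mul_apply, Fin.sum_univ_castSucc]
  induction i using Fin.lastCases with
  | last =>
    induction j using Fin.lastCases with
    | last => simp [Mmat, Amat, Bmat, hne, hne']; ring
    | cast j => simp [Mmat, Amat, Bmat, hne, hne', Fin.castSucc_inj]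
  | cast i =>
    induction j using Fin.lastCases with
    | last => simp [Mmat, Amat, Bmat, hne, hne', Fin.castSucc_inj]
    | cast j => simp [Mmat, Amat, Bmat, hne, hne', Fin.castSucc_inj, eq_comm]


lemma det_Mmat (z : Fin (n + 1) → ℝ) : (Mmat n z).det = z (Fin.last n) ^ n := by
  have hne : ∀ k : Fin n, Fin.castSucc k ≠ Fin.last n := fun k => (Fin.castSucc_lt_last k).ne
  rw [Mmat_eq_mul, Matrix.det_mul]
  have hA : (Amat n).det = 1 := by
    rw [Matrix.det_of_lowerTriangular (Amat n)]
    · simp [Amat]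
    · intro i j hij
      have hij' : i < j := hij
      have hi : i ≠ Fin.last n := fun h => absurd (h ▸ hij') (not_lt.2 (Fin.le_last j))
      simp only [Amat, if_neg hi, if_neg (ne_of_gt hij')]
  have hB : (Bmat n z).det = z (Fin.last n) ^ n := by
    rw [Matrix.det_of_upperTriangular]
    · rw [Fin.prod_univ_castSucc]
      simp [Bmat, hne]
    · intro i j hij
      have hij' : j < i := hij
      have hj : j ≠ Fin.last n := fun h => absurd (h ▸ hij') (not_lt.2 (Fin.le_last i))
      simp [Bmat, hj, ne_of_lt hij']
  rw [hA, hB, one_mul]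

lemma hasFDerivAt_Phi (z : Fin (n + 1) → ℝ) :
    HasFDerivAt (Phi n) ((Matrix.toLin' (Mmat n z)).toContinuousLinearMap) z := by
  have hne : ∀ k : Fin n, Fin.castSucc k ≠ Fin.last n := fun k => (Fin.castSucc_lt_last k).ne
  have hne' : ∀ k : Fin n, Fin.last n ≠ Fin.castSucc k := fun k => (hne k).symm
  apply hasFDerivAt_pi''
  intro i
  induction i using Fin.lastCases with
  | last =>
    have hfun : (fun z : Fin (n + 1) → ℝ => Phi n z (Fin.last n))
        = fun z => z (Fin.last n) * (1 - ∑ j : Fin n, z (Fin.castSucc j)) := by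
      funext z; simp [Phi, xhat_last]
    rw [hfun]
    have hsum : HasFDerivAt (fun z : Fin (n + 1) → ℝ => ∑ j : Fin n, z (Fin.castSucc j))
        (∑ j : Fin n, ContinuousLinearMap.proj (R := ℝ) (φ := fun _ : Fin (n+1) => ℝ)
          (Fin.castSucc j)) z :=
      HasFDerivAt.fun_sum (fun j _ => hasFDerivAt_apply (Fin.castSucc j) z)
    refine ((hasFDerivAt_apply (Fin.last n) z).mul (hsum.const_sub 1)).congr_fderiv ?_
    ext w
    simp only [ContinuousLinearMap.add_apply, ContinuousLinearMap.smul_apply,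
      ContinuousLinearMap.coe_comp', Function.comp_apply, ContinuousLinearMap.proj_apply,
      ContinuousLinearMap.neg_apply, ContinuousLinearMap.coe_sum', Finset.sum_apply,
      LinearMap.coe_toContinuousLinearMap', Matrix.toLin'_apply, Matrix.mulVec,
      dotProduct, smul_eq_mul]
    rw [Fin.sum_univ_castSucc (f := fun j => Mmat n z (Fin.last n) j * w j)]
    simp only [Mmat, hne, hne', if_pos rfl, ite_true, ite_false, neg_mul,
      Finset.sum_neg_distrib, Finset.mul_sum, mul_neg]
  | cast i =>
    have hfun : (fun z : Fin (n + 1) → ℝ => Phi n z (Fin.castSucc i))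
        = fun z => z (Fin.last n) * z (Fin.castSucc i) := by
      funext z; simp [Phi, xhat_castSucc]
    rw [hfun]
    refine ((hasFDerivAt_apply (Fin.last n) z).mul (hasFDerivAt_apply (Fin.castSucc i) z)).congr_fderiv ?_
    ext w
    simp only [ContinuousLinearMap.add_apply, ContinuousLinearMap.smul_apply,
      ContinuousLinearMap.coe_comp', Function.comp_apply, ContinuousLinearMap.proj_apply,
      LinearMap.coe_toContinuousLinearMap', Matrix.toLin'_apply, Matrix.mulVec,
      dotProduct, smul_eq_mul]
    rw [Fin.sum_univ_castSucc (f := fun j => Mmat n z (Fin.castSucc i) j * w j)]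
    simp only [Mmat, if_neg (hne _), if_pos rfl, Fin.castSucc_inj]
    simp only [ite_mul, zero_mul, Finset.sum_ite_eq', Finset.mem_univ, ite_true, hne',
      ite_false]

lemma injOn_Phi : Set.InjOn (Phi n) (S n) := by
  intro z hz z' hz' h
  have hsum : ∀ w : Fin (n + 1) → ℝ, ∑ i, Phi n w i = w (Fin.last n) := by
    intro w
    simp only [Phi, ← Finset.mul_sum, sum_xhat, mul_one]
  have ht : z (Fin.last n) = z' (Fin.last n) := by
    rw [← hsum z, ← hsum z', h]
  have htpos : 0 < z (Fin.last n) := hz.2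
  funext i
  induction i using Fin.lastCases with
  | last => exact ht
  | cast j =>
    have h1 : Phi n z (Fin.castSucc j) = Phi n z' (Fin.castSucc j) := by rw [h]
    simp only [Phi, xhat_castSucc] at h1
    rw [← ht] at h1
    exact mul_left_cancel₀ (ne_of_gt htpos) h1

lemma image_Phi : Phi n '' S n = {u : Fin (n + 1) → ℝ | ∀ i, 0 < u i} := by
  ext u
  constructor
  · rintro ⟨z, ⟨hy, ht⟩, rfl⟩ i
    exact mul_pos ht (xhat_pos hy i)
  · intro hu
    have ht : 0 < ∑ i, u i := Finset.sum_pos (fun i _ => hu i) Finset.univ_nonempty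
    refine ⟨Fin.snoc (fun j => u (Fin.castSucc j) / ∑ i, u i) (∑ i, u i), ⟨⟨?_, ?_⟩, ?_⟩, ?_⟩
    · intro j
      simp only [Fin.snoc_castSucc]
      exact div_pos (hu _) ht
    · simp only [Fin.snoc_castSucc]
      rw [← Finset.sum_div, div_lt_one ht]
      have := Fin.sum_univ_castSucc (f := u)
      have hl := hu (Fin.last n)
      linarith [this]
    · simp only [Fin.snoc_last]; exact ht
    · funext i
      induction i using Fin.lastCases with
      | last =>
        simp only [Phi, Fin.snoc_last, Fin.snoc_castSucc, xhat_last, ← Finset.sum_div]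
        rw [mul_sub, mul_one, mul_div_cancel₀ _ (ne_of_gt ht)]
        rw [Fin.sum_univ_castSucc (f := u)]
        ring
      | cast j =>
        simp only [Phi, Fin.snoc_last, Fin.snoc_castSucc, xhat_castSucc]
        exact mul_div_cancel₀ _ (ne_of_gt ht)

lemma measurableSet_Δ : MeasurableSet (Δ n) := by
  have h1 : Δ n = (⋂ j : Fin n, {y : Fin n → ℝ | 0 < y j}) ∩ {y | ∑ j, y j < 1} := by
    ext y
    simp only [Δ, Set.mem_inter_iff, Set.mem_iInter, Set.mem_setOf_eq]
  rw [h1]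
  refine (MeasurableSet.iInter fun j => ?_).inter ?_
  · exact measurableSet_lt measurable_const (measurable_pi_apply _)
  · exact measurableSet_lt (Finset.measurable_sum _ fun j _ => measurable_pi_apply j)
      measurable_const

lemma measurableSet_S : MeasurableSet (S n) := by
  have h1 : S n = (⋂ j : Fin n, {z : Fin (n+1) → ℝ | 0 < z (Fin.castSucc j)}) ∩
      ({z | ∑ j : Fin n, z (Fin.castSucc j) < 1} ∩ {z | 0 < z (Fin.last n)}) := by
    ext z
    simp only [S, Δ, Set.mem_inter_iff, Set.mem_iInter, Set.mem_setOf_eq, and_assoc]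
  rw [h1]
  refine (MeasurableSet.iInter fun j => ?_).inter (MeasurableSet.inter ?_ ?_)
  · exact measurableSet_lt measurable_const (measurable_pi_apply _)
  · exact measurableSet_lt (Finset.measurable_sum _ fun j _ => measurable_pi_apply j.castSucc)
      measurable_const
  · exact measurableSet_lt measurable_const (measurable_pi_apply _)

lemma measurableSet_orth : MeasurableSet {u : Fin (n + 1) → ℝ | ∀ i, 0 < u i} := by
  have h1 : {u : Fin (n + 1) → ℝ | ∀ i, 0 < u i} = ⋂ i, {u : Fin (n+1) → ℝ | 0 < u i} := by
    ext u; simp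
  rw [h1]
  exact MeasurableSet.iInter fun j =>
    measurableSet_lt measurable_const (measurable_pi_apply _)

lemma integral_g {c b : ℝ} (hc : -1 < c) (hb : 0 < b) :
    ∫ x in Ioi (0:ℝ), x ^ c * exp (-(b * x)) = Gamma (c + 1) / b ^ (c + 1) := by
  have h := integral_rpow_mul_exp_neg_mul_Ioi (by linarith : (0:ℝ) < c + 1) hb
  rw [add_sub_cancel_right] at h
  rw [h, div_rpow zero_le_one hb.le, one_rpow]
  ring

lemma integrableOn_g {c b : ℝ} (hc : -1 < c) (hb : 0 < b) :
    IntegrableOn (fun x => x ^ c * exp (-(b * x))) (Ioi 0) := by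
  have := integrableOn_rpow_mul_exp_neg_mul_rpow hc zero_lt_one hb
  simpa [rpow_one, neg_mul] using this

/-- The orthant integrand. -/
noncomputable def F (α β : Fin (n + 1) → ℝ) (u : Fin (n + 1) → ℝ) : ℝ :=
  (∑ j, u j) * ((∏ i, u i ^ (α i - 1)) * Real.exp (-∑ i, β i * u i))

/-- The one-variable factors. -/
noncomputable def gfun (α β : Fin (n + 1) → ℝ) (j i : Fin (n + 1)) : ℝ → ℝ :=
  fun x => x ^ (if i = j then α i else α i - 1) * Real.exp (-(β i * x))

lemma gamma_exponent_pos {α : Fin (n+1) → ℝ} (hα : ∀ i, 0 < α i) (j i : Fin (n+1)) :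
    -1 < (if i = j then α i else α i - 1) := by
  have := hα i; split <;> linarith

lemma prod_indicator (α β : Fin (n+1) → ℝ) (j : Fin (n + 1)) (u : Fin (n + 1) → ℝ) :
    ∏ i, Set.indicator (Ioi 0) (gfun α β j i) (u i)
      = Set.indicator {u : Fin (n + 1) → ℝ | ∀ i, 0 < u i}
          (fun u => ∏ i, gfun α β j i (u i)) u := by
  by_cases hu : ∀ i, 0 < u i
  · rw [Set.indicator_of_mem (show u ∈ {u : Fin (n+1) → ℝ | ∀ i, 0 < u i} from hu)]
    exact Finset.prod_congr rfl fun i _ => Set.indicator_of_mem (hu i) _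
  · rw [Set.indicator_of_notMem (show u ∉ {u : Fin (n+1) → ℝ | ∀ i, 0 < u i} from hu)]
    push_neg at hu
    obtain ⟨i₀, hi₀⟩ := hu
    refine Finset.prod_eq_zero (Finset.mem_univ i₀) ?_
    exact Set.indicator_of_notMem (by simpa using hi₀) _

lemma integrable_prod_ind {α β : Fin (n+1) → ℝ} (hα : ∀ i, 0 < α i) (hβ : ∀ i, 0 < β i)
    (j : Fin (n+1)) :
    Integrable (fun u : Fin (n + 1) → ℝ => ∏ i, Set.indicator (Ioi 0) (gfun α β j i) (u i)) :=
  Integrable.fintype_prod fun i => (integrable_indicator_iff measurableSet_Ioi).2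
    (integrableOn_g (gamma_exponent_pos hα j i) (hβ i))

lemma integral_ind {α β : Fin (n+1) → ℝ} (hα : ∀ i, 0 < α i) (hβ : ∀ i, 0 < β i)
    (j i : Fin (n+1)) :
    ∫ x, Set.indicator (Ioi 0) (gfun α β j i) x
      = (Gamma (α i) / β i ^ (α i)) * (if i = j then α i / β i else 1) := by
  rw [integral_indicator measurableSet_Ioi]
  have h : ∫ x in Ioi (0:ℝ), gfun α β j i x
      = Gamma ((if i = j then α i else α i - 1) + 1)
          / β i ^ ((if i = j then α i else α i - 1) + 1) := by
    simp only [gfun]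
    exact integral_g (gamma_exponent_pos hα j i) (hβ i)
  rw [h]
  rcases eq_or_ne i j with rfl | hij
  · rw [if_pos rfl, if_pos rfl, Gamma_add_one (hα i).ne', rpow_add_one (hβ i).ne']
    have h1 : (0:ℝ) < β i ^ (α i) := rpow_pos_of_pos (hβ i) _
    field_simp
  · rw [if_neg hij, if_neg hij, sub_add_cancel, mul_one]

lemma orth_integrableOn {α β : Fin (n+1) → ℝ} (hα : ∀ i, 0 < α i) (hβ : ∀ i, 0 < β i)
    (j : Fin (n+1)) :
    IntegrableOn (fun u => ∏ i, gfun α β j i (u i)) {u : Fin (n + 1) → ℝ | ∀ i, 0 < u i} := by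
  have h := integrable_prod_ind hα hβ j
  rw [show (fun u : Fin (n+1) → ℝ => ∏ i, Set.indicator (Ioi 0) (gfun α β j i) (u i))
      = Set.indicator {u : Fin (n + 1) → ℝ | ∀ i, 0 < u i}
          (fun u => ∏ i, gfun α β j i (u i)) from funext (prod_indicator α β j)] at h
  exact (integrable_indicator_iff measurableSet_orth).1 h

lemma F_eq_sum {α β : Fin (n+1) → ℝ} (hα : ∀ i, 0 < α i) :
    ∀ u ∈ {u : Fin (n + 1) → ℝ | ∀ i, 0 < u i},
      F α β u = ∑ j, ∏ i, gfun α β j i (u i) := by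
  intro u hu
  have hu' : ∀ i, 0 < u i := hu
  have key : ∀ j : Fin (n+1), ∏ i, gfun α β j i (u i)
      = u j * ((∏ i, u i ^ (α i - 1)) * Real.exp (-∑ i, β i * u i)) := by
    intro j
    have h1 : ∀ i : Fin (n+1), gfun α β j i (u i)
        = (u i ^ (α i - 1) * (if i = j then u i else 1)) * Real.exp (-(β i * u i)) := by
      intro i
      simp only [gfun]
      congr 1
      rcases eq_or_ne i j with rfl | hij
      · rw [if_pos rfl, if_pos rfl]
        conv_lhs => rw [show α i = (α i - 1) + 1 by ring]
        rw [rpow_add_one (hu' i).ne']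
      · rw [if_neg hij, if_neg hij, mul_one]
    rw [Finset.prod_congr rfl (fun i _ => h1 i), Finset.prod_mul_distrib,
      Finset.prod_mul_distrib, Finset.prod_ite_eq' Finset.univ j, if_pos (Finset.mem_univ j),
      ← Real.exp_sum]
    rw [show ∑ i, -(β i * u i) = -∑ i, β i * u i by rw [← Finset.sum_neg_distrib]]
    ring
  rw [F, Finset.sum_mul]
  exact Finset.sum_congr rfl fun j _ => (key j).symm

lemma orth_integrable {α β : Fin (n+1) → ℝ} (hα : ∀ i, 0 < α i) (hβ : ∀ i, 0 < β i) :
    IntegrableOn (F α β) {u : Fin (n + 1) → ℝ | ∀ i, 0 < u i} := by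
  refine IntegrableOn.congr_fun ?_ (fun u hu => (F_eq_sum hα u hu).symm) measurableSet_orth
  exact integrable_finset_sum _ fun j _ => orth_integrableOn hα hβ j

lemma orth_integral {α β : Fin (n+1) → ℝ} (hα : ∀ i, 0 < α i) (hβ : ∀ i, 0 < β i) :
    ∫ u in {u : Fin (n + 1) → ℝ | ∀ i, 0 < u i}, F α β u
      = (∏ i, Gamma (α i) / β i ^ (α i)) * (∑ j, α j / β j) := by
  rw [setIntegral_congr_fun measurableSet_orth (F_eq_sum hα)]
  rw [integral_finset_sum _ fun j _ => orth_integrableOn hα hβ j]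
  have hj : ∀ j : Fin (n+1), ∫ u in {u : Fin (n + 1) → ℝ | ∀ i, 0 < u i},
      ∏ i, gfun α β j i (u i) = (∏ i, Gamma (α i) / β i ^ (α i)) * (α j / β j) := by
    intro j
    rw [← integral_indicator measurableSet_orth]
    rw [show Set.indicator {u : Fin (n + 1) → ℝ | ∀ i, 0 < u i}
          (fun u => ∏ i, gfun α β j i (u i))
        = (fun u : Fin (n+1) → ℝ => ∏ i, Set.indicator (Ioi 0) (gfun α β j i) (u i)) from
      (funext (prod_indicator α β j)).symm]
    rw [MeasureTheory.integral_fintype_prod_volume_eq_prod (ι := Fin (n+1))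
      (fun i => Set.indicator (Ioi 0) (gfun α β j i))]
    rw [Finset.prod_congr rfl (fun i _ => integral_ind hα hβ j i), Finset.prod_mul_distrib,
      Finset.prod_ite_eq' Finset.univ j, if_pos (Finset.mem_univ j)]
  rw [Finset.sum_congr rfl (fun j _ => hj j), ← Finset.mul_sum]

lemma det_CLM (z : Fin (n + 1) → ℝ) :
    ((Matrix.toLin' (Mmat n z)).toContinuousLinearMap).det = z (Fin.last n) ^ n := by
  rw [ContinuousLinearMap.det, LinearMap.coe_toContinuousLinearMap, LinearMap.det_toLin',
    det_Mmat]

lemma cov_integral {α β : Fin (n+1) → ℝ} (hα : ∀ i, 0 < α i) (hβ : ∀ i, 0 < β i) :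
    ∫ z in S n, |z (Fin.last n) ^ n| * F α β (Phi n z)
      = (∏ i, Gamma (α i) / β i ^ (α i)) * (∑ j, α j / β j) := by
  have h := integral_image_eq_integral_abs_det_fderiv_smul volume measurableSet_S
    (fun z _ => (hasFDerivAt_Phi z).hasFDerivWithinAt) injOn_Phi (F α β)
  rw [image_Phi, orth_integral hα hβ] at h
  simp only [det_CLM, smul_eq_mul] at h
  exact h.symm

lemma cov_integrableOn {α β : Fin (n+1) → ℝ} (hα : ∀ i, 0 < α i) (hβ : ∀ i, 0 < β i) :
    IntegrableOn (fun z => |z (Fin.last n) ^ n| * F α β (Phi n z)) (S n) := by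
  have h := (integrableOn_image_iff_integrableOn_abs_det_fderiv_smul volume measurableSet_S
    (fun z _ => (hasFDerivAt_Phi z).hasFDerivWithinAt) injOn_Phi (F α β)).1
  have h2 := h (by rw [image_Phi]; exact orth_integrable hα hβ)
  simpa only [det_CLM, smul_eq_mul] using h2

lemma snoc_mem_S_iff {y : Fin n → ℝ} {t : ℝ} :
    Fin.snoc y t ∈ S n ↔ y ∈ Δ n ∧ t ∈ Ioi (0:ℝ) := by
  have h1 : (fun j => (Fin.snoc y t : Fin (n+1) → ℝ) (Fin.castSucc j)) = y := by
    funext j; simp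
  simp only [S, Set.mem_setOf_eq, h1, Fin.snoc_last, mem_Ioi]

lemma fubini_step {α β : Fin (n+1) → ℝ} (hα : ∀ i, 0 < α i) (hβ : ∀ i, 0 < β i) :
    ∫ z in S n, |z (Fin.last n) ^ n| * F α β (Phi n z)
      = ∫ y in Δ n, ∫ t in Ioi (0:ℝ), |t ^ n| * F α β (Phi n (Fin.snoc y t)) := by
  set H : (Fin (n+1) → ℝ) → ℝ := fun z => |z (Fin.last n) ^ n| * F α β (Phi n z) with hH
  have hmp := (volume_preserving_piFinSuccAbove (fun _ : Fin (n+1) => ℝ) (Fin.last n)).symm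
  have hsnoc : ∀ p : ℝ × (Fin n → ℝ),
      (MeasurableEquiv.piFinSuccAbove (fun _ : Fin (n+1) => ℝ) (Fin.last n)).symm p
        = Fin.snoc p.2 p.1 := by
    intro p
    simp only [MeasurableEquiv.piFinSuccAbove_symm_apply, Fin.insertNthEquiv,
      Equiv.coe_fn_mk, Fin.insertNth_last']
  have h0 : Integrable (Set.indicator (S n) H) :=
    (integrable_indicator_iff measurableSet_S).2 (cov_integrableOn hα hβ)
  have h1 : Integrable (fun p : ℝ × (Fin n → ℝ) => Set.indicator (S n) H
      (Fin.snoc p.2 p.1)) := by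
    have := (hmp.integrable_comp_emb (MeasurableEquiv.measurableEmbedding _)).2 h0
    simpa only [Function.comp_def, hsnoc] using this
  have hstep1 : ∫ z in S n, H z = ∫ p : ℝ × (Fin n → ℝ),
      Set.indicator (S n) H (Fin.snoc p.2 p.1) := by
    rw [← integral_indicator measurableSet_S, ← hmp.integral_comp']
    refine integral_congr_ae (Filter.Eventually.of_forall fun p => ?_)
    simp only [hsnoc]
  rw [hstep1]
  rw [show (volume : Measure (ℝ × (Fin n → ℝ))) = (volume : Measure ℝ).prod volume from rfl]
    at h1 ⊢
  rw [integral_prod_symm _ h1]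
  have hinner : ∀ y : Fin n → ℝ, (∫ t : ℝ, Set.indicator (S n) H (Fin.snoc y t))
      = Set.indicator (Δ n) (fun y => ∫ t in Ioi (0:ℝ), H (Fin.snoc y t)) y := by
    intro y
    by_cases hy : y ∈ Δ n
    · rw [Set.indicator_of_mem hy]
      have : ∀ t : ℝ, Set.indicator (S n) H (Fin.snoc y t)
          = Set.indicator (Ioi (0:ℝ)) (fun t => H (Fin.snoc y t)) t := by
        intro t
        by_cases ht : t ∈ Ioi (0:ℝ)
        · rw [Set.indicator_of_mem ht, Set.indicator_of_mem (snoc_mem_S_iff.2 ⟨hy, ht⟩)]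
        · rw [Set.indicator_of_notMem ht,
            Set.indicator_of_notMem (fun hm => ht (snoc_mem_S_iff.1 hm).2)]
      rw [integral_congr_ae (Filter.Eventually.of_forall this),
        integral_indicator measurableSet_Ioi]
    · rw [Set.indicator_of_notMem hy]
      have : ∀ t : ℝ, Set.indicator (S n) H (Fin.snoc y t) = 0 := fun t =>
        Set.indicator_of_notMem (fun hm => hy (snoc_mem_S_iff.1 hm).1) _
      rw [integral_congr_ae (Filter.Eventually.of_forall this), integral_zero]
  rw [integral_congr_ae (Filter.Eventually.of_forall hinner),
    integral_indicator measurableSet_Δ]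
  simp only [hH, Fin.snoc_last]

lemma inner_integral {α β : Fin (n+1) → ℝ} (hα : ∀ i, 0 < α i) (hβ : ∀ i, 0 < β i)
    {y : Fin n → ℝ} (hy : y ∈ Δ n) :
    ∫ t in Ioi (0:ℝ), |t ^ n| * F α β (Phi n (Fin.snoc y t))
      = Gamma ((∑ i, α i) + 1) * ((∏ i, xhat n y i ^ (α i - 1)) *
          (∑ j, β j * xhat n y j) ^ (-((∑ i, α i) + 1))) := by
  have hx : ∀ i, 0 < xhat n y i := xhat_pos hy
  set c := ∑ j, β j * xhat n y j with hc
  have hcpos : 0 < c := Finset.sum_pos (fun j _ => mul_pos (hβ j) (hx j)) Finset.univ_nonempty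
  have hs : 0 < ∑ i, α i := Finset.sum_pos (fun i _ => hα i) Finset.univ_nonempty
  have hptwise : ∀ t ∈ Ioi (0:ℝ), |t ^ n| * F α β (Phi n (Fin.snoc y t))
      = (∏ i, xhat n y i ^ (α i - 1)) * (t ^ (∑ i, α i) * Real.exp (-(c * t))) := by
    intro t ht
    have ht' : (0:ℝ) < t := ht
    have hPhi : Phi n (Fin.snoc y t) = fun i => t * xhat n y i := by
      funext i
      have harg : (fun j => (Fin.snoc y t : Fin (n+1) → ℝ) (Fin.castSucc j)) = y := by
        funext j; simp
      simp only [Phi, Fin.snoc_last, harg]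
    rw [hPhi]
    simp only [F]
    have habs : |t ^ n| = t ^ (n:ℝ) := by
      rw [abs_of_pos (pow_pos ht' n), ← Real.rpow_natCast]
    have h1 : ∑ j, t * xhat n y j = t := by rw [← Finset.mul_sum, sum_xhat, mul_one]
    have h2 : ∀ i, (t * xhat n y i) ^ (α i - 1) = t ^ (α i - 1) * xhat n y i ^ (α i - 1) :=
      fun i => Real.mul_rpow ht'.le (hx i).le
    have h3 : ∑ i, β i * (t * xhat n y i) = c * t := by
      rw [Finset.sum_congr rfl (fun i _ => show β i * (t * xhat n y i)
        = t * (β i * xhat n y i) by ring), ← Finset.mul_sum, ← hc, mul_comm]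
    have hsum : ∑ i : Fin (n+1), (α i - 1) = (∑ i, α i) - (n+1:ℝ) := by
      rw [Finset.sum_sub_distrib, Finset.sum_const, Finset.card_univ, Fintype.card_fin]
      push_cast; ring
    rw [habs, h1, Finset.prod_congr rfl (fun i _ => h2 i), Finset.prod_mul_distrib, h3,
      ← Real.rpow_sum_of_pos ht', hsum]
    have e1 : t ^ (n:ℝ) * (t ^ (1:ℝ) * t ^ ((∑ i, α i) - (n+1:ℝ))) = t ^ (∑ i, α i) := by
      rw [← Real.rpow_add ht', ← Real.rpow_add ht']
      congr 1
      push_cast; ring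
    calc t ^ (n:ℝ) * (t * ((t ^ ((∑ i, α i) - (n+1:ℝ)) * ∏ i, xhat n y i ^ (α i - 1)) *
          Real.exp (-(c * t))))
        = (t ^ (n:ℝ) * (t ^ (1:ℝ) * t ^ ((∑ i, α i) - (n+1:ℝ)))) *
            ((∏ i, xhat n y i ^ (α i - 1)) * Real.exp (-(c * t))) := by
          rw [Real.rpow_one]; ring
      _ = (∏ i, xhat n y i ^ (α i - 1)) * (t ^ (∑ i, α i) * Real.exp (-(c * t))) := by
          rw [e1]; ring
  rw [setIntegral_congr_fun measurableSet_Ioi hptwise, integral_const_mul,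
    integral_g (by linarith : (-1:ℝ) < ∑ i, α i) hcpos, Real.rpow_neg hcpos.le,
    div_eq_mul_inv]
  ring

end SDI

open SDI

/-- Schlömilch's differentiated integral. -/
theorem schlomilch_differentiated_integral (K : ℕ) (hK : 2 ≤ K) (α β : Fin K → ℝ)
    (hα : ∀ i, 0 < α i) (hβ : ∀ i, 0 < β i) :
    simplexIntegral K (fun x =>
        (∏ i, x i ^ (α i - 1)) * (∑ j, β j * x j) ^ (-((∑ i, α i) + 1))) =
      ((∏ i, Gamma (α i)) / (Gamma ((∑ i, α i) + 1) * ∏ j, β j ^ (α j))) *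
        ∑ i, α i / β i := by
  obtain ⟨n, rfl⟩ : ∃ n, K = n + 1 := ⟨K - 1, by omega⟩
  have hs : 0 < ∑ i, α i := Finset.sum_pos (fun i _ => hα i) Finset.univ_nonempty
  have hΓpos : 0 < Gamma ((∑ i, α i) + 1) := Gamma_pos_of_pos (by linarith)
  have hsi : simplexIntegral (n+1) (fun x =>
      (∏ i, x i ^ (α i - 1)) * (∑ j, β j * x j) ^ (-((∑ i, α i) + 1)))
      = ∫ y in Δ n, (∏ i, xhat n y i ^ (α i - 1)) *
          (∑ j, β j * xhat n y j) ^ (-((∑ i, α i) + 1)) := rfl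
  have key : ∫ z in S n, |z (Fin.last n) ^ n| * F α β (Phi n z)
      = Gamma ((∑ i, α i) + 1) * ∫ y in Δ n, (∏ i, xhat n y i ^ (α i - 1)) *
          (∑ j, β j * xhat n y j) ^ (-((∑ i, α i) + 1)) := by
    rw [fubini_step hα hβ,
      setIntegral_congr_fun measurableSet_Δ (fun y hy => inner_integral hα hβ hy),
      integral_const_mul]
  rw [cov_integral hα hβ] at key
  rw [hsi]
  have hX : (∫ y in Δ n, (∏ i, xhat n y i ^ (α i - 1)) *
      (∑ j, β j * xhat n y j) ^ (-((∑ i, α i) + 1)))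
      = ((∏ i, Gamma (α i) / β i ^ (α i)) * ∑ j, α j / β j) / Gamma ((∑ i, α i) + 1) := by
    rw [eq_div_iff hΓpos.ne', mul_comm]
    exact key.symm
  rw [hX, Finset.prod_div_distrib]
  have hβprod : (0:ℝ) < ∏ j, β j ^ (α j) :=
    Finset.prod_pos fun j _ => rpow_pos_of_pos (hβ j) _
  have hne1 := hΓpos.ne'
  have hne2 := hβprod.ne'
  field_simp
end

section
/- Normalization of the Schlömilch distribution S(α, β, τ): Let K ≥ 2 be an integer, α, β ∈ ℝ^K with α_i > 0 and β_i > 0, and τ > 0. Then ∫_{S_K} (∏_{i=1}^K x_i^{τ α_i − 1}) · (∑_{j=1}^K β_j x_j^τ)^{−α_+} d^{K−1}x = (∏_{i=1}^K Γ(α_i)) / (τ^{K−1} · Γ(α_+) · ∏_{i=1}^K β_i^{α_i}). -/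
open MeasureTheory Real

open Set

namespace Schlomilch

variable {m : ℕ}

/-- The extension of a point of the open simplex in `ℝ^m` to `ℝ^(m+1)`. -/
def emb (m : ℕ) (y : Fin m → ℝ) : Fin (m + 1) → ℝ := fun i =>
  if h : (i : ℕ) < m then y ⟨(i : ℕ), h⟩ else 1 - ∑ j, y j

/-- The "cone over the simplex" coordinates map. -/
def Tmap (m : ℕ) (z : Fin (m + 1) → ℝ) : Fin (m + 1) → ℝ := fun i =>
  if (i : ℕ) < m then z (Fin.last m) * z i
  else z (Fin.last m) * (1 - ∑ j : Fin m, z j.castSucc)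

def Umat (m : ℕ) (z : Fin (m + 1) → ℝ) : Matrix (Fin (m + 1)) (Fin (m + 1)) ℝ := fun i j =>
  if (i : ℕ) < m then (if j = i then z (Fin.last m) else if j = Fin.last m then z i else 0)
  else (if j = Fin.last m then 1 else 0)

def Lmat (m : ℕ) : Matrix (Fin (m + 1)) (Fin (m + 1)) ℝ := fun i j =>
  if (i : ℕ) < m then (if j = i then 1 else 0)
  else (if j = Fin.last m then 1 else -1)

lemma eq_last_of_not_lt {i : Fin (m + 1)} (h : ¬ (i : ℕ) < m) : i = Fin.last m :=
  Fin.ext (by have := i.isLt; simp [Fin.val_last]; omega)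

lemma Umat_mulVec (z v : Fin (m + 1) → ℝ) (i : Fin (m + 1)) :
    (Umat m z).mulVec v i =
      if (i : ℕ) < m then z (Fin.last m) * v i + z i * v (Fin.last m) else v (Fin.last m) := by
  classical
  rw [Matrix.mulVec, dotProduct]
  by_cases h : (i : ℕ) < m
  · have hi : i ≠ Fin.last m := by
      intro hh; rw [hh, Fin.val_last] at h; omega
    simp only [Umat, if_pos h]
    have : ∀ j, (if j = i then z (Fin.last m) else if j = Fin.last m then z i else 0) * v j
        = (if j = i then z (Fin.last m) * v i else 0)
          + (if j = Fin.last m then z i * v (Fin.last m) else 0) := by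
      intro j
      rcases eq_or_ne j i with rfl | h1
      · simp [hi]
      · by_cases h2 : j = Fin.last m <;> simp [h1, h2, Ne.symm hi]
    rw [Finset.sum_congr rfl fun j _ => this j, Finset.sum_add_distrib]
    simp [Finset.sum_ite_eq', h]
  · simp only [Umat, if_neg h]
    have : ∀ j, (if j = Fin.last m then (1:ℝ) else 0) * v j
        = (if j = Fin.last m then v (Fin.last m) else 0) := by
      intro j; by_cases h2 : j = Fin.last m <;> simp [h2]
    rw [Finset.sum_congr rfl fun j _ => this j]
    simp [Finset.sum_ite_eq', h]

lemma Lmat_mulVec (w : Fin (m + 1) → ℝ) (i : Fin (m + 1)) :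
    (Lmat m).mulVec w i =
      if (i : ℕ) < m then w i else w (Fin.last m) - ∑ k : Fin m, w k.castSucc := by
  classical
  rw [Matrix.mulVec, dotProduct]
  by_cases h : (i : ℕ) < m
  · simp only [Lmat, if_pos h]
    have : ∀ j, (if j = i then (1:ℝ) else 0) * w j = (if j = i then w i else 0) := by
      intro j; by_cases h2 : j = i <;> simp [h2]
    rw [Finset.sum_congr rfl fun j _ => this j]
    simp [Finset.sum_ite_eq', h]
  · simp only [Lmat, if_neg h]
    rw [Fin.sum_univ_castSucc]
    have : ∀ k : Fin m, (if k.castSucc = Fin.last m then (1:ℝ) else -1) * w k.castSucc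
        = - w k.castSucc := by
      intro k
      simp [(Fin.castSucc_lt_last k).ne]
    rw [Finset.sum_congr rfl fun k _ => this k]
    simp [h, Finset.sum_neg_distrib]
    try ring


lemma upperTriangular_Umat (z : Fin (m + 1) → ℝ) : (Umat m z).BlockTriangular id := by
  intro i j hji
  simp only [id_eq] at hji
  unfold Umat
  by_cases h : (i : ℕ) < m
  · rw [if_pos h, if_neg hji.ne, if_neg]
    intro hj
    exact absurd (hj ▸ hji) (by simp [Fin.lt_iff_val_lt_val, Fin.val_last]; omega)
  · rw [if_neg h, if_neg]
    intro hj
    rw [eq_last_of_not_lt h] at hji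
    exact absurd (hj ▸ hji) (lt_irrefl _)

lemma lowerTriangular_Lmat : (Lmat m).BlockTriangular OrderDual.toDual := by
  intro i j hji
  have hij : i < j := hji
  unfold Lmat
  by_cases h : (i : ℕ) < m
  · rw [if_pos h, if_neg hij.ne']
  · exact absurd hij (by rw [eq_last_of_not_lt h]; exact not_lt.2 (Fin.le_last j))

lemma det_Umat (z : Fin (m + 1) → ℝ) : (Umat m z).det = z (Fin.last m) ^ m := by
  rw [Matrix.det_of_upperTriangular (upperTriangular_Umat z)]
  rw [Fin.prod_univ_castSucc]
  have h1 : ∀ k : Fin m, Umat m z k.castSucc k.castSucc = z (Fin.last m) := by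
    intro k
    simp [Umat, k.is_lt]
  rw [Finset.prod_congr rfl fun k _ => h1 k]
  simp [Umat]

lemma det_Lmat : (Lmat m).det = 1 := by
  rw [Matrix.det_of_lowerTriangular _ lowerTriangular_Lmat]
  have h1 : ∀ i : Fin (m + 1), Lmat m i i = 1 := by
    intro i
    by_cases h : (i : ℕ) < m
    · simp [Lmat, h]
    · simp [Lmat, h, eq_last_of_not_lt h]
  rw [Finset.prod_congr rfl fun i _ => h1 i]
  simp

/-- The derivative of `Tmap` as a continuous linear map. -/
noncomputable def Dmap (m : ℕ) (z : Fin (m + 1) → ℝ) :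
    (Fin (m + 1) → ℝ) →L[ℝ] (Fin (m + 1) → ℝ) :=
  LinearMap.toContinuousLinearMap (Matrix.toLin' (Lmat m * Umat m z))

lemma det_Dmap (z : Fin (m + 1) → ℝ) : (Dmap m z).det = z (Fin.last m) ^ m := by
  rw [ContinuousLinearMap.det, Dmap]
  rw [LinearMap.coe_toContinuousLinearMap, LinearMap.det_toLin', Matrix.det_mul, det_Lmat,
    det_Umat, one_mul]

lemma Dmap_apply (z v : Fin (m + 1) → ℝ) (i : Fin (m + 1)) :
    Dmap m z v i =
      if (i : ℕ) < m then z (Fin.last m) * v i + z i * v (Fin.last m)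
      else v (Fin.last m) - ∑ k : Fin m,
        (z (Fin.last m) * v k.castSucc + z k.castSucc * v (Fin.last m)) := by
  have : Dmap m z v = (Lmat m).mulVec ((Umat m z).mulVec v) := by
    simp [Dmap, Matrix.toLin'_apply, Matrix.mulVec_mulVec]
  rw [this, Lmat_mulVec]
  by_cases h : (i : ℕ) < m
  · rw [if_pos h, if_pos h, Umat_mulVec, if_pos h]
  · rw [if_neg h, if_neg h]
    have h1 : (Umat m z).mulVec v (Fin.last m) = v (Fin.last m) := by
      rw [Umat_mulVec, if_neg (by simp)]
    have h2 : (∑ k : Fin m, (Umat m z).mulVec v k.castSucc) =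
        ∑ k : Fin m, (z (Fin.last m) * v k.castSucc + z k.castSucc * v (Fin.last m)) := by
      refine Finset.sum_congr rfl fun k _ => ?_
      rw [Umat_mulVec, if_pos (by simp [k.is_lt])]
    rw [h1, h2]

lemma hasFDerivAt_Tmap (z : Fin (m + 1) → ℝ) : HasFDerivAt (Tmap m) (Dmap m z) z := by
  rw [hasFDerivAt_pi']
  intro i
  by_cases h : (i : ℕ) < m
  · have hfun : (fun z : Fin (m + 1) → ℝ => Tmap m z i)
        = fun z : Fin (m + 1) → ℝ => z (Fin.last m) * z i := by
      funext w; simp [Tmap, h]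
    rw [hfun]
    have H := (hasFDerivAt_apply (𝕜 := ℝ) (Fin.last m) z).mul (hasFDerivAt_apply (𝕜 := ℝ) i z)
    refine H.congr_fderiv ?_
    ext v
    simp [Dmap_apply, h, ContinuousLinearMap.proj]
    try ring
  · have hfun : (fun z : Fin (m + 1) → ℝ => Tmap m z i)
        = fun z : Fin (m + 1) → ℝ =>
            z (Fin.last m) * (1 - ∑ j : Fin m, z j.castSucc) := by
      funext w; simp [Tmap, h]
    rw [hfun]
    have Hsum : HasFDerivAt (fun z : Fin (m + 1) → ℝ => ∑ j : Fin m, z j.castSucc)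
        (∑ j : Fin m, ContinuousLinearMap.proj (R := ℝ) (φ := fun _ : Fin (m+1) => ℝ)
          j.castSucc) z :=
      HasFDerivAt.fun_sum fun j _ => hasFDerivAt_apply (𝕜 := ℝ) j.castSucc z
    have H := (hasFDerivAt_apply (𝕜 := ℝ) (Fin.last m) z).mul
      ((hasFDerivAt_const (1:ℝ) z).sub Hsum)
    refine H.congr_fderiv ?_
    ext v
    simp [Dmap_apply, h, ContinuousLinearMap.proj, Finset.mul_sum, Finset.sum_add_distrib,
      Finset.sum_sub_distrib, ← Finset.sum_mul]
    try ring


def simplexCone (m : ℕ) : Set (Fin (m + 1) → ℝ) :=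
  {z | (∀ j : Fin m, 0 < z j.castSucc) ∧ (∑ j : Fin m, z j.castSucc) < 1 ∧ 0 < z (Fin.last m)}

lemma measurableSet_simplexCone (m : ℕ) : MeasurableSet (simplexCone m) := by
  have h1 : simplexCone m = (⋂ j : Fin m, {z : Fin (m+1) → ℝ | 0 < z j.castSucc}) ∩
      ({z : Fin (m+1) → ℝ | (∑ j : Fin m, z j.castSucc) < 1} ∩
        {z : Fin (m+1) → ℝ | 0 < z (Fin.last m)}) := by
    ext z; simp [simplexCone, Set.mem_iInter, and_assoc]
  rw [h1]
  refine (MeasurableSet.iInter fun j =>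
      measurableSet_lt measurable_const (measurable_pi_apply _)).inter
    ((measurableSet_lt (Finset.measurable_sum
          (f := fun (j : Fin m) (z : Fin (m + 1) → ℝ) => z j.castSucc)
          Finset.univ fun j _ => measurable_pi_apply _)
        measurable_const).inter
      (measurableSet_lt measurable_const (measurable_pi_apply _)))

lemma Tmap_castSucc (z : Fin (m + 1) → ℝ) (j : Fin m) :
    Tmap m z j.castSucc = z (Fin.last m) * z j.castSucc := by
  simp [Tmap, j.is_lt]

lemma Tmap_last (z : Fin (m + 1) → ℝ) :
    Tmap m z (Fin.last m) = z (Fin.last m) * (1 - ∑ j : Fin m, z j.castSucc) := by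
  simp [Tmap]

lemma sum_Tmap (z : Fin (m + 1) → ℝ) : ∑ i, Tmap m z i = z (Fin.last m) := by
  rw [Fin.sum_univ_castSucc, Tmap_last, Finset.sum_congr rfl fun j _ => Tmap_castSucc z j,
    ← Finset.mul_sum]
  ring

lemma injOn_Tmap (m : ℕ) : Set.InjOn (Tmap m) (simplexCone m) := by
  intro z hz w hw hzw
  have hr : z (Fin.last m) = w (Fin.last m) := by
    rw [← sum_Tmap z, ← sum_Tmap w, hzw]
  have hrpos : 0 < z (Fin.last m) := hz.2.2
  funext i
  by_cases h : (i : ℕ) < m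
  · have hcast : i = (⟨(i : ℕ), h⟩ : Fin m).castSucc := by
      ext; simp
    have h1 : Tmap m z i = Tmap m w i := by rw [hzw]
    rw [hcast] at h1 ⊢
    rw [Tmap_castSucc, Tmap_castSucc, ← hr] at h1
    exact mul_left_cancel₀ hrpos.ne' h1
  · rw [eq_last_of_not_lt h, hr]

lemma image_Tmap (m : ℕ) :
    Tmap m '' simplexCone m = {x : Fin (m + 1) → ℝ | ∀ i, 0 < x i} := by
  ext x
  constructor
  · rintro ⟨z, ⟨hz1, hz2, hz3⟩, rfl⟩
    intro i
    by_cases h : (i : ℕ) < m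
    · have hcast : i = (⟨(i : ℕ), h⟩ : Fin m).castSucc := by ext; simp
      rw [hcast, Tmap_castSucc]
      exact mul_pos hz3 (hz1 _)
    · rw [eq_last_of_not_lt h, Tmap_last]
      exact mul_pos hz3 (by linarith)
  · intro hx
    have hr : 0 < ∑ i, x i := Finset.sum_pos (fun i _ => hx i) Finset.univ_nonempty
    set S := ∑ i, x i with hS
    set z : Fin (m + 1) → ℝ := fun i => if (i : ℕ) < m then x i / S else S with hzdef
    have hzc : ∀ j : Fin m, z j.castSucc = x j.castSucc / S := by
      intro j; simp [hzdef, j.is_lt]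
    have hzl : z (Fin.last m) = S := by simp [hzdef]
    refine ⟨z, ⟨?_, ?_, ?_⟩, ?_⟩
    · intro j; rw [hzc]; exact div_pos (hx _) hr
    · rw [Finset.sum_congr rfl fun j _ => hzc j, ← Finset.sum_div, div_lt_one hr, hS,
        Fin.sum_univ_castSucc]
      have := hx (Fin.last m)
      linarith
    · rw [hzl]; exact hr
    · funext i
      by_cases h : (i : ℕ) < m
      · have hcast : i = (⟨(i : ℕ), h⟩ : Fin m).castSucc := by ext; simp
        rw [hcast, Tmap_castSucc, hzl, hzc]
        field_simp
      · rw [eq_last_of_not_lt h, Tmap_last, hzl, Finset.sum_congr rfl fun j _ => hzc j,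
          ← Finset.sum_div, mul_sub, mul_one, mul_div_cancel₀ _ hr.ne', hS,
          Fin.sum_univ_castSucc]
        ring

lemma Tmap_eq_emb (z : Fin (m + 1) → ℝ) (i : Fin (m + 1)) :
    Tmap m z i = z (Fin.last m) * emb m (fun j => z j.castSucc) i := by
  by_cases h : (i : ℕ) < m
  · simp only [Tmap, emb, if_pos h, dif_pos h]
    rfl
  · simp only [Tmap, emb, if_neg h, dif_neg h]

lemma emb_pos {y : Fin m → ℝ} (hy1 : ∀ i, 0 < y i) (hy2 : ∑ i, y i < 1) (i : Fin (m + 1)) :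
    0 < emb m y i := by
  unfold emb
  by_cases h : (i : ℕ) < m
  · rw [dif_pos h]; exact hy1 _
  · rw [dif_neg h]; linarith


lemma integrableOn_rpow_mul_exp_neg_mul_rpow' {p q b : ℝ} (hp : 0 < p) (hq : -1 < q)
    (hb : 0 < b) : IntegrableOn (fun x : ℝ => x ^ q * exp (-b * x ^ p)) (Ioi 0) := by
  have h1 : IntegrableOn (fun x : ℝ => x ^ q * exp (-x ^ p)) (Ioi 0) := by
    have hs : 0 < (q + 1) / p := div_pos (by linarith) hp
    have h0 := Real.GammaIntegral_convergent hs
    rw [← integrableOn_Ioi_comp_rpow_iff _ hp.ne'] at h0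
    have h2 := h0.smul (|p|⁻¹)
    refine IntegrableOn.congr_fun h2 (fun x hx => ?_) measurableSet_Ioi
    have hx0 : (0:ℝ) < x := hx
    have hxp : (0:ℝ) < x ^ p := rpow_pos_of_pos hx0 p
    simp only [smul_eq_mul, Pi.smul_apply]
    rw [← mul_assoc |p|⁻¹, ← mul_assoc |p|⁻¹, inv_mul_cancel₀ (by positivity : |p| ≠ 0), one_mul,
      ← Real.rpow_mul hx0.le p ((q + 1) / p - 1),
      show p * ((q + 1) / p - 1) = q + 1 - p by field_simp,
      mul_comm (rexp (-x ^ p)), ← mul_assoc, ← Real.rpow_add hx0,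
      show p - 1 + (q + 1 - p) = q by ring]
  have hib : 0 < b ^ (-p⁻¹) := rpow_pos_of_pos hb _
  suffices h : IntegrableOn
      (fun x : ℝ => (b ^ (-p⁻¹)) ^ q * (x ^ q * exp (-x ^ p))) (Ioi 0) by
    rw [show (0:ℝ) = b ^ (-p⁻¹) * 0 by rw [mul_zero],
      ← integrableOn_Ioi_comp_mul_left_iff _ _ hib]
    refine h.congr_fun (fun x hx => ?_) measurableSet_Ioi
    beta_reduce
    rw [← mul_assoc, mul_rpow, mul_rpow, ← Real.rpow_mul (z := p), neg_mul, neg_mul,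
      inv_mul_cancel₀, rpow_neg_one, mul_inv_cancel_left₀]
    all_goals linarith [mem_Ioi.mp hx]
  exact (h1.const_mul _)


lemma measurableSet_simplex (m : ℕ) :
    MeasurableSet {y : Fin m → ℝ | (∀ i, 0 < y i) ∧ ∑ i, y i < 1} := by
  have h1 : {y : Fin m → ℝ | (∀ i, 0 < y i) ∧ ∑ i, y i < 1}
      = (⋂ i, {y : Fin m → ℝ | 0 < y i}) ∩ {y : Fin m → ℝ | ∑ i, y i < 1} := by
    ext y; simp [Set.mem_iInter]
  rw [h1]
  exact (MeasurableSet.iInter fun i => measurableSet_lt measurable_const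
      (measurable_pi_apply _)).inter
    (measurableSet_lt (Finset.measurable_sum (f := fun (i : Fin m) (y : Fin m → ℝ) => y i)
      Finset.univ fun i _ => measurable_pi_apply _) measurable_const)

end Schlomilch

open Schlomilch

/-- Normalization of the Schlömilch distribution `S(α, β, τ)`. -/
theorem schlomilch_distribution_normalization (K : ℕ) (hK : 2 ≤ K) (α β : Fin K → ℝ)
    (hα : ∀ i, 0 < α i) (hβ : ∀ i, 0 < β i) (τ : ℝ) (hτ : 0 < τ) :
    simplexIntegral K (fun x =>
        (∏ i, x i ^ (τ * α i - 1)) * (∑ j, β j * x j ^ τ) ^ (-(∑ i, α i))) =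
      (∏ i, Gamma (α i)) / (τ ^ (K - 1) * Gamma (∑ i, α i) * ∏ i, β i ^ (α i)) := by
  classical
  obtain ⟨m, rfl⟩ : ∃ m, K = m + 1 := ⟨K - 1, by omega⟩
  simp only [Nat.add_sub_cancel]
  set A : ℝ := ∑ i, α i with hA
  have hA0 : 0 < A := Finset.sum_pos (fun i _ => hα i) Finset.univ_nonempty
  have hΓA : 0 < Gamma A := Gamma_pos_of_pos hA0
  set g : (Fin (m + 1) → ℝ) → ℝ := fun x =>
    (∏ i, x i ^ (τ * α i - 1)) * (∑ j, β j * x j ^ τ) ^ (-A) with hg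
  set Δ : Set (Fin m → ℝ) := {y | (∀ i, 0 < y i) ∧ ∑ i, y i < 1} with hΔ
  have hΔmeas : MeasurableSet Δ := measurableSet_simplex m
  have hsimp : simplexIntegral (m + 1) g = ∫ y in Δ, g (emb m y) := rfl
  set φ : Fin (m + 1) → ℝ → ℝ := fun i x => x ^ (τ * α i - 1) * exp (-β i * x ^ τ) with hφ
  set f : Fin (m + 1) → ℝ → ℝ := fun i => (Ioi (0:ℝ)).indicator (φ i) with hf
  have hq : ∀ i, (-1:ℝ) < τ * α i - 1 := fun i => by
    have := mul_pos hτ (hα i); linarith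
  have hfint : ∀ i, Integrable (f i) := fun i => by
    rw [hf]
    exact (integrable_indicator_iff measurableSet_Ioi).2
      (integrableOn_rpow_mul_exp_neg_mul_rpow' hτ (hq i) (hβ i))
  -- Step 1: the product integral
  have hstep1 : ∫ x : Fin (m + 1) → ℝ, ∏ i, f i (x i) =
      ∏ i, (β i ^ (-α i) * ((1 / τ) * Gamma (α i))) := by
    rw [MeasureTheory.integral_fintype_prod_volume_eq_prod (f := f)]
    refine Finset.prod_congr rfl fun i _ => ?_
    rw [hf]
    rw [MeasureTheory.integral_indicator measurableSet_Ioi]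
    simp only [hφ]
    rw [integral_rpow_mul_exp_neg_mul_rpow hτ (hq i) (hβ i)]
    rw [show τ * α i - 1 + 1 = τ * α i by ring, neg_div,
      show τ * α i / τ = α i from by rw [mul_comm, mul_div_assoc, div_self hτ.ne', mul_one]]
    ring
  -- Step 2: restrict to the positive orthant
  have hQmeas : MeasurableSet {x : Fin (m + 1) → ℝ | ∀ i, 0 < x i} := by
    have h1 : {x : Fin (m + 1) → ℝ | ∀ i, 0 < x i}
        = ⋂ i, {x : Fin (m + 1) → ℝ | 0 < x i} := by ext x; simp [Set.mem_iInter]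
    rw [h1]
    exact MeasurableSet.iInter fun i =>
      measurableSet_lt measurable_const (measurable_pi_apply _)
  have hsupp : ∫ x in {x : Fin (m + 1) → ℝ | ∀ i, 0 < x i}, ∏ i, f i (x i)
      = ∫ x : Fin (m + 1) → ℝ, ∏ i, f i (x i) := by
    apply setIntegral_eq_integral_of_forall_compl_eq_zero
    intro x hx
    simp only [Set.mem_setOf_eq, not_forall] at hx
    obtain ⟨i, hi⟩ := hx
    refine Finset.prod_eq_zero (Finset.mem_univ i) ?_
    rw [hf]
    exact Set.indicator_of_notMem (by simpa using hi) _
  -- Step 3: change of variables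
  have hcov := MeasureTheory.integral_image_eq_integral_abs_det_fderiv_smul volume
    (measurableSet_simplexCone m)
    (fun z _ => (hasFDerivAt_Tmap z).hasFDerivWithinAt)
    (injOn_Tmap m) (fun x => ∏ i, f i (x i))
  rw [image_Tmap m] at hcov
  -- Step 4: pointwise identification on the cone
  set S : (Fin m → ℝ) → ℝ := fun y => ∑ j, β j * emb m y j ^ τ with hS
  set H : ℝ × (Fin m → ℝ) → ℝ := fun p =>
    p.1 ^ (τ * A - 1) * exp (-S p.2 * p.1 ^ τ) * ∏ i, emb m p.2 i ^ (τ * α i - 1) with hH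
  have hpoint : ∀ z ∈ simplexCone m,
      |(Dmap m z).det| • (∏ i, f i (Tmap m z i)) = H (z (Fin.last m), fun j => z j.castSucc) := by
    rintro z ⟨hz1, hz2, hz3⟩
    set r := z (Fin.last m) with hr
    set y : Fin m → ℝ := fun j => z j.castSucc with hy
    have he : ∀ i, 0 < emb m y i := emb_pos hz1 hz2
    have hT : ∀ i, Tmap m z i = r * emb m y i := fun i => Tmap_eq_emb z i
    have hTpos : ∀ i, 0 < Tmap m z i := fun i => (hT i) ▸ mul_pos hz3 (he i)
    have hfT : ∀ i, f i (Tmap m z i) = φ i (Tmap m z i) := fun i =>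
      Set.indicator_of_mem (hTpos i) _
    have hprod : (∏ i, f i (Tmap m z i))
        = (∏ i, (r * emb m y i) ^ (τ * α i - 1)) * exp (-S y * r ^ τ) := by
      rw [Finset.prod_congr rfl fun i _ => hfT i]
      have h3 : ∀ i : Fin (m + 1), φ i (Tmap m z i)
          = (r * emb m y i) ^ (τ * α i - 1)
            * exp (-(β i * emb m y i ^ τ) * r ^ τ) := by
        intro i
        simp only [hφ]
        rw [hT i, show (r * emb m y i) ^ τ = emb m y i ^ τ * r ^ τ from by
          rw [Real.mul_rpow hz3.le (he i).le]; ring]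
        congr 2
        ring
      rw [Finset.prod_congr rfl fun i _ => h3 i, Finset.prod_mul_distrib, ← Real.exp_sum]
      congr 2
      rw [← Finset.sum_mul, hS]
      simp only []
      rw [← Finset.sum_neg_distrib]
    rw [hprod, det_Dmap z, abs_of_nonneg (pow_nonneg hz3.le m), smul_eq_mul]
    have hsplit : ∀ i : Fin (m + 1), (r * emb m y i) ^ (τ * α i - 1)
        = r ^ (τ * α i - 1) * emb m y i ^ (τ * α i - 1) := fun i =>
      Real.mul_rpow hz3.le (he i).le
    rw [Finset.prod_congr rfl fun i _ => hsplit i, Finset.prod_mul_distrib,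
      ← Real.rpow_sum_of_pos hz3]
    have hsum : ∑ i : Fin (m + 1), (τ * α i - 1) = τ * A - (m + 1) := by
      rw [Finset.sum_sub_distrib, ← Finset.mul_sum, ← hA]
      simp [Finset.card_univ]
    rw [hsum]
    have hrm : r ^ (m : ℕ) * r ^ (τ * A - (m + 1)) = r ^ (τ * A - 1) := by
      rw [← Real.rpow_natCast r m, ← Real.rpow_add hz3]
      congr 1
      push_cast
      try ring
    simp only [hH]
    rw [← hrm]
    ring
  have hcone : ∫ z in simplexCone m, |(Dmap m z).det| • (∏ i, f i (Tmap m z i))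
      = ∫ z in simplexCone m, H (z (Fin.last m), fun j => z j.castSucc) :=
    setIntegral_congr_fun (measurableSet_simplexCone m) hpoint
  -- Step 5: pass to the product space
  have hψ : MeasurePreserving
      (MeasurableEquiv.piFinSuccAbove (fun _ : Fin (m + 1) => ℝ) (Fin.last m)) volume volume :=
    volume_preserving_piFinSuccAbove (fun _ : Fin (m + 1) => ℝ) (Fin.last m)
  have happ : ∀ z : Fin (m + 1) → ℝ,
      (MeasurableEquiv.piFinSuccAbove (fun _ : Fin (m + 1) => ℝ) (Fin.last m)) z
        = (z (Fin.last m), fun j => z j.castSucc) := by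
    intro z
    rw [MeasurableEquiv.piFinSuccAbove_apply]
    simp [Fin.removeNth, Fin.succAbove_last]
    exact funext fun j => rfl
  have hHψ : ∀ z : Fin (m + 1) → ℝ,
      H (MeasurableEquiv.piFinSuccAbove (fun _ : Fin (m + 1) => ℝ) (Fin.last m) z)
        = H (z (Fin.last m), fun j => z j.castSucc) := fun z => by rw [happ z]
  have hpre : (MeasurableEquiv.piFinSuccAbove (fun _ : Fin (m + 1) => ℝ) (Fin.last m)) ⁻¹'
      (Ioi (0:ℝ) ×ˢ Δ) = simplexCone m := by
    ext z
    rw [Set.mem_preimage, happ z]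
    simp only [Set.mem_prod, mem_Ioi, hΔ, Set.mem_setOf_eq, simplexCone]
    tauto
  have htrans : ∫ z in simplexCone m, H (z (Fin.last m), fun j => z j.castSucc)
      = ∫ p in Ioi (0:ℝ) ×ˢ Δ, H p := by
    rw [← hpre, ← hψ.setIntegral_preimage_emb
      (MeasurableEquiv.measurableEmbedding _) H _]
    refine setIntegral_congr_fun
      ((measurableSet_Ioi.prod hΔmeas).preimage (MeasurableEquiv.measurable _))
      fun z _ => (hHψ z).symm
  -- integrability
  have hFint : Integrable (fun x : Fin (m + 1) → ℝ => ∏ i, f i (x i)) :=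
    Integrable.fintype_prod hfint
  have hGint : IntegrableOn (fun z : Fin (m + 1) → ℝ =>
      H (z (Fin.last m), fun j => z j.castSucc)) (simplexCone m) := by
    have h2 := (MeasureTheory.integrableOn_image_iff_integrableOn_abs_det_fderiv_smul volume
      (measurableSet_simplexCone m)
      (fun z _ => (hasFDerivAt_Tmap z).hasFDerivWithinAt)
      (injOn_Tmap m) (fun x => ∏ i, f i (x i))).1 (hFint.integrableOn)
    exact IntegrableOn.congr_fun h2 hpoint (measurableSet_simplexCone m)
  have hHint : IntegrableOn H (Ioi (0:ℝ) ×ˢ Δ) := by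
    rw [← hψ.integrableOn_comp_preimage (MeasurableEquiv.measurableEmbedding _), hpre]
    exact IntegrableOn.congr_fun hGint (fun z _ => (hHψ z).symm) (measurableSet_simplexCone m)
  -- Step 6: Fubini
  have hfub : ∫ p in Ioi (0:ℝ) ×ˢ Δ, H p = ∫ y in Δ, ∫ r in Ioi (0:ℝ), H (r, y) := by
    rw [Measure.volume_eq_prod, ← Measure.prod_restrict]
    exact MeasureTheory.integral_prod_symm H
      (by rwa [Measure.prod_restrict, ← Measure.volume_eq_prod])
  -- Step 7: the inner integral
  have hinner : ∀ y ∈ Δ, (∫ r in Ioi (0:ℝ), H (r, y))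
      = g (emb m y) * (τ⁻¹ * Gamma A) := by
    intro y hy
    have he := emb_pos hy.1 hy.2
    have hSpos : 0 < S y := Finset.sum_pos
      (fun j _ => mul_pos (hβ j) (rpow_pos_of_pos (he j) τ)) Finset.univ_nonempty
    have hqA : (-1:ℝ) < τ * A - 1 := by nlinarith
    simp only [hH]
    rw [MeasureTheory.integral_mul_const,
      integral_rpow_mul_exp_neg_mul_rpow hτ hqA hSpos,
      show τ * A - 1 + 1 = τ * A by ring, neg_div,
      show τ * A / τ = A from by rw [mul_comm, mul_div_assoc, div_self hτ.ne', mul_one]]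
    simp only [hg, hS]
    ring
  have houter : ∫ y in Δ, ∫ r in Ioi (0:ℝ), H (r, y)
      = simplexIntegral (m + 1) g * (τ⁻¹ * Gamma A) := by
    rw [setIntegral_congr_fun hΔmeas hinner, MeasureTheory.integral_mul_const, hsimp]
  -- Combine
  have key : ∏ i, (β i ^ (-α i) * ((1 / τ) * Gamma (α i)))
      = simplexIntegral (m + 1) g * (τ⁻¹ * Gamma A) := by
    rw [← hstep1, ← hsupp, hcov, hcone, htrans, hfub, houter]
  -- Final algebra
  have hβprod : 0 < ∏ i, β i ^ (α i) :=
    Finset.prod_pos fun i _ => rpow_pos_of_pos (hβ i) _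
  have hΓprod : 0 < ∏ i, Gamma (α i) :=
    Finset.prod_pos fun i _ => Gamma_pos_of_pos (hα i)
  have hprodsplit : ∏ i, (β i ^ (-α i) * ((1 / τ) * Gamma (α i)))
      = (∏ i, β i ^ (α i))⁻¹ * ((1 / τ) ^ (m + 1) * ∏ i, Gamma (α i)) := by
    rw [Finset.prod_mul_distrib, Finset.prod_mul_distrib, Finset.prod_const,
      Finset.card_univ, Fintype.card_fin,
      Finset.prod_congr rfl fun i _ => Real.rpow_neg (hβ i).le (α i),
      ← Finset.prod_inv_distrib]
  have hc : (τ⁻¹ * Gamma A) ≠ 0 := ne_of_gt (mul_pos (inv_pos.2 hτ) hΓA)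
  have h2 : simplexIntegral (m + 1) g
      = ((∏ i, β i ^ (α i))⁻¹ * ((1 / τ) ^ (m + 1) * ∏ i, Gamma (α i))) / (τ⁻¹ * Gamma A) := by
    rw [eq_div_iff hc, ← hprodsplit]
    exact key.symm
  rw [h2, div_eq_div_iff hc (ne_of_gt (mul_pos (mul_pos (pow_pos hτ m) hΓA) hβprod))]
  field_simp
  ring_nf
  rw [inv_pow, mul_right_comm τ, mul_inv_cancel₀ hτ.ne', one_mul,
    mul_inv_cancel₀ (pow_ne_zero _ hτ.ne')]
end

section
/- Change-of-variables (Jacobian) formula on the simplex: Let K ≥ 2 be an integer, β ∈ ℝ^K with β_i > 0, and τ > 0. Define T : ℝ^K → ℝ^K on vectors with positive entries by T(x)_i = β_i x_i^τ / (∑_{j=1}^K β_j x_j^τ). Then T maps the open probability simplex {x : x_i > 0, ∑ x_i = 1} bijectively onto itself, and for every Lebesgue measurable g : ℝ^K → [0,∞] one has ∫_{S_K} g(y) · (∏_{i=1}^K y_i)^{−1} d^{K−1}y = τ^{K−1} · ∫_{S_K} g(T(x)) · (∏_{i=1}^K x_i)^{−1} d^{K−1}x, as an equality in [0,∞]. 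-/
open MeasureTheory Real

namespace SimplexCoV

/-- the open simplex in `K-1` coordinates -/
def Δ (n : ℕ) : Set (Fin n → ℝ) := {y | (∀ i, 0 < y i) ∧ ∑ i, y i < 1}

/-- the full (codimension 1) simplex -/
def Δf (K : ℕ) : Set (Fin K → ℝ) := {x | (∀ i, 0 < x i) ∧ ∑ i, x i = 1}

/-- the tempering map -/
noncomputable def T (K : ℕ) (β : Fin K → ℝ) (τ : ℝ) (x : Fin K → ℝ) : Fin K → ℝ :=
  fun i => β i * x i ^ τ / ∑ j, β j * x j ^ τ

/-- extension map from `n` coordinates to the full simplex -/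
noncomputable def ext (n : ℕ) (x : Fin n → ℝ) : Fin (n + 1) → ℝ :=
  fun i => if h : (i : ℕ) < n then x ⟨(i : ℕ), h⟩ else 1 - ∑ j, x j

lemma ext_castSucc (n : ℕ) (x : Fin n → ℝ) (i : Fin n) :
    ext n x i.castSucc = x i := by
  simp [ext, i.isLt]

lemma ext_last (n : ℕ) (x : Fin n → ℝ) :
    ext n x (Fin.last n) = 1 - ∑ j, x j := by
  simp [ext]

lemma sum_ext (n : ℕ) (x : Fin n → ℝ) : ∑ i, ext n x i = 1 := by
  rw [Fin.sum_univ_castSucc]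
  simp only [ext_castSucc, ext_last]
  ring

lemma ext_mem {n : ℕ} {x : Fin n → ℝ} (hx : x ∈ Δ n) : ext n x ∈ Δf (n + 1) := by
  refine ⟨fun i => ?_, sum_ext n x⟩
  induction i using Fin.lastCases with
  | last => rw [ext_last]; linarith [hx.2]
  | cast i => rw [ext_castSucc]; exact hx.1 i

lemma restrict_mem {n : ℕ} {z : Fin (n + 1) → ℝ} (hz : z ∈ Δf (n + 1)) :
    (fun i : Fin n => z i.castSucc) ∈ Δ n := by
  refine ⟨fun i => hz.1 _, ?_⟩
  have := hz.2
  rw [Fin.sum_univ_castSucc] at this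
  have := hz.1 (Fin.last n)
  linarith

lemma ext_restrict {n : ℕ} {z : Fin (n + 1) → ℝ} (hz : z ∈ Δf (n + 1)) :
    ext n (fun i : Fin n => z i.castSucc) = z := by
  funext i
  induction i using Fin.lastCases with
  | last =>
    rw [ext_last]
    have := hz.2
    rw [Fin.sum_univ_castSucc] at this
    linarith
  | cast i => rw [ext_castSucc]

lemma restrict_ext (n : ℕ) (x : Fin n → ℝ) :
    (fun i : Fin n => ext n x i.castSucc) = x := by
  funext i; exact ext_castSucc n x i

section Tlem

variable {K : ℕ} {β : Fin K → ℝ} {τ : ℝ}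

lemma S_pos (hβ : ∀ i, 0 < β i) {x : Fin K → ℝ} (hx : ∀ i, 0 < x i) [NeZero K] :
    0 < ∑ j, β j * x j ^ τ := by
  apply Finset.sum_pos
  · exact fun j _ => mul_pos (hβ j) (Real.rpow_pos_of_pos (hx j) τ)
  · exact Finset.univ_nonempty

lemma T_mapsTo (hβ : ∀ i, 0 < β i) [NeZero K] :
    Set.MapsTo (T K β τ) (Δf K) (Δf K) := by
  intro x hx
  have hS : 0 < ∑ j, β j * x j ^ τ := S_pos hβ hx.1
  constructor
  · intro i
    exact div_pos (mul_pos (hβ i) (Real.rpow_pos_of_pos (hx.1 i) τ)) hS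
  · show ∑ i, T K β τ x i = 1
    simp only [T]
    rw [← Finset.sum_div]
    exact div_self hS.ne'

lemma T_leftInv (hβ : ∀ i, 0 < β i) (hτ : 0 < τ) [NeZero K] {x : Fin K → ℝ}
    (hx : x ∈ Δf K) :
    T K (fun i => β i ^ (-τ⁻¹)) τ⁻¹ (T K β τ x) = x := by
  have hS : 0 < ∑ j, β j * x j ^ τ := S_pos hβ hx.1
  have key : ∀ j, β j ^ (-τ⁻¹) * (T K β τ x j) ^ τ⁻¹
      = x j * ((∑ j, β j * x j ^ τ) ^ τ⁻¹)⁻¹ := by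
    intro j
    have h1 : ((x j) ^ τ) ^ τ⁻¹ = x j := by
      rw [← Real.rpow_mul (hx.1 j).le, mul_inv_cancel₀ hτ.ne', Real.rpow_one]
    have h2 : β j ^ (-τ⁻¹) * β j ^ τ⁻¹ = 1 := by
      rw [← Real.rpow_add (hβ j)]; simp
    have hT : T K β τ x j = β j * x j ^ τ / ∑ j, β j * x j ^ τ := rfl
    rw [hT, Real.div_rpow (mul_pos (hβ j) (Real.rpow_pos_of_pos (hx.1 j) τ)).le hS.le,
      Real.mul_rpow (hβ j).le (Real.rpow_pos_of_pos (hx.1 j) τ).le, h1]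
    calc β j ^ (-τ⁻¹) * (β j ^ τ⁻¹ * x j / (∑ j, β j * x j ^ τ) ^ τ⁻¹)
        = (β j ^ (-τ⁻¹) * β j ^ τ⁻¹) * (x j / (∑ j, β j * x j ^ τ) ^ τ⁻¹) := by
          ring
      _ = x j * (((∑ j, β j * x j ^ τ) ^ τ⁻¹))⁻¹ := by
          rw [h2, one_mul, div_eq_mul_inv]
  funext i
  have hT : T K (fun i => β i ^ (-τ⁻¹)) τ⁻¹ (T K β τ x) i
      = (β i ^ (-τ⁻¹) * (T K β τ x i) ^ τ⁻¹)
        / ∑ j, β j ^ (-τ⁻¹) * (T K β τ x j) ^ τ⁻¹ := rfl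
  rw [hT]
  simp only [key]
  rw [← Finset.sum_mul, hx.2, one_mul]
  rw [mul_div_assoc, div_self (by positivity), mul_one]

lemma T_bijOn (hβ : ∀ i, 0 < β i) (hτ : 0 < τ) [NeZero K] :
    Set.BijOn (T K β τ) (Δf K) (Δf K) := by
  have hβ' : ∀ i, 0 < β i ^ (-τ⁻¹) := fun i => Real.rpow_pos_of_pos (hβ i) _
  have hright : ∀ x ∈ Δf K, T K β τ (T K (fun i => β i ^ (-τ⁻¹)) τ⁻¹ x) = x := by
    intro x hx
    have h := T_leftInv hβ' (by positivity : (0:ℝ) < τ⁻¹) hx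
    have hfun : (fun i => (β i ^ (-τ⁻¹)) ^ (-τ⁻¹⁻¹)) = β := by
      funext i
      rw [← Real.rpow_mul (hβ i).le]
      rw [show (-τ⁻¹) * (-τ⁻¹⁻¹) = 1 by field_simp, Real.rpow_one]
    rw [hfun, inv_inv] at h
    exact h
  exact Set.InvOn.bijOn ⟨fun x hx => T_leftInv hβ hτ hx, fun y hy => hright y hy⟩
    (T_mapsTo hβ) (T_mapsTo hβ')

end Tlem

section Jac

variable (n : ℕ) (β : Fin (n + 1) → ℝ) (τ : ℝ)

/-- the normalizing sum -/
noncomputable def S (x : Fin n → ℝ) : ℝ := ∑ j, β j * (ext n x j) ^ τ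

/-- the tempering map in `n` coordinates -/
noncomputable def F (x : Fin n → ℝ) : Fin n → ℝ :=
  fun i => β i.castSucc * x i ^ τ / S n β τ x

/-- the coefficients of the Jacobian matrix -/
noncomputable def c (x : Fin n → ℝ) (j : Fin (n + 1)) : ℝ :=
  τ * β j * (ext n x j) ^ (τ - 1)

/-- the Jacobian matrix of `F` -/
noncomputable def M (x : Fin n → ℝ) : Matrix (Fin n) (Fin n) ℝ :=
  Matrix.of fun i j =>
    ((if i = j then c n β τ x i.castSucc else 0)
      - F n β τ x i * (c n β τ x j.castSucc - c n β τ x (Fin.last n))) / S n β τ x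

/-- the Jacobian of `F` as a continuous linear map -/
noncomputable def D (x : Fin n → ℝ) : (Fin n → ℝ) →L[ℝ] (Fin n → ℝ) :=
  LinearMap.toContinuousLinearMap (Matrix.toLin' (M n β τ x))

lemma S_eq (x : Fin n → ℝ) :
    S n β τ x = ∑ j : Fin n, β j.castSucc * x j ^ τ
      + β (Fin.last n) * (1 - ∑ j, x j) ^ τ := by
  rw [S, Fin.sum_univ_castSucc, ext_last]
  simp only [ext_castSucc]

variable {n β τ}

lemma ext_F (hβ : ∀ i, 0 < β i) (hτ : 0 < τ) {x : Fin n → ℝ} (hx : x ∈ Δ n) :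
    ext n (F n β τ x) = T (n + 1) β τ (ext n x) := by
  have hw := ext_mem hx
  have hS : 0 < S n β τ x := S_pos hβ hw.1
  funext i
  have hTS : (fun j => β j * (ext n x j) ^ τ) = fun j => β j * (ext n x j) ^ τ := rfl
  induction i using Fin.lastCases with
  | cast i =>
    rw [ext_castSucc]
    show β i.castSucc * x i ^ τ / S n β τ x = _
    show _ = β i.castSucc * (ext n x i.castSucc) ^ τ / ∑ j, β j * (ext n x j) ^ τ
    rw [ext_castSucc]
    rfl
  | last =>
    rw [ext_last]
    show 1 - ∑ j : Fin n, β j.castSucc * x j ^ τ / S n β τ x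
        = β (Fin.last n) * (ext n x (Fin.last n)) ^ τ / ∑ j, β j * (ext n x j) ^ τ
    rw [← Finset.sum_div]
    have h1 : (S n β τ x : ℝ) = ∑ j : Fin n, β j.castSucc * x j ^ τ
        + β (Fin.last n) * (ext n x (Fin.last n)) ^ τ := by
      rw [S, Fin.sum_univ_castSucc]
      simp only [ext_castSucc]
    have h2 : (∑ j, β j * (ext n x j) ^ τ) = S n β τ x := rfl
    rw [h2]
    field_simp
    have h3 : ∑ j : Fin n, β j.castSucc * x j ^ τ
        = S n β τ x - β (Fin.last n) * (ext n x (Fin.last n)) ^ τ := by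
      rw [h1]; ring
    rw [h3]; ring

lemma F_bijOn (hβ : ∀ i, 0 < β i) (hτ : 0 < τ) : Set.BijOn (F n β τ) (Δ n) (Δ n) := by
  have hTb := T_bijOn (K := n + 1) hβ hτ
  have hmapF : Set.MapsTo (F n β τ) (Δ n) (Δ n) := by
    intro x hx
    have h1 : ext n (F n β τ x) ∈ Δf (n + 1) := by
      rw [ext_F hβ hτ hx]; exact hTb.mapsTo (ext_mem hx)
    have h2 := restrict_mem h1
    rwa [restrict_ext] at h2
  refine ⟨hmapF, ?_, ?_⟩
  · -- InjOn
    intro x hx y hy hxy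
    have h1 : ext n (F n β τ x) = ext n (F n β τ y) := by rw [hxy]
    rw [ext_F hβ hτ hx, ext_F hβ hτ hy] at h1
    have h2 : ext n x = ext n y := hTb.injOn (ext_mem hx) (ext_mem hy) h1
    have := congrArg (fun z => fun i : Fin n => z (Fin.castSucc i)) h2
    simpa only [restrict_ext] using this
  · -- SurjOn
    intro y hy
    obtain ⟨z, hz, hz2⟩ := hTb.surjOn (ext_mem hy)
    refine ⟨fun i => z i.castSucc, ?_, ?_⟩
    · exact restrict_mem hz
    · have hz3 : ext n (fun i => z i.castSucc) = z := ext_restrict hz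
      have h4 : ext n (F n β τ (fun i => z i.castSucc)) = ext n y := by
        rw [ext_F hβ hτ (restrict_mem hz), hz3, hz2]
      have := congrArg (fun w => fun i : Fin n => w (Fin.castSucc i)) h4
      simpa only [restrict_ext] using this

lemma hasFDerivAt_F (hβ : ∀ i, 0 < β i) (hτ : 0 < τ) {x : Fin n → ℝ} (hx : x ∈ Δ n) :
    HasFDerivAt (F n β τ) (D n β τ x) x := by
  classical
  have hwpos : ∀ j, 0 < ext n x j := (ext_mem hx).1
  have hS : 0 < S n β τ x := S_pos hβ hwpos
  have h1s : 0 < 1 - ∑ j, x j := by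
    have := hwpos (Fin.last n); rwa [ext_last] at this
  -- derivative of each power coordinate
  have hpow : ∀ j : Fin n, HasFDerivAt (fun y : Fin n → ℝ => y j ^ τ)
      ((τ * x j ^ (τ - 1)) •
        (ContinuousLinearMap.proj (R := ℝ) (φ := fun _ : Fin n => ℝ) j)) x := by
    intro j
    exact (Real.hasDerivAt_rpow_const (Or.inl (hx.1 j).ne')).comp_hasFDerivAt x
      (hasFDerivAt_apply (𝕜 := ℝ) j x)
  -- derivative of the sum coordinate
  have hsum : HasFDerivAt (fun y : Fin n → ℝ => ∑ j, y j)
      (∑ j : Fin n, ContinuousLinearMap.proj (R := ℝ) (φ := fun _ : Fin n => ℝ) j) x :=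
    HasFDerivAt.fun_sum fun j _ => hasFDerivAt_apply (𝕜 := ℝ) j x
  have hlastlin : HasFDerivAt (fun y : Fin n → ℝ => 1 - ∑ j, y j)
      (-(∑ j : Fin n, ContinuousLinearMap.proj (R := ℝ) (φ := fun _ : Fin n => ℝ) j)) x := hsum.const_sub 1
  have hlast : HasFDerivAt (fun y : Fin n → ℝ => (1 - ∑ j, y j) ^ τ)
      ((τ * (1 - ∑ j, x j) ^ (τ - 1)) •
        (-(∑ j : Fin n, ContinuousLinearMap.proj (R := ℝ) (φ := fun _ : Fin n => ℝ) j))) x :=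
    by have := (Real.hasDerivAt_rpow_const (p := τ) (x := 1 - ∑ j, x j) (Or.inl h1s.ne')).comp_hasFDerivAt x hlastlin; exact this
  -- derivative of S
  set DS : (Fin n → ℝ) →L[ℝ] ℝ :=
    (∑ j : Fin n, β j.castSucc • ((τ * x j ^ (τ - 1)) •
        ContinuousLinearMap.proj (R := ℝ) (φ := fun _ : Fin n => ℝ) j))
      + β (Fin.last n) • ((τ * (1 - ∑ j, x j) ^ (τ - 1)) •
        (-(∑ j : Fin n, ContinuousLinearMap.proj (R := ℝ) (φ := fun _ : Fin n => ℝ) j))) with hDS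
  have hSder : HasFDerivAt (S n β τ) DS x := by
    have : S n β τ = fun y => (∑ j : Fin n, β j.castSucc * y j ^ τ)
        + β (Fin.last n) * (1 - ∑ j, y j) ^ τ := funext fun y => S_eq n β τ y
    rw [this, hDS]
    exact (HasFDerivAt.fun_sum fun j _ => (hpow j).const_mul (β j.castSucc)).add
      (hlast.const_mul (β (Fin.last n)))
  have hSinv : HasFDerivAt (fun y => (S n β τ y)⁻¹)
      ((-((S n β τ x) ^ 2)⁻¹) • DS) x :=
    (hasDerivAt_inv hS.ne').comp_hasFDerivAt x hSder
  refine hasFDerivAt_pi'' fun i => ?_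
  have hNi : HasFDerivAt (fun y : Fin n → ℝ => β i.castSucc * y i ^ τ)
      (β i.castSucc • ((τ * x i ^ (τ - 1)) •
        ContinuousLinearMap.proj (R := ℝ) (φ := fun _ : Fin n => ℝ) i)) x :=
    (hpow i).const_mul (β i.castSucc)
  have hFi : HasFDerivAt (fun y => (β i.castSucc * y i ^ τ) * (S n β τ y)⁻¹)
      ((β i.castSucc * x i ^ τ) • ((-((S n β τ x) ^ 2)⁻¹) • DS)
        + (S n β τ x)⁻¹ • (β i.castSucc • ((τ * x i ^ (τ - 1)) •
          ContinuousLinearMap.proj (R := ℝ) (φ := fun _ : Fin n => ℝ) i))) x :=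
    hNi.mul hSinv
  have heqfun : (fun y => F n β τ y i)
      = fun y => (β i.castSucc * y i ^ τ) * (S n β τ y)⁻¹ := by
    funext y; rw [F, div_eq_mul_inv]
  rw [heqfun]
  refine hFi.congr_fderiv (Eq.symm ?_)
  -- equality of the two continuous linear maps
  ext v
  rw [hDS]
  simp only [D, M, ContinuousLinearMap.coe_comp', Function.comp_apply,
    LinearMap.coe_toContinuousLinearMap', Matrix.toLin'_apply, Matrix.mulVec,
    dotProduct, Matrix.of_apply, ContinuousLinearMap.add_apply,
    ContinuousLinearMap.smul_apply, ContinuousLinearMap.neg_apply,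
    ContinuousLinearMap.sum_apply, ContinuousLinearMap.proj_apply, smul_eq_mul]
  have hccs : ∀ j : Fin n, c n β τ x j.castSucc = τ * β j.castSucc * x j ^ (τ - 1) :=
    fun j => by rw [c, ext_castSucc]
  have hcl : c n β τ x (Fin.last n)
      = τ * β (Fin.last n) * (1 - ∑ j, x j) ^ (τ - 1) := by rw [c, ext_last]
  have key : ∀ j : Fin n,
      ((if i = j then c n β τ x i.castSucc else 0)
        - F n β τ x i * (c n β τ x j.castSucc - c n β τ x (Fin.last n)))
          / S n β τ x * v j
      = (if i = j then c n β τ x i.castSucc / S n β τ x * v j else 0)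
        - F n β τ x i / S n β τ x
          * (c n β τ x j.castSucc * v j - c n β τ x (Fin.last n) * v j) := by
    intro j
    split_ifs <;> ring
  rw [Finset.sum_congr rfl fun j _ => key j, Finset.sum_sub_distrib]
  simp only [Finset.sum_ite_eq, Finset.mem_univ, if_true]
  rw [← Finset.mul_sum, Finset.sum_sub_distrib, ← Finset.mul_sum]
  have hsum2 : ∑ j : Fin n, c n β τ x j.castSucc * v j
      = ∑ j : Fin n, β j.castSucc * (τ * x j ^ (τ - 1) * v j) :=
    Finset.sum_congr rfl fun j _ => by rw [hccs j]; ring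
  rw [hsum2]
  simp only [F]
  rw [hccs i, hcl]
  field_simp
  ring

lemma det_aux {n : ℕ} (d y v : Fin n → ℝ) (hd : ∀ i, d i ≠ 0) :
    (Matrix.of fun i j => (if i = j then d i else 0) - y i * v j).det
      = (∏ i, d i) * (1 - ∑ j, v j * (y j / d j)) := by
  have h : (Matrix.of fun i j => (if i = j then d i else 0) - y i * v j)
      = Matrix.diagonal d *
        (1 + Matrix.replicateCol Unit (fun i => -(y i / d i)) * Matrix.replicateRow Unit v) := by
    ext i j
    rw [Matrix.mul_apply]
    rw [Finset.sum_eq_single i (fun b _ hb => by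
      simp [Matrix.diagonal_apply_ne d (Ne.symm hb)]) (by simp)]
    simp only [Matrix.diagonal_apply_eq, Matrix.add_apply, Matrix.one_apply,
      Matrix.mul_apply, Matrix.replicateCol_apply, Matrix.replicateRow_apply, Matrix.of_apply,
      Finset.univ_unique, Finset.sum_const, Finset.card_singleton, one_smul]
    rcases eq_or_ne i j with rfl | hij
    · simp only [if_pos rfl, ↓reduceIte]
      field_simp [hd i]
      ring
    · simp only [if_neg hij]
      field_simp [hd i]
      ring
  rw [h, Matrix.det_mul, Matrix.det_diagonal, Matrix.det_one_add_replicateCol_mul_replicateRow]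
  rw [dotProduct]
  congr 1
  rw [sub_eq_add_neg, ← Finset.sum_neg_distrib]
  exact congrArg _ (Finset.sum_congr rfl fun j _ => by ring)

lemma det_M (hβ : ∀ i, 0 < β i) (hτ : 0 < τ) {x : Fin n → ℝ} (hx : x ∈ Δ n) :
    (M n β τ x).det
      = τ ^ n * ((∏ j, T (n + 1) β τ (ext n x) j) / ∏ j, ext n x j) := by
  have hwpos : ∀ j, 0 < ext n x j := (ext_mem hx).1
  have hS : 0 < S n β τ x := S_pos hβ hwpos
  have hc : ∀ j, 0 < c n β τ x j := fun j =>
    mul_pos (mul_pos hτ (hβ j)) (Real.rpow_pos_of_pos (hwpos j) _)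
  have hcw : ∀ j, c n β τ x j * ext n x j = τ * (β j * ext n x j ^ τ) := by
    intro j
    have h1 : ext n x j ^ (τ - 1) * ext n x j = ext n x j ^ τ := by
      rw [Real.rpow_sub (hwpos j), Real.rpow_one,
        div_mul_cancel₀ _ (hwpos j).ne']
    calc c n β τ x j * ext n x j
        = τ * β j * (ext n x j ^ (τ - 1) * ext n x j) := by rw [c]; ring
      _ = τ * (β j * ext n x j ^ τ) := by rw [h1]; ring
  have hT : ∀ j, T (n + 1) β τ (ext n x) j
      = c n β τ x j * ext n x j / (τ * S n β τ x) := by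
    intro j
    rw [show T (n + 1) β τ (ext n x) j
        = β j * ext n x j ^ τ / S n β τ x from rfl, hcw j,
      mul_div_mul_left _ _ hτ.ne']
  have hF : ∀ i : Fin n, F n β τ x i = T (n + 1) β τ (ext n x) i.castSucc := by
    intro i
    rw [show T (n + 1) β τ (ext n x) i.castSucc
        = β i.castSucc * ext n x i.castSucc ^ τ / S n β τ x from rfl, ext_castSucc]
    rfl
  have hM : M n β τ x = (S n β τ x)⁻¹ • Matrix.of (fun i j =>
      (if i = j then c n β τ x i.castSucc else 0)
        - F n β τ x i * (c n β τ x j.castSucc - c n β τ x (Fin.last n))) := by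
    ext i j
    simp only [M, Matrix.of_apply, Matrix.smul_apply, smul_eq_mul]
    rw [div_eq_inv_mul]
  have h1 : ∑ j : Fin n, c n β τ x j.castSucc * ext n x j.castSucc
      = τ * S n β τ x - c n β τ x (Fin.last n) * ext n x (Fin.last n) := by
    have hall : ∑ j : Fin (n + 1), c n β τ x j * ext n x j = τ * S n β τ x := by
      rw [S, Finset.mul_sum]
      exact Finset.sum_congr rfl fun j _ => hcw j
    rw [Fin.sum_univ_castSucc] at hall
    linarith
  have h2 : ∑ j : Fin n, ext n x j.castSucc = 1 - ext n x (Fin.last n) := by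
    have := sum_ext n x
    rw [Fin.sum_univ_castSucc] at this
    linarith
  have heach : ∀ j : Fin n,
      (c n β τ x j.castSucc - c n β τ x (Fin.last n))
        * (F n β τ x j / c n β τ x j.castSucc)
      = (c n β τ x j.castSucc * ext n x j.castSucc
          - c n β τ x (Fin.last n) * ext n x j.castSucc) / (τ * S n β τ x) := by
    intro j
    rw [hF j, hT j.castSucc]
    field_simp [(hc j.castSucc).ne']
  have hsumval : ∑ j : Fin n,
      (c n β τ x j.castSucc - c n β τ x (Fin.last n))
        * (F n β τ x j / c n β τ x j.castSucc)
      = ((τ * S n β τ x - c n β τ x (Fin.last n) * ext n x (Fin.last n))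
          - c n β τ x (Fin.last n) * (1 - ext n x (Fin.last n))) / (τ * S n β τ x) := by
    rw [Finset.sum_congr rfl fun j _ => heach j, ← Finset.sum_div]
    congr 1
    rw [Finset.sum_sub_distrib, h1, ← Finset.mul_sum, h2]
  have hprodT : ∏ j : Fin (n + 1), T (n + 1) β τ (ext n x) j
      = ((∏ i : Fin n, c n β τ x i.castSucc) * ∏ i : Fin n, ext n x i.castSucc)
        * (c n β τ x (Fin.last n) * ext n x (Fin.last n))
        / (τ * S n β τ x) ^ (n + 1) := by
    rw [Finset.prod_congr rfl fun j _ => hT j, Finset.prod_div_distrib,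
      Finset.prod_const, Finset.card_univ, Fintype.card_fin,
      Fin.prod_univ_castSucc, Finset.prod_mul_distrib]
  have hprodw : ∏ j : Fin (n + 1), ext n x j
      = (∏ i : Fin n, ext n x i.castSucc) * ext n x (Fin.last n) :=
    Fin.prod_univ_castSucc _
  have hPw : (∏ i : Fin n, ext n x i.castSucc) ≠ 0 :=
    Finset.prod_ne_zero_iff.mpr fun i _ => (hwpos _).ne'
  have hPc : (∏ i : Fin n, c n β τ x i.castSucc) ≠ 0 :=
    Finset.prod_ne_zero_iff.mpr fun i _ => (hc _).ne'
  rw [hM, Matrix.det_smul, det_aux _ _ _ (fun i => (hc i.castSucc).ne'), hsumval,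
    hprodT, hprodw, Fintype.card_fin]
  field_simp [(hwpos (Fin.last n)).ne', (hc (Fin.last n)).ne', hS.ne']
  have hSn : S n β τ x ^ n * (S n β τ x)⁻¹ ^ n = 1 := by
    rw [← mul_pow, mul_inv_cancel₀ hS.ne', one_pow]
  linear_combination (S n β τ x * τ * τ ^ n * c n β τ x (Fin.last n)) * hSn

lemma isOpen_Δ' : IsOpen (Δ n) := by
  have h1 : Δ n = (⋂ i, {y : Fin n → ℝ | 0 < y i}) ∩ {y | ∑ i, y i < 1} := by
    ext y; simp [Δ, Set.mem_iInter]
  rw [h1]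
  refine IsOpen.inter (isOpen_iInter_of_finite fun i =>
    isOpen_lt continuous_const (continuous_apply i))
    (isOpen_lt (by continuity) continuous_const)

lemma key_integral (hβ : ∀ i, 0 < β i) (hτ : 0 < τ)
    (g : (Fin (n + 1) → ℝ) → ENNReal) :
    (∫⁻ y in Δ n, g (ext n y) * (ENNReal.ofReal (∏ i, ext n y i))⁻¹)
      = ENNReal.ofReal (τ ^ n) *
        ∫⁻ x in Δ n, g (T (n + 1) β τ (ext n x))
          * (ENNReal.ofReal (∏ i, ext n x i))⁻¹ := by
  have hmeas : MeasurableSet (Δ n) := isOpen_Δ'.measurableSet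
  have hbij := F_bijOn (n := n) hβ hτ
  have himg : F n β τ '' Δ n = Δ n := hbij.image_eq
  have hder : ∀ x ∈ Δ n, HasFDerivWithinAt (F n β τ) (D n β τ x) (Δ n) x :=
    fun x hx => (hasFDerivAt_F hβ hτ hx).hasFDerivWithinAt
  have hcov := lintegral_image_eq_lintegral_abs_det_fderiv_mul volume hmeas hder
    hbij.injOn (fun y => g (ext n y) * (ENNReal.ofReal (∏ i, ext n y i))⁻¹)
  rw [himg] at hcov
  rw [hcov, ← lintegral_const_mul' _ _ (by exact ENNReal.ofReal_ne_top)]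
  refine setLIntegral_congr_fun hmeas (fun x hx => ?_)
  have hwpos : ∀ j, 0 < ext n x j := (ext_mem hx).1
  have hdet1 : (D n β τ x).det = (M n β τ x).det := by
    rw [show (D n β τ x).det
        = LinearMap.det ((D n β τ x) : (Fin n → ℝ) →ₗ[ℝ] (Fin n → ℝ)) from rfl, D,
      LinearMap.coe_toContinuousLinearMap, LinearMap.det_toLin']
  have hP : 0 < ∏ j, T (n + 1) β τ (ext n x) j :=
    Finset.prod_pos fun j _ => (T_mapsTo hβ (ext_mem hx)).1 j
  have hQ : 0 < ∏ j, ext n x j := Finset.prod_pos fun j _ => hwpos j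
  rw [hdet1, det_M hβ hτ hx, ext_F hβ hτ hx]
  rw [abs_of_pos (by positivity)]
  rw [ENNReal.ofReal_mul (by positivity), ENNReal.ofReal_div_of_pos hQ,
    div_eq_mul_inv]
  have hcancel : ENNReal.ofReal (∏ j, T (n + 1) β τ (ext n x) j)
      * (ENNReal.ofReal (∏ j, T (n + 1) β τ (ext n x) j))⁻¹ = 1 :=
    ENNReal.mul_inv_cancel (ENNReal.ofReal_pos.mpr hP).ne' ENNReal.ofReal_ne_top
  calc ENNReal.ofReal (τ ^ n) *
        (ENNReal.ofReal (∏ j, T (n + 1) β τ (ext n x) j)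
          * (ENNReal.ofReal (∏ j, ext n x j))⁻¹) *
        (g (T (n + 1) β τ (ext n x))
          * (ENNReal.ofReal (∏ j, T (n + 1) β τ (ext n x) j))⁻¹)
      = ENNReal.ofReal (τ ^ n) *
        (g (T (n + 1) β τ (ext n x)) * (ENNReal.ofReal (∏ j, ext n x j))⁻¹) *
        (ENNReal.ofReal (∏ j, T (n + 1) β τ (ext n x) j)
          * (ENNReal.ofReal (∏ j, T (n + 1) β τ (ext n x) j))⁻¹) := by ring
    _ = ENNReal.ofReal (τ ^ n) *
        (g (T (n + 1) β τ (ext n x)) * (ENNReal.ofReal (∏ j, ext n x j))⁻¹) := by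
          rw [hcancel, mul_one]

end Jac

end SimplexCoV

/-- Lower Lebesgue integral over the simplex `S_K`: the integral over the open set
`Δ_K = {(y_1,…,y_{K-1}) : y_i > 0, y_1+…+y_{K-1} < 1}` of the map that feeds
`(y_1,…,y_{K-1}, 1 - y_1 - … - y_{K-1})` to `g`. -/
noncomputable def simplexLIntegral (K : ℕ) (g : (Fin K → ℝ) → ENNReal) : ENNReal :=
  ∫⁻ y in {y : Fin (K - 1) → ℝ | (∀ i, 0 < y i) ∧ ∑ i, y i < 1},
    g (fun i => if h : (i : ℕ) < K - 1 then y ⟨(i : ℕ), h⟩ else 1 - ∑ j, y j)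

/-- Change-of-variables (Jacobian) formula on the simplex for the map
`T(x)_i = β_i x_i^τ / ∑_j β_j x_j^τ`. -/
theorem simplex_jacobian_change_of_variables (K : ℕ) (hK : 2 ≤ K) (β : Fin K → ℝ)
    (hβ : ∀ i, 0 < β i) (τ : ℝ) (hτ : 0 < τ) :
    Set.BijOn (fun x : Fin K → ℝ => fun i => β i * x i ^ τ / ∑ j, β j * x j ^ τ)
        {x : Fin K → ℝ | (∀ i, 0 < x i) ∧ ∑ i, x i = 1}
        {y : Fin K → ℝ | (∀ i, 0 < y i) ∧ ∑ i, y i = 1} ∧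
      ∀ g : (Fin K → ℝ) → ENNReal, Measurable g →
        simplexLIntegral K (fun y => g y * (ENNReal.ofReal (∏ i, y i))⁻¹) =
          ENNReal.ofReal (τ ^ (K - 1)) *
            simplexLIntegral K (fun x =>
              g (fun i => β i * x i ^ τ / ∑ j, β j * x j ^ τ) *
                (ENNReal.ofReal (∏ i, x i))⁻¹) := by
  obtain ⟨n, rfl⟩ : ∃ n, K = n + 1 := ⟨K - 1, by omega⟩
  constructor
  · exact SimplexCoV.T_bijOn hβ hτ
  · intro g _
    exact SimplexCoV.key_integral hβ hτ g
end

section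
/- Normalization of the G4B distribution for integer exponent shift (finite-sum evaluation of the Gauss hypergeometric value ₂F₁(α₁, α₁+α₂+n; α₁+α₂; 1−λ) via its Euler integral): Let α₁ > 0, α₂ > 0, λ > 0, and let n be a nonnegative integer. Then ∫_0^1 t^{α₁−1} (1−t)^{α₂−1} (λ t + 1 − t)^{−(α₁+α₂+n)} dt = (Γ(α₁) Γ(α₂) / Γ(α₁+α₂+n)) · ∑_{k=0}^n C(n,k) · (α₁)_k · (α₂)_{n−k} · λ^{−(α₁+k)}. -/
open MeasureTheory Real

lemma complex_eq_real_on (a b : ℝ) :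
    ∀ t ∈ Set.Icc (0:ℝ) 1,
      (t:ℂ) ^ ((a:ℂ) - 1) * (1 - (t:ℂ)) ^ ((b:ℂ) - 1)
        = ((t ^ (a-1) * (1-t) ^ (b-1) : ℝ) : ℂ) := by
  intro t ht
  have h1 : ((t:ℂ)) ^ ((a:ℂ)-1) = ((t ^ (a-1) : ℝ) : ℂ) := by
    rw [show ((a:ℂ)-1) = ((a-1:ℝ):ℂ) by push_cast; ring, Complex.ofReal_cpow ht.1]
  have h2 : (1 - (t:ℂ)) ^ ((b:ℂ)-1) = (((1-t) ^ (b-1) : ℝ) : ℂ) := by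
    rw [show (1 - (t:ℂ)) = ((1-t:ℝ):ℂ) by push_cast; ring,
      show ((b:ℂ)-1) = ((b-1:ℝ):ℂ) by push_cast; ring,
      Complex.ofReal_cpow (by linarith [ht.2])]
  rw [h1, h2, ← Complex.ofReal_mul]

lemma real_beta_integrableOn (a b : ℝ) (ha : 0 < a) (hb : 0 < b) :
    IntegrableOn (fun t : ℝ => t ^ (a-1) * (1-t) ^ (b-1)) (Set.Ioo 0 1) := by
  have hc := Complex.betaIntegral_convergent (u := a) (v := b) (by simpa) (by simpa)
  rw [intervalIntegrable_iff_integrableOn_Ioc_of_le zero_le_one] at hc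
  have hc' := (hc.mono_set Set.Ioo_subset_Ioc_self).congr_fun
    (fun t ht => complex_eq_real_on a b t (Set.Ioo_subset_Icc_self ht)) measurableSet_Ioo
  simpa [IntegrableOn] using hc'.re

lemma real_beta_integral (a b : ℝ) (ha : 0 < a) (hb : 0 < b) :
    ∫ t in Set.Ioo (0:ℝ) 1, t ^ (a-1) * (1-t) ^ (b-1)
      = Gamma a * Gamma b / Gamma (a+b) := by
  have key := Complex.Gamma_mul_Gamma_eq_betaIntegral (s := (a:ℂ)) (t := (b:ℂ))
    (by simpa) (by simpa)
  have hbeta : Complex.betaIntegral a b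
      = ((∫ t in Set.Ioo (0:ℝ) 1, t ^ (a-1) * (1-t) ^ (b-1) : ℝ) : ℂ) := by
    rw [Complex.betaIntegral]
    rw [intervalIntegral.integral_congr (g := fun t : ℝ =>
      ((t ^ (a-1) * (1-t) ^ (b-1) : ℝ) : ℂ)) ?_]
    · rw [intervalIntegral.integral_ofReal, intervalIntegral.integral_of_le zero_le_one,
        integral_Ioc_eq_integral_Ioo]
    · intro t ht
      rw [Set.uIcc_of_le zero_le_one] at ht
      exact complex_eq_real_on a b t ht
  rw [hbeta, Complex.Gamma_ofReal, Complex.Gamma_ofReal, show (a:ℂ)+(b:ℂ) = ((a+b:ℝ):ℂ) by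
    push_cast; ring, Complex.Gamma_ofReal, ← Complex.ofReal_mul, ← Complex.ofReal_mul] at key
  have := Complex.ofReal_injective key
  have hG : Gamma (a+b) ≠ 0 := (Gamma_pos_of_pos (by linarith)).ne'
  field_simp
  linarith [this]

namespace G4BAux

variable {a b lam : ℝ}

lemma hEpos (hlam : 0 < lam) {u : ℝ} (hu : u ∈ Set.Ioo (0:ℝ) 1) :
    0 < u + lam * (1 - u) := by
  obtain ⟨h0, h1⟩ := hu; nlinarith

lemma hderiv (hlam : 0 < lam) :
    ∀ u ∈ Set.Ioo (0:ℝ) 1, HasDerivWithinAt (fun u : ℝ => u / (u + lam * (1 - u)))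
      (lam / (u + lam * (1 - u)) ^ 2) (Set.Ioo 0 1) u := by
  intro u hu
  have hE := hEpos hlam hu
  have h1 : HasDerivAt (fun u : ℝ => u + lam * (1 - u)) (1 - lam) u := by
    have := (hasDerivAt_id u).add (((hasDerivAt_const u (1:ℝ)).sub (hasDerivAt_id u)).const_mul lam)
    exact this.congr_deriv (by ring)
  have h2 : HasDerivAt (fun u : ℝ => u / (u + lam * (1 - u)))
      ((1 * (u + lam * (1 - u)) - u * (1 - lam)) / (u + lam * (1 - u)) ^ 2) u :=
    (hasDerivAt_id u).div h1 hE.ne'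
  have : (1 * (u + lam * (1 - u)) - u * (1 - lam)) / (u + lam * (1 - u)) ^ 2
      = lam / (u + lam * (1 - u)) ^ 2 := by congr 1; ring
  rw [this] at h2
  exact h2.hasDerivWithinAt

lemma hinj (hlam : 0 < lam) :
    Set.InjOn (fun u : ℝ => u / (u + lam * (1 - u))) (Set.Ioo 0 1) := by
  intro u hu v hv h
  have hEu := hEpos hlam hu
  have hEv := hEpos hlam hv
  simp only at h
  rw [div_eq_div_iff hEu.ne' hEv.ne'] at h
  have : lam * (u - v) = 0 := by linear_combination h
  have := mul_eq_zero.mp this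
  rcases this with h' | h'
  · exact absurd h' hlam.ne'
  · linarith

lemma himg (hlam : 0 < lam) :
    (fun u : ℝ => u / (u + lam * (1 - u))) '' Set.Ioo 0 1 = Set.Ioo 0 1 := by
  ext t
  constructor
  · rintro ⟨u, hu, rfl⟩
    have hE := hEpos hlam hu
    obtain ⟨h0, h1⟩ := hu
    constructor
    · positivity
    · rw [div_lt_one hE]; nlinarith
  · rintro ⟨h0, h1⟩
    have hF : 0 < lam * t + (1 - t) := by nlinarith
    refine ⟨lam * t / (lam * t + (1 - t)), ⟨by positivity, ?_⟩, ?_⟩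
    · rw [div_lt_one hF]; nlinarith
    · have hne := hF.ne'
      have hden : lam * t / (lam * t + (1 - t)) +
          lam * (1 - lam * t / (lam * t + (1 - t))) = lam / (lam * t + (1 - t)) := by
        field_simp; ring
      simp only [hden]
      rw [div_div_div_eq]
      field_simp

lemma point (ha : 0 < a) (hb : 0 < b) (hlam : 0 < lam) {u : ℝ} (hu : u ∈ Set.Ioo (0:ℝ) 1) :
    |lam / (u + lam * (1 - u)) ^ 2| *
      ((u / (u + lam * (1 - u))) ^ (a - 1) * (1 - u / (u + lam * (1 - u))) ^ (b - 1) *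
        (lam * (u / (u + lam * (1 - u))) + 1 - u / (u + lam * (1 - u))) ^ (-(a + b)))
    = lam ^ (-a) * (u ^ (a - 1) * (1 - u) ^ (b - 1)) := by
  obtain ⟨hu0, hu1⟩ := hu
  have h1u : 0 < 1 - u := by linarith
  have hE : 0 < u + lam * (1 - u) := by nlinarith
  set E := u + lam * (1 - u) with hEdef
  have g1 : 1 - u / E = lam * (1 - u) / E := by field_simp [hEdef]; linear_combination hEdef
  have g2 : lam * (u / E) + 1 - u / E = lam / E := by field_simp [hEdef]; ring
  rw [g1, g2, abs_of_pos (by positivity)]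
  have e1 : (u / E) ^ (a - 1) = exp ((a - 1) * (log u - log E)) := by
    rw [rpow_def_of_pos (by positivity), log_div hu0.ne' hE.ne']; ring_nf
  have e2 : (lam * (1 - u) / E) ^ (b - 1)
      = exp ((b - 1) * (log lam + log (1 - u) - log E)) := by
    rw [rpow_def_of_pos (by positivity), log_div (by positivity) hE.ne',
      log_mul hlam.ne' h1u.ne']; ring_nf
  have e3 : (lam / E) ^ (-(a + b)) = exp (-(a + b) * (log lam - log E)) := by
    rw [rpow_def_of_pos (by positivity), log_div hlam.ne' hE.ne']; ring_nf
  have e4 : lam / E ^ 2 = exp (log lam - 2 * log E) := by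
    rw [← Real.exp_log (show (0:ℝ) < lam / E ^ 2 by positivity),
      log_div hlam.ne' (by positivity), log_pow]
    norm_num
  have e5 : lam ^ (-a) = exp (-a * log lam) := by rw [rpow_def_of_pos hlam]; ring_nf
  have e6 : u ^ (a - 1) = exp ((a - 1) * log u) := by rw [rpow_def_of_pos hu0]; ring_nf
  have e7 : (1 - u) ^ (b - 1) = exp ((b - 1) * log (1 - u)) := by rw [rpow_def_of_pos h1u]; ring_nf
  rw [e1, e2, e3, e4, e5, e6, e7, ← Real.exp_add, ← Real.exp_add, ← Real.exp_add,
    ← Real.exp_add, ← Real.exp_add]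
  congr 1; ring

lemma key_integrableOn (ha : 0 < a) (hb : 0 < b) (hlam : 0 < lam) :
    IntegrableOn (fun t : ℝ => t ^ (a - 1) * (1 - t) ^ (b - 1) *
      (lam * t + 1 - t) ^ (-(a + b))) (Set.Ioo 0 1) := by
  rw [← himg hlam,
    integrableOn_image_iff_integrableOn_abs_deriv_smul measurableSet_Ioo (hderiv hlam)
      (hinj hlam)]
  apply IntegrableOn.congr_fun
    (((real_beta_integrableOn a b ha hb).const_mul (lam ^ (-a)))) ?_ measurableSet_Ioo
  intro u hu
  simp only [smul_eq_mul]
  exact (point ha hb hlam hu).symm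

lemma key_integral (ha : 0 < a) (hb : 0 < b) (hlam : 0 < lam) :
    ∫ t in Set.Ioo (0:ℝ) 1, t ^ (a - 1) * (1 - t) ^ (b - 1) *
      (lam * t + 1 - t) ^ (-(a + b))
      = Gamma a * Gamma b / Gamma (a + b) * lam ^ (-a) := by
  rw [← himg hlam,
    integral_image_eq_integral_abs_deriv_smul measurableSet_Ioo (hderiv hlam) (hinj hlam)]
  rw [setIntegral_congr_fun measurableSet_Ioo (g := fun u : ℝ =>
      lam ^ (-a) * (u ^ (a - 1) * (1 - u) ^ (b - 1)))
    (fun u hu => by simpa [smul_eq_mul] using point ha hb hlam hu)]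
  rw [integral_const_mul, real_beta_integral a b ha hb]
  ring

end G4BAux
lemma Gamma_poch (x : ℝ) (hx : 0 < x) (k : ℕ) :
    Gamma (x + k) = Gamma x * (ascPochhammer ℝ k).eval x := by
  induction k with
  | zero => simp
  | succ m ih =>
    have hxm : x + (m:ℝ) ≠ 0 := by positivity
    have : x + ((m+1 : ℕ) : ℝ) = (x + m) + 1 := by push_cast; ring
    rw [this, Real.Gamma_add_one hxm, ih, ascPochhammer_succ_right]
    simp [Polynomial.eval_mul]
    ring

/-- Normalization of the G4B distribution for integer exponent shift: finite-sum
evaluation of the Euler integral for `₂F₁(α₁, α₁+α₂+n; α₁+α₂; 1−λ)`. -/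
theorem g4b_normalization (α₁ α₂ lam : ℝ) (h₁ : 0 < α₁) (h₂ : 0 < α₂) (hlam : 0 < lam)
    (n : ℕ) :
    ∫ t in Set.Ioo (0:ℝ) 1,
        t ^ (α₁ - 1) * (1 - t) ^ (α₂ - 1) * (lam * t + 1 - t) ^ (-(α₁ + α₂ + n)) =
      (Gamma α₁ * Gamma α₂ / Gamma (α₁ + α₂ + n)) *
        ∑ k ∈ Finset.range (n + 1),
          (n.choose k : ℝ) * (ascPochhammer ℝ k).eval α₁ *
            (ascPochhammer ℝ (n - k)).eval α₂ * lam ^ (-(α₁ + k)) := by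
  have hsum : Set.EqOn
      (fun t : ℝ => t ^ (α₁ - 1) * (1 - t) ^ (α₂ - 1) * (lam * t + 1 - t) ^ (-(α₁ + α₂ + n)))
      (fun t : ℝ => ∑ k ∈ Finset.range (n + 1), (n.choose k : ℝ) *
        (t ^ (α₁ + (k:ℝ) - 1) * (1 - t) ^ (α₂ + ((n - k : ℕ):ℝ) - 1) *
          (lam * t + 1 - t) ^ (-(α₁ + (k:ℝ) + (α₂ + ((n - k : ℕ):ℝ))))))
      (Set.Ioo 0 1) := by
    intro t ht
    obtain ⟨ht0, ht1⟩ := ht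
    have h1t : (0:ℝ) < 1 - t := by linarith
    have hbin : (1:ℝ) = ∑ k ∈ Finset.range (n + 1), t ^ k * (1 - t) ^ (n - k) *
        (n.choose k : ℝ) := by
      rw [← add_pow, show t + (1 - t) = (1:ℝ) by ring, one_pow]
    simp only
    calc t ^ (α₁ - 1) * (1 - t) ^ (α₂ - 1) * (lam * t + 1 - t) ^ (-(α₁ + α₂ + n))
        = t ^ (α₁ - 1) * (1 - t) ^ (α₂ - 1) * (lam * t + 1 - t) ^ (-(α₁ + α₂ + n)) * 1 := by
          ring
      _ = ∑ k ∈ Finset.range (n + 1),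
            t ^ (α₁ - 1) * (1 - t) ^ (α₂ - 1) * (lam * t + 1 - t) ^ (-(α₁ + α₂ + n)) *
              (t ^ k * (1 - t) ^ (n - k) * (n.choose k : ℝ)) := by
          rw [← Finset.mul_sum, ← hbin]
      _ = _ := by
          refine Finset.sum_congr rfl fun k hk => ?_
          have hkn : k ≤ n := Nat.lt_succ_iff.mp (Finset.mem_range.mp hk)
          have e1 : t ^ (α₁ + (k:ℝ) - 1) = t ^ (α₁ - 1) * t ^ k := by
            rw [← Real.rpow_natCast t k, ← Real.rpow_add ht0]; ring_nf
          have e2 : (1 - t) ^ (α₂ + ((n - k : ℕ):ℝ) - 1)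
              = (1 - t) ^ (α₂ - 1) * (1 - t) ^ ((n - k : ℕ)) := by
            rw [← Real.rpow_natCast (1 - t) (n - k), ← Real.rpow_add h1t]; ring_nf
          have e3 : (-(α₁ + (k:ℝ) + (α₂ + ((n - k : ℕ):ℝ)))) = -(α₁ + α₂ + (n:ℝ)) := by
            push_cast [Nat.cast_sub hkn]; ring
          rw [e1, e2, e3]; ring
  rw [setIntegral_congr_fun measurableSet_Ioo hsum]
  rw [integral_finset_sum _ (fun (k : ℕ) hk => (G4BAux.key_integrableOn
    (a := α₁ + (k:ℝ)) (b := α₂ + ((n - k : ℕ):ℝ)) (by positivity) (by positivity)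
    hlam).const_mul _)]
  rw [Finset.mul_sum]
  refine Finset.sum_congr rfl fun k hk => ?_
  have hkn : k ≤ n := Nat.lt_succ_iff.mp (Finset.mem_range.mp hk)
  rw [integral_const_mul, G4BAux.key_integral (by positivity) (by positivity) hlam,
    Gamma_poch α₁ h₁ k, Gamma_poch α₂ h₂ (n - k),
    show α₁ + (k:ℝ) + (α₂ + ((n - k : ℕ):ℝ)) = α₁ + α₂ + (n:ℝ) from by
      push_cast [Nat.cast_sub hkn]; ring]
  ring
end

section
/- Multinomial-sum representation of the mixture normalization constant I_n^σ: Let K ≥ 2 be an integer, α ∈ ℝ^K with α_i > 0, γ ∈ ℝ^K, σ > 0, and let n be a nonnegative integer. Then ∫_{S_K} (∑_{k=1}^K γ_k y_k^σ)^n · ∏_{i=1}^K y_i^{α_i − 1} d^{K−1}y = (n! / Γ(α_+ + σ n)) · ∑_{(n_1,…,n_K) ∈ ℕ^K, n_1+…+n_K = n} ∏_{i=1}^K (Γ(α_i + σ n_i) · γ_i^{n_i} / n_i!). -/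
open MeasureTheory Real

namespace InSigma

open Set Finset


noncomputable def Y (m : ℕ) (y : Fin m → ℝ) : Fin (m + 1) → ℝ :=
  fun j => if h : (j : ℕ) < m then y ⟨(j : ℕ), h⟩ else 1 - ∑ i, y i

lemma sum_Y {m : ℕ} (y : Fin m → ℝ) : ∑ j, Y m y j = 1 := by
  rw [Fin.sum_univ_castSucc]
  have h1 : ∀ i : Fin m, Y m y i.castSucc = y i := by
    intro i; simp only [Y, Fin.coe_castSucc, i.isLt, dif_pos]
  have h2 : Y m y (Fin.last m) = 1 - ∑ i, y i := by simp [Y]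
  simp_rw [h1, h2]; ring

noncomputable def Psi (m : ℕ) (x : Fin (m+1) → ℝ) : Fin (m+1) → ℝ :=
  fun j => x (Fin.last m) * Y m (fun i => x i.castSucc) j

noncomputable def Mmat (m : ℕ) (x : Fin (m+1) → ℝ) : Matrix (Fin (m+1)) (Fin (m+1)) ℝ :=
  fun j k => if (k : ℕ) < m then
      (if (j : ℕ) < m then (if (j : ℕ) = (k : ℕ) then x (Fin.last m) else 0)
        else -(x (Fin.last m)))
    else Y m (fun i => x i.castSucc) j

lemma fin_eq_last {m : ℕ} {j : Fin (m+1)} (h : ¬ (j:ℕ) < m) : j = Fin.last m := by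
  apply Fin.ext; simp only [Fin.val_last]; omega

lemma det_Mmat (m : ℕ) (x : Fin (m+1) → ℝ) : (Mmat m x).det = x (Fin.last m) ^ m := by
  set t := x (Fin.last m) with ht
  set E : Matrix (Fin (m+1)) (Fin (m+1)) ℝ :=
    fun j k => if j = k then 1 else if j = Fin.last m then 1 else 0 with hE
  have hEdet : E.det = 1 := by
    have : E.det = ∏ i, E i i := by
      apply Matrix.det_of_lowerTriangular
      intro i j hij
      have hij' : (i : Fin (m+1)) < j := hij
      have h1 : i ≠ j := ne_of_lt hij'
      have h2 : i ≠ Fin.last m := by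
        intro h; rw [h] at hij'; exact absurd hij' (not_lt.2 (Fin.le_last j))
      simp [hE, h1, h2]
    rw [this]; simp [hE]
  set U : Matrix (Fin (m+1)) (Fin (m+1)) ℝ :=
    fun j k => if (j : ℕ) < m then Mmat m x j k else (if (k : ℕ) < m then 0 else 1) with hU
  have hEM : E * Mmat m x = U := by
    ext j k
    rw [Matrix.mul_apply]
    by_cases hj : (j : ℕ) < m
    · have hjl : j ≠ Fin.last m := by
        intro h; rw [h] at hj; simp [Fin.val_last] at hj
      have : ∀ l, E j l * Mmat m x l k = if j = l then Mmat m x l k else 0 := by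
        intro l
        simp only [hE]
        by_cases h : j = l
        · simp [h]
        · simp [h, hjl]
      simp_rw [this]
      rw [Finset.sum_ite_eq]
      simp [hU, hj]
    · have hjl : j = Fin.last m := fin_eq_last hj
      have : ∀ l, E j l * Mmat m x l k = Mmat m x l k := by
        intro l
        simp only [hE]
        by_cases h : j = l
        · simp [h]
        · simp [h, hjl]
      simp_rw [this]
      by_cases hk : (k : ℕ) < m
      · have hsum : ∀ l : Fin (m+1), Mmat m x l k =
            (if (l : ℕ) < m then (if (l : ℕ) = (k : ℕ) then t else 0) else -t) := by
          intro l; simp only [Mmat, hk, if_true, ← ht]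
        simp_rw [hsum]
        rw [Fin.sum_univ_castSucc]
        have h1 : ∀ i : Fin m, (if ((i.castSucc : Fin (m+1)) : ℕ) < m
            then (if ((i.castSucc : Fin (m+1)) : ℕ) = (k : ℕ) then t else 0) else -t)
            = if i = ⟨(k : ℕ), hk⟩ then t else 0 := by
          intro i
          simp only [Fin.coe_castSucc, i.isLt, if_true]
          congr 1
          simp [Fin.ext_iff]
        simp_rw [h1]
        rw [Finset.sum_ite_eq']
        simp [hU, hj, hk, Fin.val_last]
      · have hsum : ∀ l : Fin (m+1), Mmat m x l k = Y m (fun i => x i.castSucc) l := by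
          intro l; simp only [Mmat, hk, if_false]
        simp_rw [hsum]
        rw [sum_Y]
        simp [hU, hj, hk]
  have hUdet : U.det = t ^ m := by
    have : U.det = ∏ i, U i i := by
      apply Matrix.det_of_upperTriangular
      intro i j hij
      have hij' : (j : Fin (m+1)) < i := hij
      by_cases hi : (i : ℕ) < m
      · have hj : (j : ℕ) < m := lt_trans (Fin.lt_iff_val_lt_val.mp hij') hi
        have : (i : ℕ) ≠ (j : ℕ) := by
          have := Fin.lt_iff_val_lt_val.mp hij'; omega
        simp [hU, hi, hj, Mmat, this]
      · have hj : (j : ℕ) < m := by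
          have h1 := fin_eq_last hi
          have := Fin.lt_iff_val_lt_val.mp hij'
          rw [h1] at this; simp only [Fin.val_last] at this; omega
        simp [hU, hi, hj]
    rw [this]
    rw [Fin.prod_univ_castSucc]
    have h1 : ∀ i : Fin m, U i.castSucc i.castSucc = t := by
      intro i
      simp [hU, Fin.coe_castSucc, i.isLt, Mmat]
      exact ht.symm
    have h2 : U (Fin.last m) (Fin.last m) = 1 := by
      simp [hU, Fin.val_last]
    simp_rw [h1, h2]
    simp
  have := congrArg Matrix.det hEM
  rwa [Matrix.det_mul, hEdet, one_mul, hUdet] at this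
noncomputable def Mclm (m : ℕ) (x : Fin (m+1) → ℝ) : (Fin (m+1) → ℝ) →L[ℝ] (Fin (m+1) → ℝ) :=
  LinearMap.toContinuousLinearMap (Matrix.toLin' (Mmat m x))

lemma Mclm_apply {m : ℕ} (x v : Fin (m+1) → ℝ) (j : Fin (m+1)) :
    Mclm m x v j = ∑ k, Mmat m x j k * v k := by
  simp [Mclm, Matrix.toLin'_apply, Matrix.mulVec, dotProduct]

lemma det_Mclm {m : ℕ} (x : Fin (m+1) → ℝ) :
    (Mclm m x).det = x (Fin.last m) ^ m := by
  show LinearMap.det ((Mclm m x) : (Fin (m+1) → ℝ) →ₗ[ℝ] (Fin (m+1) → ℝ)) = _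
  rw [Mclm, LinearMap.coe_toContinuousLinearMap, LinearMap.det_toLin', det_Mmat]

lemma hasFDerivAt_Psi {m : ℕ} (x : Fin (m+1) → ℝ) :
    HasFDerivAt (Psi m) (Mclm m x) x := by
  apply hasFDerivAt_pi''
  intro j
  have hlast : HasFDerivAt (fun x : Fin (m+1) → ℝ => x (Fin.last m))
      (ContinuousLinearMap.proj (R := ℝ) (φ := fun _ : Fin (m+1) => ℝ) (Fin.last m)) x :=
    hasFDerivAt_apply (𝕜 := ℝ) (Fin.last m) x
  by_cases hj : (j : ℕ) < m
  · have hc : HasFDerivAt (fun x : Fin (m+1) → ℝ => x ((⟨(j:ℕ), hj⟩ : Fin m).castSucc))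
        (ContinuousLinearMap.proj (R := ℝ) (φ := fun _ : Fin (m+1) => ℝ)
          ((⟨(j:ℕ), hj⟩ : Fin m).castSucc)) x :=
      hasFDerivAt_apply (𝕜 := ℝ) _ x
    have hmul := hlast.mul hc
    have hfun : (fun y : Fin (m+1) → ℝ => y (Fin.last m) * y ((⟨(j:ℕ), hj⟩ : Fin m).castSucc))
        = fun y => Psi m y j := by
      funext y
      simp only [Psi, Y, hj, dif_pos]
    rw [← hfun]
    refine hmul.congr_fderiv ?_
    ext v
    simp only [ContinuousLinearMap.coe_comp', Function.comp_apply,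
      ContinuousLinearMap.proj_apply, Mclm_apply, ContinuousLinearMap.add_apply,
      ContinuousLinearMap.coe_smul', Pi.smul_apply, smul_eq_mul]
    rw [Fin.sum_univ_castSucc]
    have h1 : ∀ i : Fin m, Mmat m x j i.castSucc * v i.castSucc
        = if i = ⟨(j:ℕ), hj⟩ then x (Fin.last m) * v i.castSucc else 0 := by
      intro i
      simp only [Mmat, Fin.coe_castSucc, i.isLt, if_true, hj]
      by_cases h : (j : ℕ) = (i : ℕ)
      · have h' : i = (⟨(j:ℕ), hj⟩ : Fin m) := Fin.ext h.symm
        rw [if_pos h, if_pos h']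
      · have h' : ¬ i = (⟨(j:ℕ), hj⟩ : Fin m) := by
          intro hcon
          exact h (by rw [hcon])
        rw [if_neg h, if_neg h', zero_mul]
    simp_rw [h1]
    rw [Finset.sum_ite_eq']
    have h2 : Mmat m x j (Fin.last m) = x ((⟨(j:ℕ), hj⟩ : Fin m).castSucc) := by
      simp only [Mmat, Fin.val_last, lt_irrefl, if_false, Y, hj, dif_pos]
    rw [h2]
    simp only [Finset.mem_univ, if_true]
  · have hjl : j = Fin.last m := fin_eq_last hj
    subst hjl
    have hc : HasFDerivAt (fun x : Fin (m+1) → ℝ => 1 - ∑ i : Fin m, x i.castSucc)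
        ((0 : (Fin (m+1) → ℝ) →L[ℝ] ℝ) - ∑ i : Fin m,
          ContinuousLinearMap.proj (R := ℝ) (φ := fun _ : Fin (m+1) => ℝ) i.castSucc) x := by
      apply HasFDerivAt.sub
      · exact hasFDerivAt_const 1 x
      · exact HasFDerivAt.fun_sum (fun i _ => hasFDerivAt_apply (𝕜 := ℝ) i.castSucc x)
    have hmul := hlast.mul hc
    have hfun : (fun y : Fin (m+1) → ℝ => y (Fin.last m) * (1 - ∑ i : Fin m, y i.castSucc))
        = fun y => Psi m y (Fin.last m) := by
      funext y
      simp only [Psi, Y, Fin.val_last, lt_irrefl, dif_neg, not_false_iff]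
    rw [← hfun]
    refine hmul.congr_fderiv ?_
    ext v
    simp only [ContinuousLinearMap.coe_comp', Function.comp_apply,
      ContinuousLinearMap.proj_apply, Mclm_apply, ContinuousLinearMap.add_apply,
      ContinuousLinearMap.coe_smul', Pi.smul_apply, smul_eq_mul,
      ContinuousLinearMap.coe_sub', Pi.sub_apply, ContinuousLinearMap.zero_apply,
      ContinuousLinearMap.coe_sum', Finset.sum_apply]
    rw [Fin.sum_univ_castSucc]
    have h1 : ∀ i : Fin m, Mmat m x (Fin.last m) i.castSucc * v i.castSucc
        = -(x (Fin.last m)) * v i.castSucc := by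
      intro i
      have : ¬ ((Fin.last m : Fin (m+1)) : ℕ) < m := by simp [Fin.val_last]
      simp only [Mmat, Fin.coe_castSucc, i.isLt, if_true, this, if_false]
    simp_rw [h1]
    have h2 : Mmat m x (Fin.last m) (Fin.last m) = 1 - ∑ i : Fin m, x i.castSucc := by
      have : ¬ ((Fin.last m : Fin (m+1)) : ℕ) < m := by simp [Fin.val_last]
      simp only [Mmat, Fin.val_last, lt_irrefl, if_false, Y, this, dif_neg, not_false_iff]
    rw [h2]
    rw [zero_sub, mul_neg, Finset.mul_sum]
    simp [neg_mul, Finset.sum_neg_distrib]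
def Delta (m : ℕ) : Set (Fin m → ℝ) := {y | (∀ i, 0 < y i) ∧ ∑ i, y i < 1}

lemma measurableSet_Delta (m : ℕ) : MeasurableSet (Delta m) := by
  have h1 : MeasurableSet {y : Fin m → ℝ | ∀ i, 0 < y i} := by
    rw [show {y : Fin m → ℝ | ∀ i, 0 < y i} = ⋂ i, {y | 0 < y i} from by ext; simp]
    exact MeasurableSet.iInter fun i => measurableSet_lt measurable_const (measurable_pi_apply i)
  have h2 : MeasurableSet {y : Fin m → ℝ | ∑ i, y i < 1} :=
    measurableSet_lt (by measurability) measurable_const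
  exact h1.inter h2

lemma Y_pos {m : ℕ} {y : Fin m → ℝ} (hy : y ∈ Delta m) (j : Fin (m + 1)) : 0 < Y m y j := by
  unfold Y
  split
  · exact hy.1 _
  · have := hy.2; linarith

def Sset (m : ℕ) : Set (Fin (m+1) → ℝ) :=
  {x | (fun i => x i.castSucc) ∈ Delta m ∧ 0 < x (Fin.last m)}

lemma measurableSet_Sset (m : ℕ) : MeasurableSet (Sset m) := by
  apply MeasurableSet.inter
  · exact MeasurableSet.preimage (measurableSet_Delta m)
      (measurable_pi_iff.2 fun i => measurable_pi_apply _)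
  · exact measurableSet_lt measurable_const (measurable_pi_apply _)

lemma Psi_pos {m : ℕ} {x : Fin (m+1) → ℝ} (hx : x ∈ Sset m) (j : Fin (m+1)) :
    0 < Psi m x j :=
  mul_pos hx.2 (Y_pos hx.1 j)

lemma sum_Psi {m : ℕ} (x : Fin (m+1) → ℝ) : ∑ j, Psi m x j = x (Fin.last m) := by
  unfold Psi
  rw [← Finset.mul_sum, sum_Y, mul_one]

lemma injOn_Psi {m : ℕ} : Set.InjOn (Psi m) (Sset m) := by
  intro x hx x' hx' h
  have hsum : x (Fin.last m) = x' (Fin.last m) := by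
    rw [← sum_Psi x, ← sum_Psi x', h]
  funext j
  induction j using Fin.lastCases with
  | last => exact hsum
  | cast i =>
    have h1 := congrFun h i.castSucc
    unfold Psi at h1
    have h2 : Y m (fun i => x i.castSucc) i.castSucc = x i.castSucc := by
      simp only [Y, Fin.coe_castSucc, i.isLt, dif_pos]
    have h3 : Y m (fun i => x' i.castSucc) i.castSucc = x' i.castSucc := by
      simp only [Y, Fin.coe_castSucc, i.isLt, dif_pos]
    rw [h2, h3, hsum] at h1
    exact mul_left_cancel₀ (ne_of_gt hx'.2) h1

lemma image_Psi (m : ℕ) :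
    Psi m '' (Sset m) = Set.univ.pi (fun _ : Fin (m+1) => Set.Ioi (0:ℝ)) := by
  apply Set.Subset.antisymm
  · rintro _ ⟨x, hx, rfl⟩
    intro j _
    exact Psi_pos hx j
  · intro z hz
    have hz' : ∀ j, 0 < z j := fun j => hz j (Set.mem_univ j)
    set t : ℝ := ∑ j, z j with htdef
    have ht : 0 < t := Finset.sum_pos (fun j _ => hz' j) ⟨Fin.last m, Finset.mem_univ _⟩
    set x : Fin (m+1) → ℝ := fun j => if (j : ℕ) < m then z j / t else t with hxdef
    have hxlast : x (Fin.last m) = t := by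
      simp [hxdef, Fin.val_last]
    have hxcs : ∀ i : Fin m, x i.castSucc = z i.castSucc / t := by
      intro i; simp [hxdef, Fin.coe_castSucc, i.isLt]
    have hsumz : ∑ i : Fin m, z i.castSucc = t - z (Fin.last m) := by
      rw [htdef, Fin.sum_univ_castSucc]; ring
    have hx : x ∈ Sset m := by
      refine ⟨⟨fun i => ?_, ?_⟩, by rw [hxlast]; exact ht⟩
      · show 0 < x i.castSucc
        rw [hxcs]; exact div_pos (hz' _) ht
      · show (∑ i : Fin m, x i.castSucc) < 1
        simp_rw [hxcs]
        rw [← Finset.sum_div, hsumz, div_lt_one ht]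
        have := hz' (Fin.last m); linarith
    refine ⟨x, hx, ?_⟩
    funext j
    unfold Psi
    rw [hxlast]
    by_cases hj : (j : ℕ) < m
    · have : Y m (fun i => x i.castSucc) j = x (Fin.castSucc ⟨(j:ℕ), hj⟩) := by
        simp only [Y, hj, dif_pos]
      rw [this, hxcs]
      have hjj : (Fin.castSucc (⟨(j:ℕ), hj⟩ : Fin m)) = j := by
        apply Fin.ext; simp
      rw [hjj]
      field_simp
    · have hjl : j = Fin.last m := fin_eq_last hj
      have : Y m (fun i => x i.castSucc) j = 1 - ∑ i : Fin m, x i.castSucc := by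
        simp only [Y, hj, dif_neg, not_false_iff]
      rw [this]
      simp_rw [hxcs]
      rw [← Finset.sum_div, hsumz, hjl]
      field_simp
      ring

lemma lintegral_fin_prod : ∀ (n : ℕ) (f : Fin n → ℝ → ENNReal), (∀ i, Measurable (f i)) →
    ∫⁻ x : Fin n → ℝ, ∏ i, f i (x i) = ∏ i, ∫⁻ t, f i t := by
  intro n
  induction n with
  | zero =>
    intro f _
    simp [lintegral_const, volume_pi, Measure.pi_empty_univ]
  | succ n ih =>
    intro f hf
    have e := (volume_preserving_piFinSuccAbove (fun _ : Fin (n+1) => ℝ) 0).symm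
    rw [← e.lintegral_comp_emb (MeasurableEquiv.measurableEmbedding _)]
    have key : ∀ p : ℝ × (Fin n → ℝ),
        ∏ i, f i (((MeasurableEquiv.piFinSuccAbove (fun _ => ℝ) 0).symm p) i)
        = f 0 p.1 * ∏ i : Fin n, f i.succ (p.2 i) := by
      intro p
      rw [Fin.prod_univ_succ]
      simp [MeasurableEquiv.piFinSuccAbove_symm_apply, Fin.insertNthEquiv, Fin.insertNth_zero,
        Fin.zero_succAbove]
    simp_rw [key]
    have hg : Measurable fun y : Fin n → ℝ => ∏ i : Fin n, f i.succ (y i) :=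
      Finset.measurable_prod _ fun i _ => (hf i.succ).comp (measurable_pi_apply i)
    rw [show (volume : Measure (ℝ × (Fin n → ℝ))) = (volume : Measure ℝ).prod volume from rfl]
    rw [lintegral_prod_mul (hf 0).aemeasurable hg.aemeasurable,
      ih (fun i => f i.succ) (fun i => hf i.succ), Fin.prod_univ_succ]
lemma lintegral_gamma {b : ℝ} (hb : 0 < b) :
    ∫⁻ t in Set.Ioi (0:ℝ), ENNReal.ofReal (t ^ (b - 1) * Real.exp (-t)) = ENNReal.ofReal (Real.Gamma b) := by
  rw [Real.Gamma_eq_integral hb]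
  rw [MeasureTheory.ofReal_integral_eq_lintegral_ofReal (Real.GammaIntegral_convergent hb)
    ((ae_restrict_iff' measurableSet_Ioi).2 (Filter.Eventually.of_forall fun x hx =>
      mul_nonneg (Real.exp_pos _).le (Real.rpow_nonneg (le_of_lt hx) _)))]
  refine setLIntegral_congr_fun measurableSet_Ioi (fun x hx => ?_)
  rw [mul_comm]

lemma meas_aux {c : ℝ} : Measurable fun t : ℝ => ENNReal.ofReal (t ^ c * Real.exp (-t)) := by
  fun_prop

lemma step1 {m : ℕ} (β : Fin (m+1) → ℝ) (hβ : ∀ j, 0 < β j) :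
    ∫⁻ z in Set.univ.pi (fun _ : Fin (m+1) => Set.Ioi (0:ℝ)),
      ∏ j, ENNReal.ofReal ((z j) ^ (β j - 1) * Real.exp (-(z j)))
      = ∏ j, ENNReal.ofReal (Real.Gamma (β j)) := by
  set g : Fin (m+1) → ℝ → ENNReal :=
    fun j t => if 0 < t then ENNReal.ofReal (t ^ (β j - 1) * Real.exp (-t)) else 0 with hg
  have hgm : ∀ j, Measurable (g j) :=
    fun j => Measurable.ite measurableSet_Ioi meas_aux measurable_const
  have key : ∀ z : Fin (m+1) → ℝ,
      (Set.univ.pi (fun _ : Fin (m+1) => Set.Ioi (0:ℝ))).indicator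
        (fun z => ∏ j, ENNReal.ofReal ((z j) ^ (β j - 1) * Real.exp (-(z j)))) z
      = ∏ j, g j (z j) := by
    intro z
    by_cases hz : z ∈ Set.univ.pi (fun _ : Fin (m+1) => Set.Ioi (0:ℝ))
    · rw [Set.indicator_of_mem hz]
      refine Finset.prod_congr rfl fun j _ => ?_
      exact (if_pos (Set.mem_Ioi.mp (hz j (Set.mem_univ j)))).symm
    · rw [Set.indicator_of_notMem hz]
      simp only [Set.mem_pi, Set.mem_univ, forall_true_left, not_forall] at hz
      obtain ⟨j, hj⟩ := hz
      refine (Finset.prod_eq_zero (Finset.mem_univ j) ?_).symm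
      rw [hg]; simp only [Set.mem_Ioi] at hj; simp [hj]
  rw [← lintegral_indicator (MeasurableSet.univ_pi fun _ => measurableSet_Ioi)]
  simp_rw [key]
  rw [lintegral_fin_prod _ _ hgm]
  refine Finset.prod_congr rfl fun j _ => ?_
  have h2 : ∫⁻ t, (if 0 < t then ENNReal.ofReal (t ^ (β j - 1) * Real.exp (-t)) else 0)
      = ∫⁻ t in Set.Ioi (0:ℝ), ENNReal.ofReal (t ^ (β j - 1) * Real.exp (-t)) := by
    rw [← lintegral_indicator measurableSet_Ioi]
    congr 1
  exact h2.trans (lintegral_gamma (hβ j))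
lemma measurable_Yj {m : ℕ} (j : Fin (m+1)) : Measurable (fun y : Fin m → ℝ => Y m y j) := by
  by_cases hj : (j : ℕ) < m
  · simp only [Y, hj, dif_pos]
    exact measurable_pi_apply _
  · simp only [Y, hj, dif_neg, not_false_iff]
    exact Measurable.const_sub (by measurability) 1

lemma measurable_Yprod {m : ℕ} (β : Fin (m+1) → ℝ) :
    Measurable (fun y : Fin m → ℝ => ∏ j, (Y m y j) ^ (β j - 1)) := by
  apply Finset.measurable_prod
  intro j _
  have := measurable_Yj (m := m) j
  fun_prop

lemma prod_rpow_self {m : ℕ} {t : ℝ} (ht : 0 < t) (c : Fin (m+1) → ℝ) :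
    ∏ j, t ^ (c j) = t ^ (∑ j, c j) := by
  simp_rw [Real.rpow_def_of_pos ht, ← Real.exp_sum, Finset.mul_sum]

lemma real_side {m : ℕ} (β : Fin (m+1) → ℝ) {t : ℝ} (ht : 0 < t) {y : Fin m → ℝ}
    (hy : y ∈ Delta m) :
    t ^ m * ∏ j, ((t * Y m y j) ^ (β j - 1) * Real.exp (-(t * Y m y j)))
    = (t ^ ((∑ j, β j) - 1) * Real.exp (-t)) * ∏ j, (Y m y j) ^ (β j - 1) := by
  have hY := Y_pos hy
  rw [Finset.prod_mul_distrib, ← Real.exp_sum]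
  have h1 : ∑ j, -(t * Y m y j) = -t := by
    rw [Finset.sum_neg_distrib, ← Finset.mul_sum, sum_Y, mul_one]
  rw [h1]
  have h2 : ∀ j ∈ Finset.univ, (t * Y m y j) ^ (β j - 1)
      = t ^ (β j - 1) * (Y m y j) ^ (β j - 1) :=
    fun j _ => Real.mul_rpow ht.le (hY j).le
  rw [Finset.prod_congr rfl h2, Finset.prod_mul_distrib, prod_rpow_self ht]
  have h5 : ∑ j, (β j - 1) = (∑ j, β j) - (m + 1) := by
    rw [Finset.sum_sub_distrib]
    simp [Finset.card_univ]
  rw [h5]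
  have h6 : (t : ℝ) ^ m = t ^ (m : ℝ) := (Real.rpow_natCast t m).symm
  rw [h6]
  rw [show t ^ ((∑ j, β j) - 1) = t ^ (m:ℝ) * t ^ ((∑ j, β j) - ((m:ℝ) + 1)) from by
    rw [← Real.rpow_add ht]; congr 1; push_cast; ring]
  ring

lemma dirichlet_key {m : ℕ} (β : Fin (m+1) → ℝ) (hβ : ∀ j, 0 < β j) :
    ∏ j, ENNReal.ofReal (Real.Gamma (β j))
    = ENNReal.ofReal (Real.Gamma (∑ j, β j)) *
        ∫⁻ y in Delta m, ENNReal.ofReal (∏ j, (Y m y j) ^ (β j - 1)) := by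
  have hβsum : 0 < ∑ j, β j :=
    Finset.sum_pos (fun j _ => hβ j) ⟨Fin.last m, Finset.mem_univ _⟩
  have hcov := lintegral_image_eq_lintegral_abs_det_fderiv_mul volume (measurableSet_Sset m)
    (fun x _ => (hasFDerivAt_Psi x).hasFDerivWithinAt) injOn_Psi
    (fun z => ∏ j, ENNReal.ofReal ((z j) ^ (β j - 1) * Real.exp (-(z j))))
  rw [image_Psi, step1 β hβ] at hcov
  rw [hcov]
  have hcongr : ∫⁻ x in Sset m, ENNReal.ofReal |(Mclm m x).det| *
        ∏ j, ENNReal.ofReal ((Psi m x j) ^ (β j - 1) * Real.exp (-(Psi m x j)))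
      = ∫⁻ x in Sset m,
          ENNReal.ofReal ((x (Fin.last m)) ^ ((∑ j, β j) - 1) * Real.exp (-(x (Fin.last m)))) *
          ENNReal.ofReal (∏ j, (Y m (fun i => x i.castSucc) j) ^ (β j - 1)) := by
    refine setLIntegral_congr_fun (measurableSet_Sset m)
      (fun x hx => ?_)
    have ht : 0 < x (Fin.last m) := hx.2
    have hY := Y_pos hx.1
    have hd : |(Mclm m x).det| = x (Fin.last m) ^ m := by
      rw [det_Mclm, abs_of_nonneg (pow_nonneg ht.le m)]
    rw [hd]
    have hnn : ∀ j ∈ Finset.univ,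
        0 ≤ (Psi m x j) ^ (β j - 1) * Real.exp (-(Psi m x j)) :=
      fun j _ => mul_nonneg (Real.rpow_nonneg (Psi_pos hx j).le _) (Real.exp_pos _).le
    rw [← ENNReal.ofReal_prod_of_nonneg hnn, ← ENNReal.ofReal_mul (pow_nonneg ht.le m)]
    have : x (Fin.last m) ^ m *
          ∏ j, (Psi m x j) ^ (β j - 1) * Real.exp (-(Psi m x j))
        = ((x (Fin.last m)) ^ ((∑ j, β j) - 1) * Real.exp (-(x (Fin.last m)))) *
          ∏ j, (Y m (fun i => x i.castSucc) j) ^ (β j - 1) := by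
      have := real_side β ht hx.1
      simpa [Psi] using this
    rw [this]
    rw [ENNReal.ofReal_mul (mul_nonneg (Real.rpow_nonneg ht.le _) (Real.exp_pos _).le)]
  rw [hcongr]
  -- Fubini
  set e := MeasurableEquiv.piFinSuccAbove (fun _ : Fin (m+1) => ℝ) (Fin.last m) with he
  have heapp : ∀ x : Fin (m+1) → ℝ, e x = (x (Fin.last m), fun i => x i.castSucc) := by
    intro x
    rw [he, MeasurableEquiv.piFinSuccAbove_apply, Fin.insertNthEquiv_symm_apply]
    refine Prod.ext rfl ?_
    funext i
    simp [Fin.removeNth, Fin.succAbove_last]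
  have hS : Sset m = ⇑e ⁻¹' ((Set.Ioi (0:ℝ)) ×ˢ Delta m) := by
    ext x
    simp only [Set.mem_preimage, heapp, Set.mem_prod, Set.mem_Ioi, Sset, Set.mem_setOf_eq]
    tauto
  set F : ℝ × (Fin m → ℝ) → ENNReal := fun p =>
    ENNReal.ofReal (p.1 ^ ((∑ j, β j) - 1) * Real.exp (-p.1)) *
    ENNReal.ofReal (∏ j, (Y m p.2 j) ^ (β j - 1)) with hF
  have hint : ∀ x : Fin (m+1) → ℝ,
      ENNReal.ofReal ((x (Fin.last m)) ^ ((∑ j, β j) - 1) * Real.exp (-(x (Fin.last m)))) *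
        ENNReal.ofReal (∏ j, (Y m (fun i => x i.castSucc) j) ^ (β j - 1)) = F (e x) := by
    intro x; rw [heapp]
  simp_rw [hint]
  rw [hS]
  rw [(volume_preserving_piFinSuccAbove (fun _ : Fin (m+1) => ℝ) (Fin.last m)).setLIntegral_comp_emb
    (MeasurableEquiv.measurableEmbedding _) F _]
  rw [Set.image_preimage_eq _ e.surjective]
  rw [show (volume : Measure (ℝ × (Fin m → ℝ))) = (volume : Measure ℝ).prod volume from rfl]
  rw [← Measure.prod_restrict]
  simp only [hF]
  have hfm : AEMeasurable (fun t : ℝ => ENNReal.ofReal (t ^ ((∑ j, β j) - 1) * Real.exp (-t)))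
      (volume.restrict (Set.Ioi (0:ℝ))) := meas_aux.aemeasurable
  have hgm2 : AEMeasurable (fun y : Fin m → ℝ => ENNReal.ofReal (∏ j, (Y m y j) ^ (β j - 1)))
      (volume.restrict (Delta m)) := (measurable_Yprod β).ennreal_ofReal.aemeasurable
  rw [lintegral_prod_mul hfm hgm2]
  rw [lintegral_gamma hβsum]
lemma dirichlet_lintegral_value {m : ℕ} (β : Fin (m+1) → ℝ) (hβ : ∀ j, 0 < β j) :
    ∫⁻ y in Delta m, ENNReal.ofReal (∏ j, (Y m y j) ^ (β j - 1))
    = ENNReal.ofReal ((∏ j, Real.Gamma (β j)) / Real.Gamma (∑ j, β j)) := by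
  have hβsum : 0 < ∑ j, β j :=
    Finset.sum_pos (fun j _ => hβ j) ⟨Fin.last m, Finset.mem_univ _⟩
  have hG : 0 < Real.Gamma (∑ j, β j) := Real.Gamma_pos_of_pos hβsum
  have key := dirichlet_key β hβ
  rw [← ENNReal.ofReal_prod_of_nonneg (fun (j : Fin (m+1)) _ => (Real.Gamma_pos_of_pos (hβ j)).le)] at key
  rw [ENNReal.ofReal_div_of_pos hG]
  exact (ENNReal.eq_div_iff (ne_of_gt (ENNReal.ofReal_pos.2 hG)) ENNReal.ofReal_ne_top).2 key.symm

lemma dirichlet_nonneg_ae {m : ℕ} (β : Fin (m+1) → ℝ) :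
    0 ≤ᵐ[volume.restrict (Delta m)] fun y => ∏ j, (Y m y j) ^ (β j - 1) := by
  refine (ae_restrict_iff' (measurableSet_Delta m)).2 (Filter.Eventually.of_forall fun y hy => ?_)
  exact Finset.prod_nonneg fun j _ => Real.rpow_nonneg (Y_pos hy j).le _

lemma dirichlet_integrableOn {m : ℕ} (β : Fin (m+1) → ℝ) (hβ : ∀ j, 0 < β j) :
    IntegrableOn (fun y => ∏ j, (Y m y j) ^ (β j - 1)) (Delta m) := by
  constructor
  · exact (measurable_Yprod β).aestronglyMeasurable
  · rw [hasFiniteIntegral_iff_ofReal (dirichlet_nonneg_ae β)]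
    rw [dirichlet_lintegral_value β hβ]
    exact ENNReal.ofReal_lt_top

lemma dirichlet_integral {m : ℕ} (β : Fin (m+1) → ℝ) (hβ : ∀ j, 0 < β j) :
    ∫ y in Delta m, ∏ j, (Y m y j) ^ (β j - 1)
    = (∏ j, Real.Gamma (β j)) / Real.Gamma (∑ j, β j) := by
  have hβsum : 0 < ∑ j, β j :=
    Finset.sum_pos (fun j _ => hβ j) ⟨Fin.last m, Finset.mem_univ _⟩
  rw [integral_eq_lintegral_of_nonneg_ae (dirichlet_nonneg_ae β)
    (measurable_Yprod β).aestronglyMeasurable]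
  rw [dirichlet_lintegral_value β hβ]
  exact ENNReal.toReal_ofReal (div_nonneg
    (Finset.prod_nonneg fun j _ => (Real.Gamma_pos_of_pos (hβ j)).le)
    (Real.Gamma_pos_of_pos hβsum).le)
end InSigma

open InSigma in
/-- Multinomial-sum representation of the mixture normalization constant `I_n^σ`. -/
theorem In_sigma_multinomial (K : ℕ) (hK : 2 ≤ K) (α γ : Fin K → ℝ)
    (hα : ∀ i, 0 < α i) (σ : ℝ) (hσ : 0 < σ) (n : ℕ) :
    simplexIntegral K (fun y => (∑ k, γ k * y k ^ σ) ^ n * ∏ i, y i ^ (α i - 1)) =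
      (n.factorial : ℝ) / Gamma ((∑ i, α i) + σ * n) *
        ∑ v ∈ Finset.Nat.antidiagonalTuple K n,
          ∏ i, (Gamma (α i + σ * v i) * γ i ^ v i / (v i).factorial) := by
  obtain ⟨m, rfl⟩ : ∃ m, K = m + 1 := ⟨K - 1, by omega⟩
  have hrepr : simplexIntegral (m+1) (fun y => (∑ k, γ k * y k ^ σ) ^ n * ∏ i, y i ^ (α i - 1))
      = ∫ y in Delta m, ((∑ k, γ k * (Y m y k) ^ σ) ^ n * ∏ i, (Y m y i) ^ (α i - 1)) := rfl
  rw [hrepr]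
  have hβv : ∀ v : Fin (m+1) → ℕ, ∀ i, 0 < α i + σ * (v i : ℝ) :=
    fun v i => add_pos_of_pos_of_nonneg (hα i) (by positivity)
  have hSpos : (0:ℝ) < (∑ i, α i) + σ * n := by
    have h1 : 0 < ∑ i, α i := Finset.sum_pos (fun i _ => hα i) ⟨Fin.last m, Finset.mem_univ _⟩
    have h2 : (0:ℝ) ≤ σ * n := by positivity
    linarith
  have hGS : 0 < Real.Gamma ((∑ i, α i) + σ * n) := Real.Gamma_pos_of_pos hSpos
  have hpt : Set.EqOn (fun y => (∑ k, γ k * (Y m y k) ^ σ) ^ n * ∏ i, (Y m y i) ^ (α i - 1))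
      (fun y => ∑ v ∈ (Finset.univ : Finset (Fin (m+1))).piAntidiag n,
        ((Nat.multinomial Finset.univ v : ℝ) * ∏ i, γ i ^ v i) *
          ∏ i, (Y m y i) ^ ((α i + σ * (v i : ℝ)) - 1)) (Delta m) := by
    intro y hy
    simp only
    rw [Finset.sum_pow_eq_sum_piAntidiag, Finset.sum_mul]
    refine Finset.sum_congr rfl fun v hv => ?_
    have h1 : ∀ k ∈ Finset.univ, (γ k * (Y m y k) ^ σ) ^ (v k)
        = γ k ^ v k * (Y m y k) ^ (σ * (v k : ℝ)) := by
      intro k _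
      rw [mul_pow]
      congr 1
      rw [← Real.rpow_natCast ((Y m y k) ^ σ) (v k), ← Real.rpow_mul (Y_pos hy k).le]
    rw [Finset.prod_congr rfl h1, Finset.prod_mul_distrib]
    have h2 : (∏ k, (Y m y k) ^ (σ * (v k : ℝ))) * ∏ i, (Y m y i) ^ (α i - 1)
        = ∏ i, (Y m y i) ^ ((α i + σ * (v i : ℝ)) - 1) := by
      rw [← Finset.prod_mul_distrib]
      refine Finset.prod_congr rfl fun i _ => ?_
      rw [← Real.rpow_add (Y_pos hy i)]
      congr 1; ring
    rw [← h2]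
    ring
  rw [setIntegral_congr_fun (measurableSet_Delta m) hpt]
  rw [integral_finset_sum _ (fun v hv =>
    ((dirichlet_integrableOn (fun i => α i + σ * (v i : ℝ)) (hβv v)).const_mul _))]
  have hv_eval : ∀ v ∈ (Finset.univ : Finset (Fin (m+1))).piAntidiag n,
      ∫ y in Delta m, (((Nat.multinomial Finset.univ v : ℝ) * ∏ i, γ i ^ v i) *
          ∏ i, (Y m y i) ^ ((α i + σ * (v i : ℝ)) - 1))
      = ((Nat.multinomial Finset.univ v : ℝ) * ∏ i, γ i ^ v i) *
          ((∏ i, Real.Gamma (α i + σ * (v i : ℝ))) / Real.Gamma ((∑ i, α i) + σ * n)) := by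
    intro v hv
    rw [MeasureTheory.integral_const_mul]
    rw [dirichlet_integral (fun i => α i + σ * (v i : ℝ)) (hβv v)]
    obtain ⟨hvsum, -⟩ := Finset.mem_piAntidiag.1 hv
    congr 2
    rw [Finset.sum_add_distrib, ← Finset.mul_sum, ← Nat.cast_sum, hvsum]
  rw [Finset.sum_congr rfl hv_eval]
  have hset : Finset.Nat.antidiagonalTuple (m+1) n
      = (Finset.univ : Finset (Fin (m+1))).piAntidiag n := by
    ext v
    simp [Finset.Nat.mem_antidiagonalTuple, Finset.mem_piAntidiag]
  rw [hset, Finset.mul_sum]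
  refine Finset.sum_congr rfl fun v hv => ?_
  obtain ⟨hvsum, -⟩ := Finset.mem_piAntidiag.1 hv
  have hfac : (0:ℝ) < ∏ i, ((v i).factorial : ℝ) := by positivity
  have hmult : (Nat.multinomial (Finset.univ : Finset (Fin (m+1))) v : ℝ)
      = (n.factorial : ℝ) / ∏ i, ((v i).factorial : ℝ) := by
    rw [eq_div_iff (ne_of_gt hfac)]
    have := Nat.multinomial_spec (Finset.univ : Finset (Fin (m+1))) v
    rw [hvsum] at this
    exact_mod_cast congrArg (Nat.cast (R := ℝ)) ((mul_comm _ _).trans this)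
  rw [hmult, Finset.prod_div_distrib, Finset.prod_mul_distrib]
  field_simp
end
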